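/- arXiv:2002.09079 — 8 statements merged into one kernel-verified Lean document; each statement's English description precedes it below -/
import Mathlib

section
/- Let A = {0,1,…,N−1} be a finite alphabet and let P : A* → [0,1] be a function on finite words satisfying the consistency conditions P(b) = Σ_{a∈A} P(ba) = Σ_{a∈A} P(ab) for every word b, and Σ_{a∈A} P(a) = 1. Then there exists a unique shift-invariant Borel probability measure μ on the product space A^ℤ (with the product σ-algebra) such that μ([b]_i) = P(b) for every word b and every anchor i ∈ ℤ, where [b]_i = {x ∈ A^ℤ : x(i+j) = b_j for 0 ≤ j < |b|} is the cylinder set generated by b anchored at i. -/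
open MeasureTheory

/-- The shift map on bi-infinite sequences over the alphabet `Fin N`. -/
def shiftA (N : ℕ) (x : ℤ → Fin N) : ℤ → Fin N := fun i => x (i + 1)

/-- The cylinder set generated by the word `b` anchored at position `i`. -/
def cylA (N : ℕ) (i : ℤ) (b : List (Fin N)) : Set (ℤ → Fin N) :=
  {x | ∀ j : Fin b.length, x (i + (j.val : ℤ)) = b.get j}

/-!
The block probabilities of length `L + 1` form a measure `ν L` on words, and the consistency
conditions say that `ν L` is the image of `ν (L + 1)` under deleting the last letter as well as
under deleting the first one. Hence the mass of a cylinder can be computed in any window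
containing its base, and all windows give the same value: this is an additive content on
cylinders. Cylinders are clopen in the compact space `A^ℤ`, so a decreasing sequence of them with
empty intersection is eventually empty, which makes the content σ-additive, and Carathéodory
extends it to a measure. Cylinders form a π-system generating the product σ-algebra, so the
extension is unique; it is shift invariant because its shift has the same window marginals.
-/

open Set Filter Topology
open scoped ENNReal

theorem List.exists_eq_ofFn_of_ne_nil {α : Type*} {b : List α} (hb : b ≠ []) :
    ∃ (L : ℕ) (w : Fin (L + 1) → α), b = List.ofFn w := by
  obtain _ | ⟨c, d⟩ := b
  · exact absurd rfl hb
  · exact ⟨d.length, (c :: d).get, (List.ofFn_get _).symm⟩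

namespace ShiftSpace

variable {α : Type*}

/-- Windows have `L + 1 ≥ 1` letters because `P []` is unconstrained. -/
def window (i : ℤ) (L : ℕ) (x : ℤ → α) : Fin (L + 1) → α := fun j => x (i + j)

def subwindow (k : ℕ) {L M : ℕ} (h : k + L ≤ M) (w : Fin (M + 1) → α) : Fin (L + 1) → α :=
  fun j => w ⟨k + j, by omega⟩

lemma subwindow_zero {L : ℕ} (h : 0 + L ≤ L) : subwindow (α := α) 0 h = id := by
  funext w j
  simp [subwindow]

lemma window_surjective (i : ℤ) (L : ℕ) : Function.Surjective (window (α := α) i L) := by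
  intro w
  refine ⟨fun t => w ⟨min (t - i).toNat L, by omega⟩, funext fun j => ?_⟩
  simp [window, j.is_le]

lemma window_eq_subwindow_comp {i j : ℤ} {k L M : ℕ} (hij : i = j + k) (h : k + L ≤ M) :
    window (α := α) i L = subwindow k h ∘ window j M := by
  funext x l
  simp [window, subwindow, hij, add_assoc]

lemma exists_common_window (i i' : ℤ) (L L' : ℕ) :
    ∃ (j : ℤ) (M k k' : ℕ) (h : k + L ≤ M) (h' : k' + L' ≤ M),
      window (α := α) i L = subwindow k h ∘ window j M ∧
        window (α := α) i' L' = subwindow k' h' ∘ window j M :=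
  ⟨min i i', (max (i + L) (i' + L') - min i i').toNat, (i - min i i').toNat,
    (i' - min i i').toNat, by omega, by omega, window_eq_subwindow_comp (by omega) _,
    window_eq_subwindow_comp (by omega) _⟩

lemma measurable_window [MeasurableSpace α] (i : ℤ) (L : ℕ) :
    Measurable (window (α := α) i L) :=
  measurable_pi_lambda _ fun _ => measurable_pi_apply _

@[fun_prop]
lemma measurable_subwindow [MeasurableSpace α] (k : ℕ) {L M : ℕ} (h : k + L ≤ M) :
    Measurable (subwindow (α := α) k h) :=
  measurable_pi_lambda _ fun _ => measurable_pi_apply _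

lemma continuous_window [TopologicalSpace α] (i : ℤ) (L : ℕ) :
    Continuous (window (α := α) i L) :=
  continuous_pi fun _ => continuous_apply _

section Cylinders

variable (α) in
def windowCylinders : Set (Set (ℤ → α)) :=
  {s | ∃ (i : ℤ) (L : ℕ) (S : Set (Fin (L + 1) → α)), s = window i L ⁻¹' S}

lemma window_preimage_mem_windowCylinders (i : ℤ) (L : ℕ) (S : Set (Fin (L + 1) → α)) :
    window i L ⁻¹' S ∈ windowCylinders α :=
  ⟨i, L, S, rfl⟩

lemma exists_common_window_preimage {s t : Set (ℤ → α)} (hs : s ∈ windowCylinders α)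
    (ht : t ∈ windowCylinders α) :
    ∃ (j : ℤ) (M : ℕ) (S T : Set (Fin (M + 1) → α)),
      s = window j M ⁻¹' S ∧ t = window j M ⁻¹' T := by
  obtain ⟨i, L, S, rfl⟩ := hs
  obtain ⟨i', L', T, rfl⟩ := ht
  obtain ⟨j, M, k, k', h, h', hw, hw'⟩ := exists_common_window (α := α) i i' L L'
  exact ⟨j, M, subwindow k h ⁻¹' S, subwindow k' h' ⁻¹' T, by rw [hw]; rfl, by rw [hw']; rfl⟩

lemma isSetRing_windowCylinders : IsSetRing (windowCylinders α) where
  empty_mem := ⟨0, 0, ∅, rfl⟩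
  union_mem s t hs ht := by
    obtain ⟨j, M, S, T, rfl, rfl⟩ := exists_common_window_preimage hs ht
    exact ⟨j, M, S ∪ T, rfl⟩
  sdiff_mem s t hs ht := by
    obtain ⟨j, M, S, T, rfl, rfl⟩ := exists_common_window_preimage hs ht
    exact ⟨j, M, S \ T, rfl⟩

lemma isClosed_of_mem_windowCylinders [TopologicalSpace α] [DiscreteTopology α]
    {s : Set (ℤ → α)} (hs : s ∈ windowCylinders α) : IsClosed s := by
  obtain ⟨i, L, S, rfl⟩ := hs
  exact (isClosed_discrete S).preimage (continuous_window i L)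

lemma exists_eq_empty_of_antitone_of_mem_windowCylinders [Finite α] {s : ℕ → Set (ℤ → α)}
    (hs : ∀ n, s n ∈ windowCylinders α) (hanti : Antitone s) (hempty : ⋂ n, s n = ∅) :
    ∃ n, s n = ∅ := by
  let : TopologicalSpace α := ⊥
  have : DiscreteTopology α := ⟨rfl⟩
  by_contra! hne
  have hclosed n := isClosed_of_mem_windowCylinders (hs n)
  have := IsCompact.nonempty_iInter_of_sequence_nonempty_isCompact_isClosed s
    (fun n => hanti n.le_succ) hne (hclosed 0).isCompact hclosed
  rw [hempty] at this
  exact not_nonempty_empty this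

lemma generateFrom_windowCylinders [MeasurableSpace α] [MeasurableSingletonClass α] [Finite α] :
    MeasurableSpace.generateFrom (windowCylinders α) = MeasurableSpace.pi := by
  refine le_antisymm (MeasurableSpace.generateFrom_le ?_) ?_
  · rintro _ ⟨i, L, S, rfl⟩
    exact measurable_window i L S.toFinite.measurableSet
  · refine iSup_le fun i => ?_
    rintro _ ⟨E, -, rfl⟩
    exact MeasurableSpace.measurableSet_generateFrom ⟨i, 0, {w | w 0 ∈ E}, by ext; simp [window]⟩

end Cylinders

section Extension

variable [MeasurableSpace α]

lemma measure_univ_eq_of_map_window_eq {μ : Measure (ℤ → α)} {i : ℤ} {L : ℕ}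
    {ρ : Measure (Fin (L + 1) → α)} (h : μ.map (window i L) = ρ) : μ univ = ρ univ := by
  rw [← h, Measure.map_apply (measurable_window i L) MeasurableSet.univ, preimage_univ]

structure IsConsistentBlockFamily (ν : ∀ L : ℕ, Measure (Fin (L + 1) → α)) : Prop where
  map_init (L : ℕ) : (ν (L + 1)).map Fin.init = ν L
  map_tail (L : ℕ) : (ν (L + 1)).map Fin.tail = ν L

variable {ν : ∀ L : ℕ, Measure (Fin (L + 1) → α)}

theorem IsConsistentBlockFamily.map_subwindow (hν : IsConsistentBlockFamily ν) {k L M : ℕ}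
    (h : k + L ≤ M) : (ν M).map (subwindow k h) = ν L := by
  induction M generalizing k with
  | zero =>
    obtain ⟨rfl, rfl⟩ : k = 0 ∧ L = 0 := by omega
    rw [subwindow_zero, Measure.map_id]
  | succ M ih =>
    by_cases hkL : k + L ≤ M
    · have : subwindow k h = subwindow k hkL ∘ Fin.init (α := fun _ => α) := rfl
      rw [this, ← Measure.map_map (by fun_prop) (by unfold Fin.init; fun_prop), hν.map_init, ih]
    · obtain _ | k := k
      · obtain rfl : L = M + 1 := by omega
        rw [subwindow_zero, Measure.map_id]
      · have hk : k + L ≤ M := by omega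
        have : subwindow (k + 1) h = subwindow k hk ∘ Fin.tail (α := fun _ => α) := by
          funext w j
          simp only [subwindow, Function.comp_apply, Fin.tail]
          congr 1
          ext
          simp only [Fin.val_succ]
          omega
        rw [this, ← Measure.map_map (by fun_prop) (by unfold Fin.tail; fun_prop), hν.map_tail, ih]

variable (ν) in
/-- All presentations of a window cylinder give the same value
(`cylinderMass_window_preimage`); off `windowCylinders α` this is `∞` and never used. -/
noncomputable def cylinderMass (s : Set (ℤ → α)) : ℝ≥0∞ :=
  ⨅ (i : ℤ) (L : ℕ) (S : Set (Fin (L + 1) → α)) (_ : s = window i L ⁻¹' S), ν L S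

variable [MeasurableSingletonClass α] [Finite α]

theorem ext_of_map_window_eq {μ μ' : Measure (ℤ → α)} [IsFiniteMeasure μ]
    (h : ∀ i L, μ.map (window i L) = μ'.map (window i L)) : μ = μ' := by
  have hcyl : ∀ s ∈ windowCylinders α, μ s = μ' s := by
    rintro _ ⟨i, L, S, rfl⟩
    rw [← Measure.map_apply (measurable_window i L) S.toFinite.measurableSet, h,
      Measure.map_apply (measurable_window i L) S.toFinite.measurableSet]
  exact ext_of_generate_finite _ generateFrom_windowCylinders.symm
    isSetRing_windowCylinders.isSetSemiring.isPiSystem hcyl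
    (hcyl _ ⟨0, 0, univ, preimage_univ.symm⟩)

namespace IsConsistentBlockFamily

theorem measure_eq_of_window_preimage_eq (hν : IsConsistentBlockFamily ν) {i i' : ℤ}
    {L L' : ℕ} {S : Set (Fin (L + 1) → α)} {S' : Set (Fin (L' + 1) → α)}
    (h : window i L ⁻¹' S = window i' L' ⁻¹' S') : ν L S = ν L' S' := by
  obtain ⟨j, M, k, k', hk, hk', hw, hw'⟩ := exists_common_window (α := α) i i' L L'
  rw [hw, hw', preimage_comp, preimage_comp] at h
  rw [← hν.map_subwindow hk, ← hν.map_subwindow hk',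
    Measure.map_apply (by fun_prop) S.toFinite.measurableSet,
    Measure.map_apply (by fun_prop) S'.toFinite.measurableSet,
    (window_surjective j M).preimage_injective h]

lemma cylinderMass_window_preimage (hν : IsConsistentBlockFamily ν) (i : ℤ) (L : ℕ)
    (S : Set (Fin (L + 1) → α)) : cylinderMass ν (window i L ⁻¹' S) = ν L S :=
  le_antisymm (iInf_le_of_le i <| iInf_le_of_le L <| iInf_le_of_le S <| iInf_le _ rfl)
    (le_iInf fun _ => le_iInf fun _ => le_iInf fun _ => le_iInf fun h =>
      (hν.measure_eq_of_window_preimage_eq h).le)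

noncomputable def windowContent (hν : IsConsistentBlockFamily ν) :
    AddContent ℝ≥0∞ (windowCylinders α) :=
  isSetRing_windowCylinders.addContent_of_union (cylinderMass ν)
    (by simpa using hν.cylinderMass_window_preimage 0 0 ∅)
    (fun hs ht hst => by
      obtain ⟨j, M, S, T, rfl, rfl⟩ := exists_common_window_preimage hs ht
      rw [← preimage_union, hν.cylinderMass_window_preimage, hν.cylinderMass_window_preimage,
        hν.cylinderMass_window_preimage, measure_union ((disjoint_preimage_iff
          (window_surjective j M)).1 hst) T.toFinite.measurableSet])

lemma windowContent_window_preimage (hν : IsConsistentBlockFamily ν) (i : ℤ) (L : ℕ)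
    (S : Set (Fin (L + 1) → α)) : hν.windowContent (window i L ⁻¹' S) = ν L S :=
  hν.cylinderMass_window_preimage i L S

variable [∀ L, IsFiniteMeasure (ν L)]

theorem isSigmaSubadditive_windowContent (hν : IsConsistentBlockFamily ν) :
    hν.windowContent.IsSigmaSubadditive := by
  refine isSigmaSubadditive_of_addContent_iUnion_eq_tsum isSetRing_windowCylinders
    fun f hf hU hd => addContent_iUnion_eq_sum_of_tendsto_zero isSetRing_windowCylinders _ ?_ ?_
      hf hU hd
  · rintro _ ⟨i, L, S, rfl⟩
    rw [windowContent_window_preimage]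
    exact measure_ne_top _ _
  · intro s hs hanti hempty
    obtain ⟨n, hn⟩ := exists_eq_empty_of_antitone_of_mem_windowCylinders hs hanti hempty
    refine tendsto_const_nhds.congr' (eventually_atTop.2 ⟨n, fun m hm => ?_⟩)
    dsimp only
    rw [subset_empty_iff.1 ((hanti hm).trans hn.subset), addContent_empty]

noncomputable def extension (hν : IsConsistentBlockFamily ν) : Measure (ℤ → α) :=
  hν.windowContent.measure isSetRing_windowCylinders.isSetSemiring
    generateFrom_windowCylinders.ge hν.isSigmaSubadditive_windowContent

theorem map_window_extension (hν : IsConsistentBlockFamily ν) (i : ℤ) (L : ℕ) :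
    hν.extension.map (window i L) = ν L := by
  ext S hS
  rw [Measure.map_apply (measurable_window i L) hS, extension,
    AddContent.measure_eq _ _ generateFrom_windowCylinders.symm _
      (window_preimage_mem_windowCylinders i L S), windowContent_window_preimage]

theorem existsUnique_map_window_eq (hν : IsConsistentBlockFamily ν) :
    ∃! μ : Measure (ℤ → α), ∀ i L, μ.map (window i L) = ν L := by
  refine ⟨hν.extension, hν.map_window_extension, fun μ hμ => ?_⟩
  have : IsFiniteMeasure μ :=
    ⟨by rw [measure_univ_eq_of_map_window_eq (hμ 0 0)]; exact measure_lt_top _ _⟩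
  exact ext_of_map_window_eq fun i L => by rw [hμ, hν.map_window_extension]

end IsConsistentBlockFamily

end Extension

section BlockMeasure

variable [Fintype α] [MeasurableSpace α]

noncomputable def blockMeasure (P : List α → ℝ) (L : ℕ) : Measure (Fin (L + 1) → α) :=
  ∑ w, (P (List.ofFn w)).toNNReal • Measure.dirac w

variable {P : List α → ℝ}

instance (L : ℕ) : IsFiniteMeasure (blockMeasure P L) := by
  unfold blockMeasure
  infer_instance

lemma blockMeasure_zero_univ (hP : ∀ a, 0 ≤ P [a]) :
    blockMeasure P 0 univ = ENNReal.ofReal (∑ a, P [a]) := by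
  rw [ENNReal.ofReal_sum_of_nonneg fun a _ => hP a,
    ← (Equiv.funUnique (Fin 1) α).sum_comp fun a => ENNReal.ofReal (P [a])]
  simp [blockMeasure, ENNReal.ofReal]

variable [MeasurableSingletonClass α]

lemma blockMeasure_singleton {L : ℕ} (w : Fin (L + 1) → α) :
    blockMeasure P L {w} = ENNReal.ofReal (P (List.ofFn w)) := by
  classical
  simp [blockMeasure, Set.indicator, ENNReal.ofReal]

lemma map_blockMeasure_of_sum_eq {L : ℕ} {f : (Fin (L + 1 + 1) → α) → (Fin (L + 1) → α)}
    (e : α × (Fin (L + 1) → α) ≃ (Fin (L + 1 + 1) → α)) (hfe : ∀ a w, f (e (a, w)) = w)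
    (hsum : ∀ w, ∑ a, (P (List.ofFn (e (a, w)))).toNNReal = (P (List.ofFn w)).toNNReal) :
    (blockMeasure P (L + 1)).map f = blockMeasure P L := by
  unfold blockMeasure
  rw [Measure.map_finset_sum' (by fun_prop)]
  simp only [Measure.map_smul, Measure.map_dirac]
  rw [← e.sum_comp, Fintype.sum_prod_type, Finset.sum_comm]
  simp only [hfe, ← Finset.sum_smul, hsum]

theorem isConsistentBlockFamily_blockMeasure (hP : ∀ b : List α, b ≠ [] → 0 ≤ P b)
    (hR : ∀ b : List α, b ≠ [] → P b = ∑ a, P (b ++ [a]))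
    (hL : ∀ b : List α, b ≠ [] → P b = ∑ a, P (a :: b)) :
    IsConsistentBlockFamily (blockMeasure P) where
  map_init L := map_blockMeasure_of_sum_eq (Fin.snocEquiv fun _ => α)
    (fun _ _ => Fin.init_snoc (α := fun _ => α) _ _) fun w => by
      rw [hR _ (by simp), Real.toNNReal_sum_of_nonneg fun a _ => hP _ (by simp)]
      refine Finset.sum_congr rfl fun a _ => ?_
      rw [List.ofFn_succ']
      simp [Fin.snocEquiv]
  map_tail L := map_blockMeasure_of_sum_eq (Fin.consEquiv fun _ => α)
    (fun _ _ => Fin.tail_cons (α := fun _ => α) _ _) fun w => by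
      rw [hL _ (by simp), Real.toNNReal_sum_of_nonneg fun a _ => hP _ (by simp)]
      simp [Fin.consEquiv, List.ofFn_succ]

end BlockMeasure

variable {N : ℕ}

lemma window_comp_shiftA (i : ℤ) (L : ℕ) : window i L ∘ shiftA N = window (i + 1) L := by
  funext x j
  simp only [Function.comp_apply, window, shiftA]
  congr 1
  ring

theorem map_shiftA_eq_self {μ : Measure (ℤ → Fin N)} [IsFiniteMeasure μ]
    (h : ∀ i L, μ.map (window (i + 1) L) = μ.map (window i L)) : μ.map (shiftA N) = μ := by
  have hshift : Measurable (shiftA N) := measurable_pi_lambda _ fun _ => measurable_pi_apply _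
  refine ext_of_map_window_eq fun i L => ?_
  rw [Measure.map_map (measurable_window i L) hshift, window_comp_shiftA, h]

lemma cylA_ofFn (i : ℤ) {L : ℕ} (w : Fin (L + 1) → Fin N) :
    cylA N i (List.ofFn w) = window i L ⁻¹' {w} := by
  ext x
  simp only [cylA, mem_ofPred_eq, mem_preimage, mem_singleton_iff, funext_iff, window,
    List.get_ofFn]
  exact (finCongr List.length_ofFn).forall_congr_left

lemma map_window_eq_blockMeasure_iff {P : List (Fin N) → ℝ} {μ : Measure (ℤ → Fin N)} :
    (∀ i L, μ.map (window i L) = blockMeasure P L) ↔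
      ∀ b : List (Fin N), b ≠ [] → ∀ i, μ (cylA N i b) = ENNReal.ofReal (P b) := by
  constructor
  · intro h b hb i
    obtain ⟨L, w, rfl⟩ := List.exists_eq_ofFn_of_ne_nil hb
    rw [cylA_ofFn, ← Measure.map_apply (measurable_window i L) (measurableSet_singleton w), h,
      blockMeasure_singleton]
  · intro h i L
    refine Measure.ext_iff_singleton.2 fun w => ?_
    rw [Measure.map_apply (measurable_window i L) (measurableSet_singleton w), ← cylA_ofFn,
      h _ (by simp) i, blockMeasure_singleton]

end ShiftSpace

open ShiftSpace in
theorem exists_unique_shift_invariant_measure_of_block_probabilities_general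
    (N : ℕ) (P : List (Fin N) → ℝ)
    (hrange : ∀ b : List (Fin N), b ≠ [] → 0 ≤ P b ∧ P b ≤ 1)
    (hconsR : ∀ b : List (Fin N), b ≠ [] → P b = ∑ a : Fin N, P (b ++ [a]))
    (hconsL : ∀ b : List (Fin N), b ≠ [] → P b = ∑ a : Fin N, P (a :: b))
    (hnorm : ∑ a : Fin N, P [a] = 1) :
    ∃! μ : Measure (ℤ → Fin N),
      IsProbabilityMeasure μ ∧ μ.map (shiftA N) = μ ∧
        ∀ b : List (Fin N), b ≠ [] → ∀ i : ℤ, μ (cylA N i b) = ENNReal.ofReal (P b) := by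
  have hν := isConsistentBlockFamily_blockMeasure (fun b hb => (hrange b hb).1) hconsR hconsL
  obtain ⟨μ, hμ, huniq⟩ := hν.existsUnique_map_window_eq
  have : IsProbabilityMeasure μ := ⟨by
    rw [measure_univ_eq_of_map_window_eq (hμ 0 0),
      blockMeasure_zero_univ fun a => (hrange [a] (by simp)).1, hnorm, ENNReal.ofReal_one]⟩
  refine ⟨μ, ⟨this, map_shiftA_eq_self fun i L => by rw [hμ, hμ],
    map_window_eq_blockMeasure_iff.1 hμ⟩, ?_⟩
  exact fun μ' ⟨_, _, hμ'⟩ => huniq μ' (map_window_eq_blockMeasure_iff.2 hμ')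

/-- a consistent system of block probabilities `P : A⋆ → [0,1]`
determines a unique shift-invariant probability measure on `A^ℤ` whose cylinder
probabilities are given by `P`. -/
theorem exists_unique_shift_invariant_measure_of_block_probabilities
    (N : ℕ) (hN : 0 < N) (P : List (Fin N) → ℝ)
    (hrange : ∀ b : List (Fin N), b ≠ [] → 0 ≤ P b ∧ P b ≤ 1)
    (hconsR : ∀ b : List (Fin N), b ≠ [] → P b = ∑ a : Fin N, P (b ++ [a]))
    (hconsL : ∀ b : List (Fin N), b ≠ [] → P b = ∑ a : Fin N, P (a :: b))
    (hnorm : ∑ a : Fin N, P [a] = 1) :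
    ∃! μ : Measure (ℤ → Fin N),
      IsProbabilityMeasure μ ∧ μ.map (shiftA N) = μ ∧
        ∀ b : List (Fin N), b ≠ [] → ∀ i : ℤ, μ (cylA N i b) = ENNReal.ofReal (P b) :=
  exists_unique_shift_invariant_measure_of_block_probabilities_general N P hrange hconsR hconsL
    hnorm
end

section
/- Fix integers N ≥ 2 and k ≥ 1, and let A = {0,1,…,N−1}. Consider the real vector space of all functions P defined on the set of nonempty words over A of length at most k that satisfy the homogeneous consistency conditions P(b) = Σ_{a∈A} P(ba) = Σ_{a∈A} P(ab) for every nonempty word b of length strictly less than k. This vector space has dimension (N−1)·N^{k−1} + 1. Consequently, for block probabilities additionally normalized by Σ_{a∈A} P(a) = 1, exactly (N−1)·N^{k−1} of the block probabilities of lengths 1 through k are linearly independent. -/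
/-- Nonempty words over the alphabet `Fin N` of length at most `k`. -/
def ShortWords (N k : ℕ) : Type := {l : List (Fin N) // l ≠ [] ∧ l.length ≤ k}

/-- The vector space of real-valued functions on nonempty words of length at most `k`
satisfying the homogeneous consistency conditions
`P b = ∑ a, P (b ++ [a]) = ∑ a, P (a :: b)` for every nonempty word `b` of length `< k`. -/
def consistentSpace (N k : ℕ) : Submodule ℝ (ShortWords N k → ℝ) where
  carrier := {P | ∀ (b : List (Fin N)) (hb : b ≠ []) (hlen : b.length < k),
      P ⟨b, hb, hlen.le⟩ = ∑ a : Fin N, P ⟨b ++ [a], by simp, by simpa using hlen⟩ ∧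
      P ⟨b, hb, hlen.le⟩ = ∑ a : Fin N, P ⟨a :: b, by simp, by simpa using hlen⟩}
  add_mem' := by
    intro P Q hP hQ b hb hlen
    exact ⟨(congrArg₂ (· + ·) (hP b hb hlen).1 (hQ b hb hlen).1).trans Finset.sum_add_distrib.symm,
      (congrArg₂ (· + ·) (hP b hb hlen).2 (hQ b hb hlen).2).trans Finset.sum_add_distrib.symm⟩
  zero_mem' := by
    intro b hb hlen
    exact ⟨Finset.sum_const_zero.symm, Finset.sum_const_zero.symm⟩
  smul_mem' := by
    intro c P hP b hb hlen
    exact ⟨(congrArg (HMul.hMul c) (hP b hb hlen).1).trans (Finset.mul_sum _ _ _),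
      (congrArg (HMul.hMul c) (hP b hb hlen).2).trans (Finset.mul_sum _ _ _)⟩

/-!
Restricting a consistent system to the words of maximal length `k` is injective, since every
block probability is a sum of longest ones. Its image is the kernel of the map
`Q ↦ (c ↦ ∑ a, Q (c a) - ∑ a, Q (a c))` on words `c` of length `k - 1`: for such `Q` the iterated
right marginals of `Q` are also left-consistent, because left and right marginalization commute.
That map is the divergence of flows on the de Bruijn graph, so its image is the space of
functions with sum zero, the graph being strongly connected (sliding in the letters of `c'`
leads from `c` to `c'`). Hence the dimension is `N ^ k - (N ^ (k - 1) - 1)`.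
-/

open Finset Module

namespace List.Vector

def consEquiv (α : Type*) (n : ℕ) : α × List.Vector α n ≃ List.Vector α (n + 1) where
  toFun p := p.1 ::ᵥ p.2
  invFun v := (v.head, v.tail)
  left_inv p := by simp
  right_inv := cons_head_tail

def snocEquiv (α : Type*) (n : ℕ) : List.Vector α n × α ≃ List.Vector α (n + 1) where
  toFun p := ⟨p.1.toList ++ [p.2], by simp⟩
  invFun v := (⟨v.toList.dropLast, by simp⟩,
    v.toList.getLast (List.ne_nil_of_length_eq_add_one v.toList_length))
  left_inv p := by ext <;> simp
  right_inv v := toList_injective (List.dropLast_append_getLast _)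

variable {α : Type*} {n : ℕ}

def slide (c : List.Vector α n) (a : α) : List.Vector α n :=
  ((consEquiv α n).symm (snocEquiv α n (c, a))).2

theorem toList_slide (c : List.Vector α n) (a : α) :
    (slide c a).toList = (c.toList ++ [a]).tail :=
  toList_tail _

theorem toList_foldl_slide (l : List α) (c : List.Vector α n) :
    (l.foldl slide c).toList = (c.toList ++ l).drop l.length := by
  induction l generalizing c with
  | nil => simp
  | cons a l ih =>
    rw [List.foldl_cons, ih, toList_slide, ← List.tail_append_of_ne_nil (by simp),
      List.drop_tail]
    simp

theorem extend_toList_apply_of_length_ne {β : Type*} [Zero β] (Q : List.Vector α n → β)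
    {l : List α} (h : l.length ≠ n) : Function.extend List.Vector.toList Q 0 l = 0 :=
  Function.extend_apply' _ _ _ fun ⟨v, hv⟩ => h (hv ▸ v.toList_length)

end List.Vector

open List.Vector

theorem sum_single_one_equiv_prodMk {α β γ K : Type*} [Fintype α] [DecidableEq β]
    [DecidableEq γ] [Semiring K] (e : β × α ≃ γ) (v : γ) (x : β) :
    ∑ a, (Pi.single v 1 : γ → K) (e (x, a)) = (Pi.single (e.symm v).1 1 : β → K) x := by
  classical
  simp only [Pi.single_apply, ← e.eq_symm_apply, Prod.ext_iff, ite_and]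
  split_ifs <;> simp

theorem ker_sum_proj_le_of_single_sub_single_mem {K ι : Type*} [CommRing K] [Fintype ι]
    [DecidableEq ι] {p : Submodule K (ι → K)} (hp : ∀ i j, Pi.single i 1 - Pi.single j 1 ∈ p) :
    LinearMap.ker (∑ i, LinearMap.proj i : (ι → K) →ₗ[K] K) ≤ p := by
  intro f hf
  rcases isEmpty_or_nonempty ι with _ | ⟨⟨j⟩⟩
  · simp [Subsingleton.elim f 0]
  have hsum : ∑ i, f i = 0 := by simpa using hf
  have hdecomp : f = ∑ i, f i • (Pi.single i 1 - Pi.single j 1) := by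
    simp only [smul_sub, sum_sub_distrib, ← sum_smul, hsum, zero_smul, sub_zero]
    simp only [← Pi.single_smul, smul_eq_mul, mul_one, univ_sum_single]
  rw [hdecomp]
  exact sum_mem fun i _ => p.smul_mem _ (hp i j)

theorem finrank_ker_sum_proj {K ι : Type*} [Field K] [Fintype ι] [Nonempty ι] :
    finrank K (LinearMap.ker (∑ i, LinearMap.proj i : (ι → K) →ₗ[K] K)) = Fintype.card ι - 1 := by
  have hrange : LinearMap.range (∑ i, LinearMap.proj i : (ι → K) →ₗ[K] K) = ⊤ := by
    classical
    obtain ⟨j⟩ := ‹Nonempty ι›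
    exact LinearMap.range_eq_top.mpr fun r => ⟨Pi.single j r, by simp⟩
  have := (∑ i, LinearMap.proj i : (ι → K) →ₗ[K] K).finrank_range_add_finrank_ker
  rw [hrange, finrank_top, finrank_self, finrank_fintype_fun_eq_card] at this
  omega

section Marginals

variable (K α : Type*) [CommRing K] [Fintype α]

def marginalDefect (m : ℕ) : (List.Vector α (m + 1) → K) →ₗ[K] (List.Vector α m → K) where
  toFun Q c := ∑ a, Q (snocEquiv α m (c, a)) - ∑ a, Q (consEquiv α m (a, c))
  map_add' Q R := by ext; simp only [Pi.add_apply, sum_add_distrib]; ring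
  map_smul' r Q := by ext; simp [mul_sum, mul_sub]

def rightMarginal : Module.End K (List α → K) where
  toFun F l := ∑ a, F (l ++ [a])
  map_add' F G := by ext; simp [sum_add_distrib]
  map_smul' r F := by ext; simp [mul_sum]

def leftMarginal : Module.End K (List α → K) where
  toFun F l := ∑ a, F (a :: l)
  map_add' F G := by ext; simp [sum_add_distrib]
  map_smul' r F := by ext; simp [mul_sum]

variable {K α} {m : ℕ}

theorem sum_marginalDefect_apply (Q : List.Vector α (m + 1) → K) :
    ∑ c, marginalDefect K α m Q c = 0 := by
  simp only [marginalDefect, LinearMap.coe_mk, AddHom.coe_mk, sum_sub_distrib]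
  rw [sub_eq_zero, ← Fintype.sum_prod_type', (snocEquiv α m).sum_comp, Finset.sum_comm,
    ← Fintype.sum_prod_type', (consEquiv α m).sum_comp]

theorem commute_leftMarginal_rightMarginal :
    Commute (leftMarginal K α) (rightMarginal K α) := by
  ext F l
  simp only [Module.End.mul_apply, leftMarginal, rightMarginal, LinearMap.coe_mk, AddHom.coe_mk,
    List.cons_append]
  exact sum_comm

theorem leftMarginal_rightMarginal_pow {F : List α → K}
    (h : leftMarginal K α F = rightMarginal K α F) (j : ℕ) :
    leftMarginal K α ((rightMarginal K α ^ j) F) = (rightMarginal K α ^ (j + 1)) F := by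
  rw [← Module.End.mul_apply, (commute_leftMarginal_rightMarginal.pow_right j).eq,
    Module.End.mul_apply, h, ← Module.End.mul_apply, ← pow_succ]

theorem leftMarginal_extend_eq_rightMarginal {Q : List.Vector α (m + 1) → K}
    (hQ : marginalDefect K α m Q = 0) :
    leftMarginal K α (Function.extend List.Vector.toList Q 0) =
      rightMarginal K α (Function.extend List.Vector.toList Q 0) := by
  ext l
  simp only [leftMarginal, rightMarginal, LinearMap.coe_mk, AddHom.coe_mk]
  by_cases hl : l.length = m
  · calc ∑ a, Function.extend List.Vector.toList Q 0 (a :: l)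
        = ∑ a, Q (consEquiv α m (a, ⟨l, hl⟩)) :=
          sum_congr rfl fun a _ => toList_injective.extend_apply Q 0 (consEquiv α m (a, ⟨l, hl⟩))
      _ = ∑ a, Q (snocEquiv α m (⟨l, hl⟩, a)) := (sub_eq_zero.mp (congrFun hQ ⟨l, hl⟩)).symm
      _ = ∑ a, Function.extend List.Vector.toList Q 0 (l ++ [a]) :=
          sum_congr rfl fun a _ =>
            (toList_injective.extend_apply Q 0 (snocEquiv α m (⟨l, hl⟩, a))).symm
  · simp [extend_toList_apply_of_length_ne, hl]

variable [DecidableEq α]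

theorem marginalDefect_single (v : List.Vector α (m + 1)) :
    marginalDefect K α m (Pi.single v 1) =
      Pi.single ((snocEquiv α m).symm v).1 1 - Pi.single ((consEquiv α m).symm v).2 1 := by
  ext c
  exact congrArg₂ (fun s t : K => s - t) (sum_single_one_equiv_prodMk (snocEquiv α m) v c)
    (sum_single_one_equiv_prodMk ((Equiv.prodComm _ _).trans (consEquiv α m)) v c)

theorem single_sub_single_slide_mem_range_marginalDefect (c : List.Vector α m) (a : α) :
    Pi.single c 1 - Pi.single (slide c a) 1 ∈ LinearMap.range (marginalDefect K α m) :=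
  ⟨Pi.single (snocEquiv α m (c, a)) 1, by rw [marginalDefect_single, Equiv.symm_apply_apply]; rfl⟩

theorem single_sub_single_mem_range_marginalDefect (c c' : List.Vector α m) :
    Pi.single c 1 - Pi.single c' 1 ∈ LinearMap.range (marginalDefect K α m) := by
  have key (l : List α) (c : List.Vector α m) :
      Pi.single c 1 - Pi.single (l.foldl slide c) 1 ∈ LinearMap.range (marginalDefect K α m) := by
    induction l generalizing c with
    | nil => simp
    | cons a l ih =>
      rw [List.foldl_cons, ← sub_add_sub_cancel _ (Pi.single (slide c a) 1)]
      exact add_mem (single_sub_single_slide_mem_range_marginalDefect c a) (ih _)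
  convert key c'.toList c
  exact toList_injective (by simp [toList_foldl_slide])

theorem range_marginalDefect :
    LinearMap.range (marginalDefect K α m) = LinearMap.ker (∑ c, LinearMap.proj c) := by
  refine le_antisymm ?_ (ker_sum_proj_le_of_single_sub_single_mem
    single_sub_single_mem_range_marginalDefect)
  rintro _ ⟨Q, rfl⟩
  simpa using sum_marginalDefect_apply Q

end Marginals

section ConsistentSpace

variable {N m : ℕ}

def restrictTop (N m : ℕ) :
    consistentSpace N (m + 1) →ₗ[ℝ] (List.Vector (Fin N) (m + 1) → ℝ) where
  toFun P v := P.1 ⟨v.toList, List.ne_nil_of_length_eq_add_one v.toList_length,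
    v.toList_length.le⟩
  map_add' _ _ := rfl
  map_smul' _ _ := rfl

theorem eq_zero_of_mem_consistentSpace {k : ℕ} {P : ShortWords N k → ℝ}
    (hP : P ∈ consistentSpace N k) (htop : ∀ b hb (h : b.length = k), P ⟨b, hb, h.le⟩ = 0) :
    P = 0 := by
  suffices ∀ d b hb (h : b.length + d = k), P ⟨b, hb, by omega⟩ = 0 by
    funext ⟨b, hb, hlen⟩
    exact this (k - b.length) b hb (by omega)
  intro d
  induction d with
  | zero => exact htop
  | succ d ih =>
    intro b hb h
    rw [(hP b hb (by omega)).1]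
    exact sum_eq_zero fun a _ => ih (b ++ [a]) (by simp) (by simp; omega)

theorem restrictTop_injective : Function.Injective (restrictTop N m) := by
  rw [← LinearMap.ker_eq_bot, LinearMap.ker_eq_bot']
  intro P hP
  exact Subtype.ext <| eq_zero_of_mem_consistentSpace P.2 fun b hb h => congrFun hP ⟨b, h⟩

theorem restrictTop_mem_ker_marginalDefect (P : consistentSpace N (m + 1)) :
    restrictTop N m P ∈ LinearMap.ker (marginalDefect ℝ (Fin N) m) := by
  ext c
  simp only [marginalDefect, restrictTop, LinearMap.coe_mk, AddHom.coe_mk, Pi.zero_apply]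
  rw [sub_eq_zero]
  by_cases hc : c.toList = []
  · exact sum_congr rfl fun a _ =>
      congrArg P.1 (Subtype.ext (show c.toList ++ [a] = a :: c.toList by simp [hc]))
  · obtain ⟨hright, hleft⟩ := P.2 c.toList hc (by simp)
    exact hright.symm.trans hleft

theorem exists_restrictTop_eq {Q : List.Vector (Fin N) (m + 1) → ℝ}
    (hQ : marginalDefect ℝ (Fin N) m Q = 0) : ∃ P, restrictTop N m P = Q := by
  set F := Function.extend List.Vector.toList Q 0
  have hF : leftMarginal ℝ (Fin N) F = rightMarginal ℝ (Fin N) F :=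
    leftMarginal_extend_eq_rightMarginal hQ
  refine ⟨⟨fun b => (rightMarginal ℝ (Fin N) ^ (m + 1 - b.1.length)) F b.1, ?_⟩, ?_⟩
  · intro b hb hlen
    have hj : m + 1 - b.length = (m - b.length) + 1 := by omega
    simp only [List.length_append, List.length_cons, List.length_nil, hj,
      Nat.add_sub_add_right, zero_add]
    constructor
    · rw [pow_succ', Module.End.mul_apply]
      rfl
    · rw [← leftMarginal_rightMarginal_pow hF]
      rfl
  · funext v
    change (rightMarginal ℝ (Fin N) ^ (m + 1 - v.toList.length)) F v.toList = Q v
    rw [v.toList_length, Nat.sub_self, pow_zero, Module.End.one_apply]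
    exact toList_injective.extend_apply Q 0 v

theorem range_restrictTop :
    LinearMap.range (restrictTop N m) = LinearMap.ker (marginalDefect ℝ (Fin N) m) := by
  refine le_antisymm ?_ fun Q hQ => exists_restrictTop_eq hQ
  rintro _ ⟨P, rfl⟩
  exact restrictTop_mem_ker_marginalDefect P

end ConsistentSpace

/-- the space of consistent systems of block probabilities of lengths `≤ k`
has dimension `(N-1)·N^(k-1) + 1`; hence, after normalization, exactly `(N-1)·N^(k-1)`
block probabilities are linearly independent. -/
theorem finrank_consistentSpace (N k : ℕ) (hN : 2 ≤ N) (hk : 1 ≤ k) :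
    Module.finrank ℝ (consistentSpace N k) = (N - 1) * N ^ (k - 1) + 1 := by
  obtain ⟨m, rfl⟩ : ∃ m, k = m + 1 := ⟨k - 1, by omega⟩
  have : Nonempty (List.Vector (Fin N) m) := ⟨.replicate m ⟨0, by omega⟩⟩
  have hrank := (marginalDefect ℝ (Fin N) m).finrank_range_add_finrank_ker
  rw [range_marginalDefect, finrank_ker_sum_proj, ← range_restrictTop,
    LinearMap.finrank_range_of_inj restrictTop_injective, finrank_fintype_fun_eq_card,
    card_vector, card_vector, Fintype.card_fin] at hrank
  have hpow : N ^ (m + 1) = (N - 1) * N ^ m + N ^ m := by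
    rw [pow_succ, ← Nat.succ_mul, Nat.succ_eq_add_one, Nat.sub_add_cancel (by omega), mul_comm]
  have : 1 ≤ N ^ m := Nat.one_le_pow _ _ (by omega)
  rw [Nat.add_sub_cancel]
  omega
end

section
/- Let f : Bool×Bool×Bool → Bool be an ECA local rule whose global map F : (ℤ → Bool) → (ℤ → Bool) is surjective. Then F preserves the symmetric Bernoulli measure: the pushforward of μ_{1/2} under F equals μ_{1/2}; consequently, for every n ≥ 0 and every binary word b of length m, P_n(b) = μ_{1/2}((F^[n])⁻¹([b])) = 2^{−m}. -/
/-!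
A surjective cellular automaton is balanced (Hedlund): every word `u` has exactly `|α|²`
preimages of length `|u| + 2`. Surjectivity first forbids two distinct words of equal length that
the local rule cannot tell apart from outside: replacing one by the other block by block, every
word of length `k * W` would have a preimage avoiding a fixed block of length `W`, and for large
`k` there are too few of those. So a preimage is determined by its boundary pairs, and the number
`N u` of preimages is bounded. It averages `|α|²` over the words of each length, and `N u` is also
the average of `N (t :: u)` and of `N (u ++ [t])` over the letters `t`; hence a word with maximal
`N` forces the maximum on every word containing it, and since almost all long words do, the
maximum equals the average. Balance says that the preimage of a cylinder of length `m` is a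
disjoint union of `|α|²` cylinders of length `m + 2`, so the symmetric Bernoulli measure and its
image agree on cylinders.
-/

open MeasureTheory

/-- The cylinder set generated by the binary word `b` (anchored at `0`). -/
def cylinder (b : List Bool) : Set (ℤ → Bool) :=
  {x | ∀ j : Fin b.length, x (j.val : ℤ) = b.get j}

/-- The global map of the elementary cellular automaton with local rule `f`. -/
def eca (f : Bool → Bool → Bool → Bool) (x : ℤ → Bool) : ℤ → Bool :=
  fun i => f (x (i - 1)) (x i) (x (i + 1))

/-- `μ` is the Bernoulli (i.i.d. product) measure with parameter `p`: every finite
set of coordinates is independent, each equal to `1 = true` with probability `p`. -/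
def IsBernoulli (p : ℝ) (μ : Measure (ℤ → Bool)) : Prop :=
  ∀ (s : Finset ℤ) (f : ℤ → Bool),
    μ {x | ∀ i ∈ s, x i = f i} =
      ∏ i ∈ s, (if f i then ENNReal.ofReal p else ENNReal.ofReal (1 - p))

open Finset

section Words

variable {α : Type*} [DecidableEq α]

def listsOfLength (S : Finset α) : ℕ → Finset (List α)
  | 0 => {[]}
  | k + 1 => (S ×ˢ listsOfLength S k).image fun p => p.1 :: p.2

theorem mem_listsOfLength {S : Finset α} {k : ℕ} {l : List α} :
    l ∈ listsOfLength S k ↔ l.length = k ∧ ∀ a ∈ l, a ∈ S := by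
  induction k generalizing l with
  | zero => simp +contextual [listsOfLength]
  | succ k ih =>
    cases l with
    | nil => simp [listsOfLength]
    | cons a l => simp [listsOfLength, ih, and_assoc, and_left_comm]

theorem card_listsOfLength (S : Finset α) (k : ℕ) : #(listsOfLength S k) = #S ^ k := by
  induction k with
  | zero => rfl
  | succ k ih =>
    rw [listsOfLength, card_image_of_injective _ fun p q h => by simpa [Prod.ext_iff] using h,
      card_product, ih, pow_succ']

variable [Fintype α]

def words (n : ℕ) : Finset (List α) := listsOfLength univ n

@[simp] theorem mem_words {n : ℕ} {u : List α} : u ∈ words n ↔ u.length = n := by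
  simp [words, mem_listsOfLength]

theorem card_words (n : ℕ) : #(words n : Finset (List α)) = Fintype.card α ^ n := by
  rw [words, card_listsOfLength, card_univ]

theorem exists_flatten_eq {W k : ℕ} {v : List α} (hv : v.length = k * W) :
    ∃ L ∈ listsOfLength (words W) k, L.flatten = v := by
  induction k generalizing v with
  | zero => exact ⟨[], by simp [listsOfLength], by simp_all⟩
  | succ k ih =>
    obtain ⟨L, hL, hLv⟩ := ih (v := v.drop W) (by simp [hv, Nat.succ_mul])
    refine ⟨v.take W :: L, ?_, by simp [hLv]⟩
    rw [mem_listsOfLength] at hL ⊢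
    refine ⟨by simp [hL.1], ?_⟩
    simp only [List.mem_cons, forall_eq_or_imp, mem_words, List.length_take]
    exact ⟨by simp [hv, Nat.succ_mul], fun a ha => mem_words.1 (hL.2 a ha)⟩

theorem card_filter_not_infix_le (w : List α) (k : ℕ) :
    #{z ∈ words (k * w.length) | ¬w <:+: z} ≤
      #(listsOfLength ((words w.length).erase w) k) := by
  refine card_le_card_of_surjOn List.flatten fun z hz => ?_
  simp only [coe_filter, mem_words, Set.mem_ofPred_eq] at hz
  obtain ⟨L, hL, rfl⟩ := exists_flatten_eq hz.1
  refine ⟨L, ?_, rfl⟩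
  rw [mem_listsOfLength] at hL
  rw [mem_coe, mem_listsOfLength]
  exact ⟨hL.1, fun b hb => mem_erase.2
    ⟨fun h => hz.2 (h ▸ List.infix_of_mem_flatten hb), hL.2 b hb⟩⟩

theorem exists_mul_pow_lt (C m : ℕ) : ∃ k, C * m ^ k < (m + 1) ^ k := by
  rcases Nat.eq_zero_or_pos m with rfl | hm
  · exact ⟨1, by simp⟩
  obtain ⟨k, hk⟩ := pow_unbounded_of_one_lt (C : ℚ)
    ((one_lt_div (by positivity)).2 (lt_add_one (m : ℚ)))
  refine ⟨k, ?_⟩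
  rw [div_pow, lt_div_iff₀ (by positivity)] at hk
  exact_mod_cast hk

theorem exists_mul_card_listsOfLength_erase_lt (C : ℕ) (y : List α) :
    ∃ k, C * #(listsOfLength ((words y.length).erase y) k) <
      #(words (k * y.length) : Finset (List α)) := by
  obtain ⟨k, hk⟩ := exists_mul_pow_lt C #((words y.length).erase y)
  refine ⟨k, ?_⟩
  rwa [card_listsOfLength, card_words, mul_comm k, pow_mul, ← card_words (α := α),
    ← card_erase_add_one (s := words y.length) (a := y) (by simp)]

end Words

section LocalRule

variable {α : Type*} (f : α → α → α → α)

/-- `localImage f a b v` is the image of the word `a :: b :: v` under the local rule `f`, and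
`lastPair a b v` consists of the last two letters of that word. -/
@[simp] def localImage : α → α → List α → List α
  | _, _, [] => []
  | a, b, c :: v => f a b c :: localImage b c v

@[simp] def lastPair : α → α → List α → α × α
  | a, b, [] => (a, b)
  | _, b, c :: v => lastPair b c v

@[simp] theorem length_localImage (a b : α) (v : List α) :
    (localImage f a b v).length = v.length := by
  induction v generalizing a b <;> simp [*]

theorem localImage_append (a b : α) (u v : List α) :
    localImage f a b (u ++ v) =
      localImage f a b u ++ localImage f (lastPair a b u).1 (lastPair a b u).2 v := by
  induction u generalizing a b <;> simp [*]

theorem lastPair_append (a b : α) (u v : List α) :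
    lastPair a b (u ++ v) = lastPair (lastPair a b u).1 (lastPair a b u).2 v := by
  induction u generalizing a b <;> simp [*]

def Interchangeable (x y : List α) : Prop :=
  ∀ a b, localImage f a b x = localImage f a b y ∧ lastPair a b x = lastPair a b y

theorem Interchangeable.refl (x : List α) : Interchangeable f x x := fun _ _ => ⟨rfl, rfl⟩

theorem Interchangeable.append {x x' y y' : List α} (hx : Interchangeable f x x')
    (hy : Interchangeable f y y') : Interchangeable f (x ++ y) (x' ++ y') := fun a b => by
  simp only [localImage_append, lastPair_append, (hx a b).1, (hx a b).2]
  exact ⟨congrArg _ (hy _ _).1, (hy _ _).2⟩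

theorem interchangeable_flatten_map {g : List α → List α}
    (hg : ∀ z, Interchangeable f (g z) z) (L : List (List α)) :
    Interchangeable f (L.map g).flatten L.flatten := by
  induction L with
  | nil => exact .refl f []
  | cons z L ih => exact (hg z).append f ih

variable [Fintype α] [DecidableEq α]

def preimages (u : List α) : Finset ((α × α) × List α) :=
  {p ∈ univ ×ˢ words u.length | localImage f p.1.1 p.1.2 p.2 = u}

@[simp] theorem mem_preimages {u : List α} {p : (α × α) × List α} :
    p ∈ preimages f u ↔ localImage f p.1.1 p.1.2 p.2 = u := by
  simp only [preimages, mem_filter, mem_product, mem_univ, true_and, mem_words,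
    and_iff_right_iff_imp]
  rintro rfl
  simp

theorem length_eq_of_mem_preimages {u : List α} {p : (α × α) × List α}
    (hp : p ∈ preimages f u) : p.2.length = u.length := by
  rw [← (mem_preimages f).1 hp, length_localImage]

theorem disjoint_preimages {u u' : List α} (h : u ≠ u') :
    Disjoint (preimages f u) (preimages f u') :=
  disjoint_left.2 fun _ hp hp' =>
    h (((mem_preimages f).1 hp).symm.trans ((mem_preimages f).1 hp'))

theorem sum_card_preimages (m : ℕ) :
    ∑ u ∈ words m, #(preimages f u) = Fintype.card α ^ (m + 2) := by
  let S : Finset ((α × α) × List α) := univ ×ˢ words m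
  have hmaps : Set.MapsTo (fun p : (α × α) × List α => localImage f p.1.1 p.1.2 p.2) S
      (words m : Finset (List α)) := fun p hp => by simp_all [S]
  calc ∑ u ∈ words m, #(preimages f u)
      = ∑ u ∈ words m, #{p ∈ S | localImage f p.1.1 p.1.2 p.2 = u} :=
        sum_congr rfl fun u hu => by rw [preimages, mem_words.1 hu]
    _ = #S := (card_eq_sum_card_fiberwise hmaps).symm
    _ = Fintype.card α ^ (m + 2) := by
        rw [card_product, card_univ, card_words, Fintype.card_prod]; ring

theorem sum_card_preimages_cons (u : List α) :
    ∑ t, #(preimages f (t :: u)) = Fintype.card α * #(preimages f u) := by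
  have h : univ.biUnion (fun t => preimages f (t :: u)) =
      (univ ×ˢ preimages f u).image fun q => ((q.1, q.2.1.1), q.2.1.2 :: q.2.2) := by
    ext ⟨⟨a, b⟩, w⟩
    cases w with
    | nil => simp
    | cons c v => simp
  rw [← card_biUnion fun t _ t' _ htt' => disjoint_preimages f (by simpa using htt'), h,
    card_image_of_injective _ fun q q' hq => by simpa [Prod.ext_iff, and_assoc] using hq,
    card_product, card_univ]

theorem sum_card_preimages_concat (u : List α) :
    ∑ t, #(preimages f (u ++ [t])) = #(preimages f u) * Fintype.card α := by
  have h : univ.biUnion (fun t => preimages f (u ++ [t])) =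
      (preimages f u ×ˢ univ).image fun q => (q.1.1, q.1.2 ++ [q.2]) := by
    ext ⟨⟨a, b⟩, w⟩
    rcases w.eq_nil_or_concat with rfl | ⟨v, c, rfl⟩
    · simp
    · simp [localImage_append]
  rw [← card_biUnion fun t _ t' _ htt' => disjoint_preimages f (by simpa using htt'), h,
    card_image_of_injective _ fun q q' hq => by simpa [Prod.ext_iff, and_assoc] using hq,
    card_product, card_univ]

end LocalRule

section Balance

variable {α : Type*} [Fintype α] [DecidableEq α] {f : α → α → α → α}

theorem Interchangeable.eq (hpre : ∀ u, (preimages f u).Nonempty) {x y : List α}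
    (hxy : Interchangeable f x y) (hlen : x.length = y.length) : x = y := by
  by_contra hne
  let swap : List α → List α := fun z => if z = y then x else z
  have hswap : ∀ z, Interchangeable f (swap z) z := fun z => by
    by_cases h : z = y
    · simpa [swap, h] using hxy
    · simpa [swap, h] using Interchangeable.refl f z
  have hswap_mem : ∀ z ∈ words y.length, swap z ∈ (words y.length).erase y := fun z hz => by
    by_cases h : z = y
    · simpa [swap, h, hne] using hlen
    · simpa [swap, h] using hz
  obtain ⟨k, hk⟩ := exists_mul_card_listsOfLength_erase_lt (Fintype.card (α × α)) y
  let D : Finset ((α × α) × List (List α)) :=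
    univ ×ˢ listsOfLength ((words y.length).erase y) k
  have hsurj : Set.SurjOn
      (fun p : (α × α) × List (List α) => localImage f p.1.1 p.1.2 p.2.flatten) D
      (words (k * y.length) : Finset (List α)) := by
    intro z hz
    obtain ⟨⟨⟨a, b⟩, v⟩, hv⟩ := hpre z
    rw [mem_preimages] at hv
    obtain ⟨L, hL, rfl⟩ := exists_flatten_eq (k := k) (W := y.length) (v := v)
      (by rw [← length_localImage f a b v, hv]; simpa using hz)
    rw [mem_listsOfLength] at hL
    refine ⟨((a, b), L.map swap), ?_, (interchangeable_flatten_map f hswap L a b).1.trans hv⟩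
    simp only [D, coe_product, coe_univ, Set.univ_prod, Set.mem_preimage, mem_coe,
      mem_listsOfLength, List.length_map, hL.1, List.forall_mem_map, true_and]
    exact fun z hz => hswap_mem z (hL.2 z hz)
  have := card_le_card_of_surjOn _ hsurj
  simp only [D, card_product, card_univ] at this
  omega

theorem eq_of_localImage_eq_of_lastPair_eq (hpre : ∀ u, (preimages f u).Nonempty) {a b : α}
    {v v' : List α} (h : localImage f a b v = localImage f a b v')
    (h' : lastPair a b v = lastPair a b v') : v = v' := by
  have : Interchangeable f (a :: b :: v) (a :: b :: v') := fun _ _ => by simp [h, h']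
  simpa using this.eq hpre (by simp [← length_localImage f a b v, h])

theorem card_preimages_le (hpre : ∀ u, (preimages f u).Nonempty) (u : List α) :
    #(preimages f u) ≤ Fintype.card α ^ 4 := by
  have hinj : Set.InjOn (fun p : (α × α) × List α => (p.1, lastPair p.1.1 p.1.2 p.2))
      ↑(preimages f u) := by
    rintro ⟨s, v⟩ hv ⟨s', v'⟩ hv' h
    simp only [Prod.mk.injEq] at h
    obtain ⟨rfl, h⟩ := h
    simp only [mem_coe, mem_preimages] at hv hv'
    rw [eq_of_localImage_eq_of_lastPair_eq hpre (hv.trans hv'.symm) h]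
  calc #(preimages f u) ≤ #(univ : Finset ((α × α) × α × α)) :=
        card_le_card_of_injOn _ (fun _ _ => mem_coe.2 (mem_univ _)) hinj
    _ = Fintype.card α ^ 4 := by simp [Fintype.card_prod]; ring

theorem card_preimages_eq_of_infix {w z : List α}
    (hmax : ∀ z, #(preimages f z) ≤ #(preimages f w)) (hwz : w <:+: z) :
    #(preimages f z) = #(preimages f w) := by
  set M := #(preimages f w)
  have hcons : ∀ z, #(preimages f z) = M → ∀ t, #(preimages f (t :: z)) = M := by
    intro z hz
    have := sum_card_preimages_cons f z
    rw [hz, ← smul_eq_mul, ← card_univ, ← sum_const] at this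
    exact fun t => (sum_eq_sum_iff_of_le fun t _ => hmax (t :: z)).1 this t (mem_univ t)
  have hconcat : ∀ z, #(preimages f z) = M → ∀ t, #(preimages f (z ++ [t])) = M := by
    intro z hz
    have := sum_card_preimages_concat f z
    rw [hz, mul_comm, ← smul_eq_mul, ← card_univ, ← sum_const] at this
    exact fun t => (sum_eq_sum_iff_of_le fun t _ => hmax (z ++ [t])).1 this t (mem_univ t)
  obtain ⟨s, t, rfl⟩ := hwz
  induction t using List.reverseRecOn with
  | nil =>
    induction s with
    | nil => simp [M]
    | cons a s ih => simpa using hcons _ ih a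
  | append_singleton t a ih => simpa using hconcat _ ih a

theorem card_preimages_le_of_forall_le {w : List α}
    (hmax : ∀ z, #(preimages f z) ≤ #(preimages f w)) :
    #(preimages f w) ≤ Fintype.card α ^ 2 := by
  set M := #(preimages f w)
  by_contra! hM
  obtain ⟨k, hk⟩ := exists_mul_card_listsOfLength_erase_lt M w
  have hsum : M * #{z ∈ words (k * w.length) | w <:+: z} ≤
      Fintype.card α ^ 2 * #(words (k * w.length) : Finset (List α)) := by
    calc M * #{z ∈ words (k * w.length) | w <:+: z}
        = ∑ z ∈ words (k * w.length) with w <:+: z, #(preimages f z) := by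
          rw [sum_congr rfl fun z hz => card_preimages_eq_of_infix hmax (mem_filter.1 hz).2,
            sum_const, smul_eq_mul, mul_comm]
      _ ≤ ∑ z ∈ words (k * w.length), #(preimages f z) :=
          sum_le_sum_of_subset (filter_subset _ _)
      _ = Fintype.card α ^ 2 * #(words (k * w.length) : Finset (List α)) := by
          rw [sum_card_preimages, card_words, pow_add, mul_comm]
  have havoid := Nat.mul_le_mul_left M (card_filter_not_infix_le w k)
  have hsplit := card_filter_add_card_filter_not (s := words (k * w.length)) (w <:+: ·)
  have hgrow := Nat.mul_le_mul_right #(words (k * w.length) : Finset (List α)) hM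
  nlinarith

theorem card_preimages_eq (hpre : ∀ u, (preimages f u).Nonempty) (u : List α) :
    #(preimages f u) = Fintype.card α ^ 2 := by
  have hbdd : BddAbove (Set.range fun z => #(preimages f z)) :=
    ⟨_, Set.forall_mem_range.2 (card_preimages_le hpre)⟩
  obtain ⟨w, hw⟩ := Nat.sSup_mem (Set.range_nonempty _) hbdd
  have hmax : ∀ z, #(preimages f z) ≤ #(preimages f w) := fun z =>
    (le_csSup hbdd ⟨z, rfl⟩).trans_eq hw.symm
  have hle : ∀ z ∈ words u.length, #(preimages f z) ≤ Fintype.card α ^ 2 :=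
    fun z _ => (hmax z).trans (card_preimages_le_of_forall_le hmax)
  have hsum : ∑ z ∈ words u.length, #(preimages f z) =
      ∑ z ∈ (words u.length : Finset (List α)), Fintype.card α ^ 2 := by
    rw [sum_card_preimages, sum_const, card_words (α := α), smul_eq_mul, pow_add, mul_comm]
  exact (sum_eq_sum_iff_of_le hle).1 hsum u (by simp)

end Balance

section Cylinders

variable {α : Type*}

def window (x : ℤ → α) (i : ℤ) (n : ℕ) : List α := List.ofFn fun j : Fin n => x (i + j)

def cylinderAt (i : ℤ) (u : List α) : Set (ℤ → α) := {x | window x i u.length = u}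

@[simp] theorem length_window (x : ℤ → α) (i : ℤ) (n : ℕ) : (window x i n).length = n :=
  List.length_ofFn

theorem window_succ (x : ℤ → α) (i : ℤ) (n : ℕ) :
    window x i (n + 1) = x i :: window x (i + 1) n := by
  simp [window, List.ofFn_succ, add_assoc, add_comm (1 : ℤ)]

theorem window_eq_window_iff {x y : ℤ → α} {i : ℤ} {n : ℕ} :
    window x i n = window y i n ↔ ∀ j : Fin n, x (i + j) = y (i + j) := by
  simp [window, funext_iff]

theorem mem_cylinderAt {x : ℤ → α} {i : ℤ} {u : List α} :
    x ∈ cylinderAt i u ↔ ∀ j : Fin u.length, x (i + j) = u[j] := by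
  have hu : u = List.ofFn fun j : Fin u.length => u[j] := List.ofFn_getElem.symm
  rw [cylinderAt, Set.mem_ofPred_eq, window]
  conv_lhs => rhs; rw [hu]
  rw [List.ofFn_inj, funext_iff]

@[simp] theorem cylinderAt_nil (i : ℤ) : cylinderAt i ([] : List α) = Set.univ := by
  ext; simp [mem_cylinderAt]

theorem measurableSet_cylinderAt [MeasurableSpace α] [MeasurableSingletonClass α] (i : ℤ)
    (u : List α) : MeasurableSet (cylinderAt i u) := by
  have : cylinderAt i u =
      ⋂ j : Fin u.length, (fun x : ℤ → α => x (i + j)) ⁻¹' {u[j]} := by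
    ext x
    simp [mem_cylinderAt]
  rw [this]
  exact .iInter fun j => measurable_pi_apply _ (measurableSet_singleton _)

theorem disjoint_cylinderAt {i : ℤ} {u v : List α} (h : u.length = v.length) (hne : u ≠ v) :
    Disjoint (cylinderAt i u) (cylinderAt i v) :=
  Set.disjoint_left.2 fun _ hu hv => hne (hu.symm.trans (h ▸ hv))

theorem measure_eq_of_forall_cylinderAt [Fintype α] [MeasurableSpace α]
    [MeasurableSingletonClass α] {ν₁ ν₂ : Measure (ℤ → α)} {i : ℤ} {L : ℕ}
    {A : Set (ℤ → α)}
    (h : ∀ u, ν₁ (cylinderAt i u) = ν₂ (cylinderAt i u))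
    (hA : ∀ x y, window x i L = window y i L → x ∈ A → y ∈ A) : ν₁ A = ν₂ A := by
  classical
  let T : Finset (List α) := {u ∈ words L | cylinderAt i u ⊆ A}
  have hunion : A = ⋃ u ∈ T, cylinderAt i u := by
    refine subset_antisymm (fun x hx => ?_) (Set.iUnion₂_subset fun u hu => (mem_filter.1 hu).2)
    refine Set.mem_biUnion (x := window x i L) (mem_filter.2 ⟨by simp [window], ?_⟩) ?_
    · exact fun y hy => hA x y (by simpa [window] using hy.symm) hx
    · simp [cylinderAt, window]
  have hdisj : (T : Set (List α)).PairwiseDisjoint (cylinderAt i) := fun u hu v hv huv => by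
    simp only [T, coe_filter, mem_words, Set.mem_ofPred_eq] at hu hv
    exact disjoint_cylinderAt (hu.1.trans hv.1.symm) huv
  rw [hunion, measure_biUnion_finset hdisj fun u _ => measurableSet_cylinderAt i u,
    measure_biUnion_finset hdisj fun u _ => measurableSet_cylinderAt i u]
  exact sum_congr rfl fun u _ => h u

theorem ext_of_cylinderAt [Fintype α] [MeasurableSpace α] [MeasurableSingletonClass α]
    {ν₁ ν₂ : Measure (ℤ → α)} [IsFiniteMeasure ν₁]
    (h : ∀ i u, ν₁ (cylinderAt i u) = ν₂ (cylinderAt i u)) : ν₁ = ν₂ := by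
  refine ext_of_generate_finite _ generateFrom_measurableCylinders.symm
    isPiSystem_measurableCylinders (fun A hA => ?_) (by simpa using h 0 [])
  obtain ⟨s, S, -, rfl⟩ := (mem_measurableCylinders A).1 hA
  set N : ℕ := s.sup Int.natAbs
  refine measure_eq_of_forall_cylinderAt (h (-N)) (L := 2 * N + 1) fun x y hxy hx => ?_
  rw [mem_cylinder] at hx ⊢
  convert hx using 1
  ext ⟨k, hk⟩
  have hkN : k.natAbs ≤ N := le_sup (f := Int.natAbs) hk
  have := (window_eq_window_iff.1 hxy ⟨(k + N).toNat, by omega⟩)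
  simp only at this
  rw [show -(N : ℤ) + (k + N).toNat = k by omega] at this
  exact this.symm

end Cylinders

section ElementaryCA

variable {f : Bool → Bool → Bool → Bool}

theorem window_eca (x : ℤ → Bool) (i : ℤ) (n : ℕ) :
    window (eca f x) i n = localImage f (x (i - 1)) (x i) (window x (i + 1) n) := by
  induction n generalizing i with
  | zero => rfl
  | succ n ih => simp [window_succ, ih, eca]

theorem preimage_eca_cylinderAt (i : ℤ) (u : List Bool) :
    eca f ⁻¹' cylinderAt i u =
      ⋃ p ∈ preimages f u, cylinderAt (i - 1) (p.1.1 :: p.1.2 :: p.2) := by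
  ext x
  simp only [Set.mem_preimage, Set.mem_iUnion, exists_prop]
  constructor
  · intro hx
    refine ⟨((x (i - 1), x i), window x (i + 1) u.length), ?_, ?_⟩
    · rw [mem_preimages, ← window_eca]
      exact hx
    · simp [cylinderAt, window_succ]
  · rintro ⟨⟨⟨a, b⟩, v⟩, hp, hx⟩
    rw [mem_preimages] at hp
    have hv : v.length = u.length := by rw [← hp, length_localImage]
    simp only [cylinderAt, List.length_cons, hv, window_succ, sub_add_cancel, List.cons.injEq,
      Set.mem_ofPred_eq] at hx
    obtain ⟨rfl, rfl, rfl⟩ := hx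
    rw [cylinderAt, Set.mem_ofPred_eq, window_eca]
    exact hp

theorem preimages_nonempty_of_surjective (hsurj : Function.Surjective (eca f))
    (u : List Bool) : (preimages f u).Nonempty := by
  obtain ⟨x, hx⟩ := hsurj fun k => u.getD k.toNat false
  have : x ∈ eca f ⁻¹' cylinderAt 0 u := by
    rw [Set.mem_preimage, hx, mem_cylinderAt]
    simp
  rw [preimage_eca_cylinderAt] at this
  obtain ⟨p, hp, -⟩ := Set.mem_iUnion₂.1 this
  exact ⟨p, hp⟩

theorem measurable_eca : Measurable (eca f) :=
  measurable_pi_lambda _ fun i =>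
    (measurable_of_countable fun q : Bool × Bool × Bool => f q.1 q.2.1 q.2.2).comp
      (by fun_prop : Measurable fun x : ℤ → Bool => (x (i - 1), x i, x (i + 1)))

variable {μ : Measure (ℤ → Bool)}

theorem IsBernoulli.measure_setOf_forall_eq (hber : IsBernoulli (1 / 2) μ) (s : Finset ℤ)
    (g : ℤ → Bool) : μ {x | ∀ i ∈ s, x i = g i} = 2⁻¹ ^ #s := by
  have : ENNReal.ofReal (1 / 2) = 2⁻¹ := by
    rw [one_div, ENNReal.ofReal_inv_of_pos two_pos, ENNReal.ofReal_ofNat]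
  rw [hber, show (1 : ℝ) - 1 / 2 = 1 / 2 by norm_num, this]
  simp

theorem measure_cylinderAt (hber : IsBernoulli (1 / 2) μ) (i : ℤ) (u : List Bool) :
    μ (cylinderAt i u) = 2⁻¹ ^ u.length := by
  have hinj : Function.Injective fun j : Fin u.length => i + (j : ℤ) := fun j j' h => by
    simp_all [Fin.ext_iff]
  have : cylinderAt i u = {x | ∀ k ∈ univ.image fun j : Fin u.length => i + (j : ℤ),
      x k = u.getD (k - i).toNat false} := by
    ext x
    simp [mem_cylinderAt]
  rw [this, hber.measure_setOf_forall_eq, card_image_of_injective _ hinj, card_univ,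
    Fintype.card_fin]

theorem measure_preimage_eca_cylinderAt (hsurj : Function.Surjective (eca f))
    (hber : IsBernoulli (1 / 2) μ) (i : ℤ) (u : List Bool) :
    μ (eca f ⁻¹' cylinderAt i u) = 2⁻¹ ^ u.length := by
  have hdisj : (preimages f u : Set ((Bool × Bool) × List Bool)).PairwiseDisjoint
      fun p => cylinderAt (i - 1) (p.1.1 :: p.1.2 :: p.2) := by
    rintro ⟨⟨a, b⟩, v⟩ hp ⟨⟨a', b'⟩, v'⟩ hp' hne
    refine disjoint_cylinderAt ?_ (by simpa [and_assoc] using hne)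
    simp [length_eq_of_mem_preimages f hp, length_eq_of_mem_preimages f hp']
  rw [preimage_eca_cylinderAt,
    measure_biUnion_finset hdisj fun _ _ => measurableSet_cylinderAt _ _]
  calc ∑ p ∈ preimages f u, μ (cylinderAt (i - 1) (p.1.1 :: p.1.2 :: p.2))
      = ∑ p ∈ preimages f u, (2⁻¹ : ENNReal) ^ (u.length + 2) := sum_congr rfl fun p hp => by
        rw [measure_cylinderAt hber, List.length_cons, List.length_cons,
          length_eq_of_mem_preimages f hp]
    _ = 2⁻¹ ^ u.length := by
        rw [sum_const, card_preimages_eq (preimages_nonempty_of_surjective hsurj),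
          Fintype.card_bool, nsmul_eq_mul, pow_add, mul_left_comm, Nat.cast_pow, Nat.cast_ofNat,
          ← mul_pow, ENNReal.mul_inv_cancel two_ne_zero ENNReal.ofNat_ne_top, one_pow, mul_one]

theorem map_eca_eq [IsFiniteMeasure μ] (hsurj : Function.Surjective (eca f))
    (hber : IsBernoulli (1 / 2) μ) : μ.map (eca f) = μ := by
  refine ext_of_cylinderAt fun i u => ?_
  rw [Measure.map_apply measurable_eca (measurableSet_cylinderAt i u),
    measure_preimage_eca_cylinderAt hsurj hber, measure_cylinderAt hber]

theorem cylinder_eq_cylinderAt (b : List Bool) : _root_.cylinder b = cylinderAt 0 b := by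
  ext x
  simp [_root_.cylinder, mem_cylinderAt]

end ElementaryCA

/-- an ECA with surjective global map preserves the symmetric Bernoulli
measure `μ_{1/2}`; consequently `P_n(b) = 2^{-|b|}` for every word `b` and every `n`. -/
theorem surjective_eca_preserves_symmetric_bernoulli
    (f : Bool → Bool → Bool → Bool) (hsurj : Function.Surjective (eca f))
    (μ : Measure (ℤ → Bool)) (hprob : IsProbabilityMeasure μ)
    (hber : IsBernoulli (1 / 2) μ) :
    μ.map (eca f) = μ ∧
      ∀ (n : ℕ) (b : List Bool),
        μ ((eca f)^[n] ⁻¹' cylinder b) = (2 : ENNReal)⁻¹ ^ b.length := by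
  have hF : MeasurePreserving (eca f) μ μ := ⟨measurable_eca, map_eca_eq hsurj hber⟩
  refine ⟨hF.map_eq, fun n b => ?_⟩
  rw [cylinder_eq_cylinderAt,
    (hF.iterate n).measure_preimage (measurableSet_cylinderAt 0 b).nullMeasurableSet]
  exact measure_cylinderAt hber 0 b
end

section
/- Let F be the global map of ECA rule 14 and let μ be any shift-invariant probability measure on ℤ → Bool, with P(b) = μ([b]). Then the block probabilities after one application of F satisfy the exact recurrences: μ(F⁻¹([0])) = 1 − P(0) + P(000) and μ(F⁻¹([00])) = 1 − 2·P(0) + P(00) + P(000). -/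
open MeasureTheory

/-- The shift map on bi-infinite binary sequences. -/
def shiftZ (x : ℤ → Bool) : ℤ → Bool := fun i => x (i + 1)

/-- The local rule of ECA rule 14: `f(x1,x2,x3) = 1` exactly for
`(x1,x2,x3) ∈ {(0,0,1),(0,1,0),(0,1,1)}`. -/
def rule14 (x1 x2 x3 : Bool) : Bool := !x1 && (x2 || x3)

/-- Coordinate event. -/
def E (k : ℤ) (v : Bool) : Set (ℤ → Bool) := {x | x k = v}

lemma meas_E (k : ℤ) (v : Bool) : MeasurableSet (E k v) := by
  have h : E k v = (fun x : ℤ → Bool => x k) ⁻¹' {v} := by ext x; simp [E]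
  rw [h]
  exact (measurable_pi_apply k) (measurableSet_singleton v)

lemma shiftZ_measurable : Measurable shiftZ :=
  measurable_pi_lambda _ (fun i => measurable_pi_apply (i + 1))

lemma cyl_f : cylinder [false] = E 0 false := by
  ext x
  simp [_root_.cylinder, E, Fin.forall_fin_succ]

lemma cyl_ff : cylinder [false, false] = E 0 false ∩ E 1 false := by
  ext x
  simp [_root_.cylinder, E, Fin.forall_fin_succ, and_assoc]

lemma cyl_tt : cylinder [true, true] = E 0 true ∩ E 1 true := by
  ext x
  simp [_root_.cylinder, E, Fin.forall_fin_succ, and_assoc]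

lemma cyl_fff : cylinder [false, false, false] = E 0 false ∩ (E 1 false ∩ E 2 false) := by
  ext x
  simp [_root_.cylinder, E, Fin.forall_fin_succ, and_assoc]

/-- for ECA rule 14 and any shift-invariant probability measure `μ`,
the block probabilities after one application of the global map `F` satisfy
`μ(F⁻¹[0]) = 1 − P(0) + P(000)` and `μ(F⁻¹[00]) = 1 − 2·P(0) + P(00) + P(000)`. -/
theorem rule14_one_step_recurrences
    (μ : Measure (ℤ → Bool)) (hprob : IsProbabilityMeasure μ)
    (hshift : μ.map shiftZ = μ)
    (P : List Bool → ℝ) (hP : ∀ b : List Bool, P b = (μ (cylinder b)).toReal) :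
    (μ (eca rule14 ⁻¹' cylinder [false])).toReal
        = 1 - P [false] + P [false, false, false] ∧
    (μ (eca rule14 ⁻¹' cylinder [false, false])).toReal
        = 1 - 2 * P [false] + P [false, false] + P [false, false, false] := by
  -- shift invariance
  have hμS : ∀ A : Set (ℤ → Bool), MeasurableSet A → μ (shiftZ ⁻¹' A) = μ A := by
    intro A hA
    conv_rhs => rw [← hshift]
    rw [Measure.map_apply shiftZ_measurable hA]
  -- basic shifted coordinate facts
  have hE1 : μ (E 0 false) = μ (E (-1) false) := by
    have h := hμS (E (-1) false) (meas_E _ _)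
    have hpre : shiftZ ⁻¹' (E (-1) false) = E 0 false := by
      ext x; simp [E, shiftZ]
    rwa [hpre] at h
  have hE2 : μ (E 1 false) = μ (E 0 false) := by
    have h := hμS (E 0 false) (meas_E _ _)
    have hpre : shiftZ ⁻¹' (E 0 false) = E 1 false := by
      ext x; simp [E, shiftZ]
    rwa [hpre] at h
  -- finiteness / toReal helpers
  have hfin : ∀ A : Set (ℤ → Bool), μ A ≠ ⊤ := fun A => measure_ne_top μ A
  -- abbreviation
  set p : Set (ℤ → Bool) → ℝ := fun A => (μ A).toReal with hp
  have hadd : ∀ A B : Set (ℤ → Bool), Disjoint A B → MeasurableSet B →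
      p (A ∪ B) = p A + p B := by
    intro A B hAB hB
    rw [hp]
    simp only
    rw [measure_union hAB hB, ENNReal.toReal_add (hfin A) (hfin B)]
  -- complement of E(-1) true
  have hcompl : p (E (-1) true) = 1 - p (E (-1) false) := by
    have h := measure_add_measure_compl (μ := μ) (meas_E (-1) true)
    have hc : (E (-1) true)ᶜ = E (-1) false := by
      ext x; simp [E]
    rw [hc, measure_univ] at h
    have := congrArg ENNReal.toReal h
    rw [ENNReal.toReal_add (hfin _) (hfin _), ENNReal.toReal_one] at this
    simp only [hp]
    linarith
  -- part 1
  have hS1 : eca rule14 ⁻¹' cylinder [false]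
      = E (-1) true ∪ (E (-1) false ∩ (E 0 false ∩ E 1 false)) := by
    ext x
    simp only [Set.mem_preimage, cyl_f, E, eca, rule14, Set.mem_setOf_eq, Set.mem_union,
      Set.mem_inter_iff]
    all_goals norm_num
    cases h1 : x (-1) <;> cases h2 : x 0 <;> cases h3 : x 1 <;> simp
  have hB1 : μ (E (-1) false ∩ (E 0 false ∩ E 1 false)) = μ (cylinder [false, false, false]) := by
    have h := hμS (E (-1) false ∩ (E 0 false ∩ E 1 false))
      ((meas_E _ _).inter ((meas_E _ _).inter (meas_E _ _)))
    have hpre : shiftZ ⁻¹' (E (-1) false ∩ (E 0 false ∩ E 1 false))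
        = E 0 false ∩ (E 1 false ∩ E 2 false) := by
      ext x; simp [E, shiftZ]
    rw [hpre] at h
    rw [cyl_fff, h]
  have hdisj1 : Disjoint (E (-1) true) (E (-1) false ∩ (E 0 false ∩ E 1 false)) := by
    rw [Set.disjoint_left]
    rintro x hx ⟨hx', -⟩
    simp [E] at hx hx'
    rw [hx] at hx'; exact Bool.noConfusion hx'
  have part1 : p (eca rule14 ⁻¹' cylinder [false])
      = 1 - P [false] + P [false, false, false] := by
    rw [hS1, hadd _ _ hdisj1 ((meas_E _ _).inter ((meas_E _ _).inter (meas_E _ _))), hcompl]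
    have e1 : p (E (-1) false) = P [false] := by
      simp only [hp, hP, cyl_f, hE1]
    have e2 : p (E (-1) false ∩ (E 0 false ∩ E 1 false)) = P [false, false, false] := by
      simp only [hp, hP]
      rw [hB1]
    rw [e1, e2]
  -- part 2
  have hS2 : eca rule14 ⁻¹' cylinder [false, false]
      = (E (-1) true ∩ E 0 true) ∪ (E 0 false ∩ (E 1 false ∩ E 2 false)) := by
    ext x
    simp only [Set.mem_preimage, cyl_ff, E, eca, rule14, Set.mem_setOf_eq, Set.mem_union,
      Set.mem_inter_iff]
    all_goals norm_num
    cases h1 : x (-1) <;> cases h2 : x 0 <;> cases h3 : x 1 <;> cases h4 : x 2 <;> simp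
  have hA2 : μ (E (-1) true ∩ E 0 true) = μ (cylinder [true, true]) := by
    have h := hμS (E (-1) true ∩ E 0 true) ((meas_E _ _).inter (meas_E _ _))
    have hpre : shiftZ ⁻¹' (E (-1) true ∩ E 0 true) = E 0 true ∩ E 1 true := by
      ext x; simp [E, shiftZ]
    rw [hpre] at h
    rw [cyl_tt, h]
  have hdisj2 : Disjoint (E (-1) true ∩ E 0 true) (E 0 false ∩ (E 1 false ∩ E 2 false)) := by
    rw [Set.disjoint_left]
    rintro x ⟨-, hx⟩ ⟨hx', -⟩
    simp [E] at hx hx'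
    rw [hx] at hx'; exact Bool.noConfusion hx'
  -- P(11) = 1 - 2 P(0) + P(00)
  have hPtt : p (cylinder [true, true]) = 1 - 2 * P [false] + P [false, false] := by
    have hIE := measure_union_add_inter (μ := μ) (E 0 false) (meas_E 1 false)
    have hcompl2 : (E 0 true ∩ E 1 true)ᶜ = E 0 false ∪ E 1 false := by
      ext x
      simp [E]
      cases h2 : x 0 <;> cases h3 : x 1 <;> simp
    have h := measure_add_measure_compl (μ := μ) ((meas_E 0 true).inter (meas_E 1 true))
    rw [hcompl2, measure_univ] at h
    have h' := congrArg ENNReal.toReal h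
    rw [ENNReal.toReal_add (hfin _) (hfin _), ENNReal.toReal_one] at h'
    have hIE' := congrArg ENNReal.toReal hIE
    rw [ENNReal.toReal_add (hfin _) (hfin _), ENNReal.toReal_add (hfin _) (hfin _)] at hIE'
    have e0 : (μ (E 0 false)).toReal = P [false] := by rw [hP, cyl_f]
    have e1' : (μ (E 1 false)).toReal = P [false] := by rw [hP, cyl_f, hE2]
    have e00 : (μ (E 0 false ∩ E 1 false)).toReal = P [false, false] := by
      rw [hP, cyl_ff]
    rw [e0, e1', e00] at hIE'
    simp only [hp, cyl_tt]
    linarith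
  have part2 : p (eca rule14 ⁻¹' cylinder [false, false])
      = 1 - 2 * P [false] + P [false, false] + P [false, false, false] := by
    rw [hS2, hadd _ _ hdisj2 ((meas_E _ _).inter ((meas_E _ _).inter (meas_E _ _)))]
    have e2 : p (E 0 false ∩ (E 1 false ∩ E 2 false)) = P [false, false, false] := by
      simp only [hp, hP, cyl_fff]
    have e1 : p (E (-1) true ∩ E 0 true) = 1 - 2 * P [false] + P [false, false] := by
      simp only [hp]
      rw [hA2]
      exact hPtt
    rw [e1, e2]
  exact ⟨part1, part2⟩
end

section
/- Let f be the local rule of ECA rule 130 and f̂ its block evolution operator. Then for every n ≥ 1: (i) the n-fold preimage set f̂^{−n}(111) contains exactly one word, namely the all-ones word of length 2n+3; and (ii) a binary word b of length 2n+3 belongs to f̂^{−n}(001) if and only if there exists i ∈ {0,1,…,n} such that: the first 2n−2i symbols of b are arbitrary, the next three symbols are 1,0,1 if i is odd and 0,0,1 if i is even, and the last 2i symbols are all 1. -/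
/-- The local rule of ECA rule 130: `f(x1,x2,x3) = 1` exactly for
`(x1,x2,x3) ∈ {(0,0,1),(1,1,1)}`. -/
def rule130 (x1 x2 x3 : Bool) : Bool := x3 && (x1 == x2)

/-- The block evolution operator of the local rule `f`: it maps a word
`a_0 … a_{m-1}` (with `m ≥ 3`) to the word of length `m-2` whose `j`-th symbol is
`f (a_j) (a_{j+1}) (a_{j+2})`. -/
def blockOp (f : Bool → Bool → Bool → Bool) (a : List Bool) : List Bool :=
  (List.range (a.length - 2)).map fun i =>
    f (a.getD i false) (a.getD (i + 1) false) (a.getD (i + 2) false)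

/-- The set `f̂⁻ⁿ(a)` of `n`-step preimages of the word `a` under the block
evolution operator of `f`: words of length `|a| + 2n` mapped to `a` by `f̂ⁿ`. -/
def preimSet (f : Bool → Bool → Bool → Bool) (n : ℕ) (a : List Bool) : Set (List Bool) :=
  {b | b.length = a.length + 2 * n ∧ (blockOp f)^[n] b = a}

lemma blockOp_length (f : Bool → Bool → Bool → Bool) (a : List Bool) :
    (blockOp f a).length = a.length - 2 := by
  simp [blockOp]

lemma blockOp_getD (f : Bool → Bool → Bool → Bool) (a : List Bool) (j : ℕ)
    (h : j < a.length - 2) :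
    (blockOp f a).getD j false
      = f (a.getD j false) (a.getD (j+1) false) (a.getD (j+2) false) := by
  rw [List.getD_eq_getElem _ _ (by simpa [blockOp_length] using h)]
  simp [blockOp]

lemma mem_preim_succ (f : Bool → Bool → Bool → Bool) (n : ℕ) (a b : List Bool) :
    b ∈ preimSet f (n+1) a ↔
      b.length = a.length + 2*(n+1) ∧ blockOp f b ∈ preimSet f n a := by
  unfold preimSet
  simp only [Set.mem_setOf_eq, Function.iterate_succ_apply, blockOp_length]
  constructor
  · rintro ⟨h1, h2⟩; exact ⟨h1, by omega, h2⟩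
  · rintro ⟨h1, _, h2⟩; exact ⟨h1, h2⟩

lemma eq_iff_forall_getD (b c : List Bool) (h : b.length = c.length) :
    b = c ↔ ∀ j < b.length, b.getD j false = c.getD j false := by
  constructor
  · rintro rfl; intros; rfl
  · intro hj
    apply List.ext_getElem h
    intro i h1 h2
    have := hj i h1
    rwa [List.getD_eq_getElem _ _ h1, List.getD_eq_getElem _ _ h2] at this

lemma getD_replicate (m : ℕ) (j : ℕ) (h : j < m) :
    (List.replicate m true).getD j false = true := by
  rw [List.getD_eq_getElem _ _ (by simpa using h)]
  simp

lemma blockOp_eq_replicate_iff (m : ℕ) (hm : 2 ≤ m) (b : List Bool)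
    (hb : b.length = m + 2) :
    blockOp rule130 b = List.replicate m true ↔ b = List.replicate (m+2) true := by
  constructor
  · intro h
    have key : ∀ j < m, b.getD (j+2) false = true ∧ b.getD j false = b.getD (j+1) false := by
      intro j hj
      have h1 : (blockOp rule130 b).getD j false = true := by
        rw [h]; exact getD_replicate m j hj
      rw [blockOp_getD rule130 b j (by omega)] at h1
      simpa [rule130, Bool.and_eq_true, beq_iff_eq] using h1
    have all : ∀ k < m + 2, b.getD k false = true := by
      intro k hk
      rcases Nat.lt_or_ge k 2 with h2 | h2
      · have e01 : b.getD 0 false = b.getD 1 false := (key 0 (by omega)).2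
        have e12 : b.getD 1 false = b.getD 2 false := (key 1 (by omega)).2
        have e2 : b.getD 2 false = true := (key 0 (by omega)).1
        interval_cases k
        · rw [e01, e12]; exact e2
        · rw [e12]; exact e2
      · have := (key (k - 2) (by omega)).1
        rwa [Nat.sub_add_cancel h2] at this
    rw [eq_iff_forall_getD _ _ (by simp [hb])]
    intro j hj
    rw [all j (by omega), getD_replicate (m+2) j (by omega)]
  · rintro rfl
    rw [eq_iff_forall_getD _ _ (by simp [blockOp_length])]
    intro j hj
    rw [blockOp_length] at hj
    simp only [List.length_replicate] at hj
    rw [blockOp_getD _ _ _ (by simpa using hj)]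
    rw [getD_replicate _ _ (by omega), getD_replicate _ _ (by omega),
        getD_replicate _ _ (by omega), getD_replicate _ _ (by omega)]
    rfl

lemma preim_ones : ∀ n : ℕ, ∀ b : List Bool,
    b ∈ preimSet rule130 n [true, true, true] ↔ b = List.replicate (2*n+3) true := by
  intro n
  induction n with
  | zero =>
    intro b
    simp only [preimSet, Set.mem_setOf_eq, Function.iterate_zero, id_eq]
    constructor
    · rintro ⟨-, rfl⟩; rfl
    · rintro rfl; exact ⟨rfl, rfl⟩
  | succ n ih =>
    intro b
    rw [mem_preim_succ]
    constructor
    · rintro ⟨hl, hmem⟩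
      have : blockOp rule130 b = List.replicate (2*n+3) true := (ih _).mp hmem
      have := (blockOp_eq_replicate_iff (2*n+3) (by omega) b (by simp at hl; omega)).mp this
      have e : 2*(n+1)+3 = (2*n+3)+2 := by omega
      rw [e]; exact this
    · rintro rfl
      have hl : (List.replicate (2*(n+1)+3) true).length = 2*(n+1)+3 := by simp
      refine ⟨by simp; omega, (ih _).mpr ?_⟩
      have e2 : 2*(n+1)+3 = (2*n+3)+2 := by omega
      rw [e2]
      exact (blockOp_eq_replicate_iff (2*n+3) (by omega) _ (by simp)).mpr rfl

def P (n : ℕ) (b : List Bool) : Prop :=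
  ∃ i ≤ n, b.getD (2*n - 2*i) false = (if i % 2 = 1 then true else false) ∧
    b.getD (2*n - 2*i + 1) false = false ∧
    b.getD (2*n - 2*i + 2) false = true ∧
    ∀ j : ℕ, 2*n - 2*i + 3 ≤ j → j < 2*n + 3 → b.getD j false = true

lemma band_eq_true (x y z : Bool) : (z && (x == y)) = true ↔ (z = true ∧ x = y) := by
  cases x <;> cases y <;> cases z <;> simp

lemma band_eq_false (x y z : Bool) : (z && (x == y)) = false ↔ (z = false ∨ x ≠ y) := by
  cases x <;> cases y <;> cases z <;> simp

lemma step (n : ℕ) (b : List Bool) (hb : b.length = 2*n+5) :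
    P n (blockOp rule130 b) ↔ P (n+1) b := by
  have hc : ∀ j, j < 2*n+3 →
      (blockOp rule130 b).getD j false
        = ((b.getD (j+2) false) && ((b.getD j false) == (b.getD (j+1) false))) := by
    intro j hj
    rw [blockOp_getD rule130 b j (by omega)]
    rfl
  constructor
  · rintro ⟨i, hi, h1, h2, h3, h4⟩
    rw [hc _ (by omega)] at h1 h2 h3
    -- F3
    have hF3 := (band_eq_true _ _ _).mp h3
    have hF2 := (band_eq_false _ _ _).mp h2
    rcases Nat.eq_zero_or_pos i with rfl | hipos
    · -- i = 0
      simp only [Nat.mul_zero, Nat.sub_zero] at h1 h2 h3 h4 hF3 hF2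
      rw [if_neg (by norm_num)] at h1
      cases hx : b.getD (2*n+2) false
      · -- b_{2n+2} = false, so b_{2n+3} = false; witness i' = 0
        have h23 : b.getD (2*n+3) false = false := by rw [← hF3.2, hx]
        refine ⟨0, by omega, ?_, ?_, ?_, ?_⟩
        · have e : 2*(n+1) - 2*0 = 2*n+2 := by omega
          rw [e, hx]; norm_num
        · have e : 2*(n+1) - 2*0 + 1 = 2*n+3 := by omega
          rw [e, h23]
        · have e : 2*(n+1) - 2*0 + 2 = 2*n+4 := by omega
          rw [e]; exact hF3.1
        · intro j hj1 hj2; omega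
      · -- b_{2n+2} = true
        have h23 : b.getD (2*n+3) false = true := by rw [← hF3.2, hx]
        have h21 : b.getD (2*n+1) false = false := by
          rcases hF2 with h | h
          · rw [h23] at h; exact absurd h (by simp)
          · rw [hx] at h; cases hy : b.getD (2*n+1) false
            · rfl
            · exact absurd (by rw [hy]) h
        have h20 : b.getD (2*n) false = true := by
          rw [hx, h21] at h1
          cases hy : b.getD (2*n) false
          · rw [hy] at h1; exact absurd h1 (by simp)
          · rfl
        refine ⟨1, by omega, ?_, ?_, ?_, ?_⟩
        · have e : 2*(n+1) - 2*1 = 2*n := by omega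
          rw [e, h20]; norm_num
        · have e : 2*(n+1) - 2*1 + 1 = 2*n+1 := by omega
          rw [e, h21]
        · have e : 2*(n+1) - 2*1 + 2 = 2*n+2 := by omega
          rw [e, hx]
        · intro j hj1 hj2
          have e1 : 2*(n+1) - 2*1 + 3 = 2*n+3 := by omega
          rw [e1] at hj1
          have : j = 2*n+3 ∨ j = 2*n+4 := by omega
          rcases this with rfl | rfl
          · exact h23
          · exact hF3.1
    · -- i ≥ 1
      have hk3 : 2*n - 2*i + 3 < 2*n + 3 := by omega
      have hck3 := h4 (2*n - 2*i + 3) le_rfl hk3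
      rw [hc _ (by omega)] at hck3
      have hF4 := (band_eq_true _ _ _).mp hck3
      -- b_{k+4} = true
      have b4 : b.getD (2*n - 2*i + 4) false = true := hF3.1
      -- b_{k+3} = b_{k+4} = true
      have b3 : b.getD (2*n - 2*i + 3) false = true := by
        have e : 2*n - 2*i + 3 + 1 = 2*n - 2*i + 4 := by omega
        rw [hF4.2, e, b4]
      have b2 : b.getD (2*n - 2*i + 2) false = true := by rw [hF3.2, b3]
      have b1 : b.getD (2*n - 2*i + 1) false = false := by
        rcases hF2 with h | h
        · rw [b3] at h; exact absurd h (by simp)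
        · rw [b2] at h; cases hy : b.getD (2*n - 2*i + 1) false
          · rfl
          · exact absurd (by rw [hy]) h
      have tail : ∀ j, 2*n - 2*i + 3 ≤ j → j < 2*(n+1) + 3 → b.getD j false = true := by
        intro j hj1 hj2
        rcases Nat.lt_or_ge j (2*n - 2*i + 5) with h | h
        · have : j = 2*n - 2*i + 3 ∨ j = 2*n - 2*i + 4 := by omega
          rcases this with rfl | rfl
          · exact b3
          · exact b4
        · have hcj := h4 (j - 2) (by omega) (by omega)
          rw [hc _ (by omega)] at hcj
          have := ((band_eq_true _ _ _).mp hcj).1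
          have e : j - 2 + 2 = j := by omega
          rwa [e] at this
      rcases Nat.mod_two_eq_zero_or_one i with hpar | hpar
      · -- i even, p_i = false, so b_k = true, witness i+1 odd
        rw [hpar, if_neg (by norm_num)] at h1
        rw [b2, b1] at h1
        have b0 : b.getD (2*n - 2*i) false = true := by
          cases hy : b.getD (2*n - 2*i) false
          · rw [hy] at h1; exact absurd h1 (by simp)
          · rfl
        refine ⟨i+1, by omega, ?_, ?_, ?_, ?_⟩
        · have e : 2*(n+1) - 2*(i+1) = 2*n - 2*i := by omega
          have e2 : (i+1) % 2 = 1 := by omega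
          rw [e, e2, b0]; norm_num
        · have e : 2*(n+1) - 2*(i+1) + 1 = 2*n - 2*i + 1 := by omega
          rw [e, b1]
        · have e : 2*(n+1) - 2*(i+1) + 2 = 2*n - 2*i + 2 := by omega
          rw [e, b2]
        · have e : 2*(n+1) - 2*(i+1) + 3 = 2*n - 2*i + 3 := by omega
          rw [e]; exact tail
      · -- i odd, p_i = true, so b_k = false, witness i+1 even
        rw [hpar, if_pos rfl] at h1
        rw [b2, b1] at h1
        have b0 : b.getD (2*n - 2*i) false = false := by
          have := ((band_eq_true _ _ _).mp h1).2
          rw [this]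
        refine ⟨i+1, by omega, ?_, ?_, ?_, ?_⟩
        · have e : 2*(n+1) - 2*(i+1) = 2*n - 2*i := by omega
          have e2 : (i+1) % 2 = 0 := by omega
          rw [e, e2, b0]; norm_num
        · have e : 2*(n+1) - 2*(i+1) + 1 = 2*n - 2*i + 1 := by omega
          rw [e, b1]
        · have e : 2*(n+1) - 2*(i+1) + 2 = 2*n - 2*i + 2 := by omega
          rw [e, b2]
        · have e : 2*(n+1) - 2*(i+1) + 3 = 2*n - 2*i + 3 := by omega
          rw [e]; exact tail
  · rintro ⟨i', hi', g1, g2, g3, g4⟩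
    rcases Nat.eq_zero_or_pos i' with rfl | hpos
    · -- i' = 0 : witness i = 0
      simp only [Nat.mul_zero, Nat.sub_zero] at g1 g2 g3
      rw [if_neg (by norm_num)] at g1
      have e0 : 2*(n+1) = 2*n+2 := by omega
      rw [e0] at g1 g2 g3
      have g2' : b.getD (2*n+3) false = false := by
        have e : 2*n+2+1 = 2*n+3 := by omega
        rwa [e] at g2
      have g3' : b.getD (2*n+4) false = true := by
        have e : 2*n+2+2 = 2*n+4 := by omega
        rwa [e] at g3
      refine ⟨0, by omega, ?_, ?_, ?_, ?_⟩
      · rw [show 2*n - 2*0 = 2*n from by omega, hc _ (by omega)]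
        rw [show 2*n+2 = 2*n+2 from rfl, g1]
        rfl
      · rw [show 2*n - 2*0 + 1 = 2*n+1 from by omega, hc _ (by omega)]
        rw [show 2*n+1+2 = 2*n+3 from by omega, g2']
        rfl
      · rw [show 2*n - 2*0 + 2 = 2*n+2 from by omega, hc _ (by omega)]
        rw [show 2*n+2+2 = 2*n+4 from by omega, show 2*n+2+1 = 2*n+3 from by omega,
            g3', g1, g2']
        rfl
      · intro j hj1 hj2; omega
    · -- i' ≥ 1 : witness i = i' - 1
      have hk' : 2*(n+1) - 2*i' ≤ 2*n := by omega
      have b3' : b.getD (2*(n+1) - 2*i' + 3) false = true := g4 _ le_rfl (by omega)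
      have b4' : b.getD (2*(n+1) - 2*i' + 4) false = true := g4 _ (by omega) (by omega)
      refine ⟨i' - 1, by omega, ?_, ?_, ?_, ?_⟩
      · have e : 2*n - 2*(i'-1) = 2*(n+1) - 2*i' := by omega
        rw [e, hc _ (by omega)]
        have e2 : 2*(n+1) - 2*i' + 2 = 2*(n+1) - 2*i' + 2 := rfl
        rw [g3, g1, g2]
        rcases Nat.mod_two_eq_zero_or_one i' with hpar | hpar
        · have e3 : (i'-1) % 2 = 1 := by omega
          rw [hpar, e3]; norm_num
        · have e3 : (i'-1) % 2 = 0 := by omega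
          rw [hpar, e3]; norm_num
      · have e : 2*n - 2*(i'-1) + 1 = 2*(n+1) - 2*i' + 1 := by omega
        rw [e, hc _ (by omega)]
        have e2 : 2*(n+1) - 2*i' + 1 + 2 = 2*(n+1) - 2*i' + 3 := by omega
        have e3 : 2*(n+1) - 2*i' + 1 + 1 = 2*(n+1) - 2*i' + 2 := by omega
        rw [e2, e3, b3', g2, g3]
        norm_num
      · have e : 2*n - 2*(i'-1) + 2 = 2*(n+1) - 2*i' + 2 := by omega
        rw [e, hc _ (by omega)]
        have e2 : 2*(n+1) - 2*i' + 2 + 2 = 2*(n+1) - 2*i' + 4 := by omega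
        have e3 : 2*(n+1) - 2*i' + 2 + 1 = 2*(n+1) - 2*i' + 3 := by omega
        rw [e2, e3, b4', g3, b3']
        norm_num
      · intro j hj1 hj2
        have e : 2*n - 2*(i'-1) + 3 = 2*(n+1) - 2*i' + 3 := by omega
        rw [e] at hj1
        rw [hc _ (by omega)]
        rw [g4 j hj1 (by omega), g4 (j+1) (by omega) (by omega),
            g4 (j+2) (by omega) (by omega)]
        norm_num

lemma main2 : ∀ n : ℕ, ∀ b : List Bool, b.length = 2*n+3 →
    (b ∈ preimSet rule130 n [false, false, true] ↔ P n b) := by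
  intro n
  induction n with
  | zero =>
    intro b hb
    simp only [preimSet, Set.mem_setOf_eq, Function.iterate_zero, id_eq]
    match b, hb with
    | [x, y, z], _ =>
      constructor
      · rintro ⟨-, h⟩
        simp only [List.cons.injEq, and_true] at h
        obtain ⟨rfl, rfl, rfl⟩ := h
        refine ⟨0, le_rfl, rfl, rfl, rfl, ?_⟩
        intro j h1 h2; omega
      · rintro ⟨i, hi, p1, p2, p3, -⟩
        have : i = 0 := by omega
        subst this
        simp only [List.getD] at p1 p2 p3
        norm_num at p1 p2 p3
        subst p1; subst p2; subst p3
        exact ⟨rfl, rfl⟩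
  | succ n ih =>
    intro b hb
    have hbb : b.length = 2*n+5 := by omega
    rw [mem_preim_succ]
    have hlen : (blockOp rule130 b).length = 2*n+3 := by
      rw [blockOp_length, hb]; omega
    constructor
    · rintro ⟨-, hmem⟩
      exact (step n b hbb).mp ((ih _ hlen).mp hmem)
    · intro hp
      refine ⟨by simp [hb]; omega, (ih _ hlen).mpr ((step n b hbb).mpr hp)⟩

/-- structure of the `n`-step preimages of `111` and `001` under rule 130. -/
theorem rule130_preimages (n : ℕ) (hn : 1 ≤ n) :
    preimSet rule130 n [true, true, true] = {List.replicate (2 * n + 3) true} ∧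
    ∀ b : List Bool, b.length = 2 * n + 3 →
      (b ∈ preimSet rule130 n [false, false, true] ↔
        ∃ i ≤ n,
          b.getD (2 * n - 2 * i) false = (if i % 2 = 1 then true else false) ∧
          b.getD (2 * n - 2 * i + 1) false = false ∧
          b.getD (2 * n - 2 * i + 2) false = true ∧
          ∀ j : ℕ, 2 * n - 2 * i + 3 ≤ j → j < 2 * n + 3 → b.getD j false = true) := by
  constructor
  · ext b
    rw [Set.mem_singleton_iff]
    exact preim_ones n b
  · intro b hb
    have := main2 n b hb
    unfold P at this
    exact this
end

section
/- Let F be the global map of ECA rule 130 and let p ∈ [0,1]. Then for every n ≥ 0, the probability of the symbol 0 after n iterations starting from the Bernoulli measure μ_p is P_n(0) = 1 − p^{2n+1} − p·(−p^{4⌈(n−2)/2⌉+4} + p^{4⌈(n−2)/2⌉+5} − p^{4⌊n/2⌋+3} + p³ − p + 1)/(p³ + p² + p + 1), where ⌈·⌉ and ⌊·⌋ denote integer ceiling and floor applied to (n−2)/2 and n/2 respectively (computed in ℤ, so that for n ∈ {0,1} the resulting exponents are still nonnegative). -/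
open MeasureTheory

/-!
Write `F` for the global map of rule 130 and put `c = i + d + 2`. Then `F^[d+2] x i = 1` exactly
when `x`, read leftwards from `c`, begins with `100`, with `11101`, or with `1111` followed by
`F^[d] x (i - 2) = 1`: a Boolean identity in finitely many cells, propagated along
`F^[d+4] = F^[d+2] ∘ F^[2]`. The three patterns are mutually exclusive, and the cells of the last
one lie to the right of every cell that `F^[d] x (i - 2)` depends on. Under the Bernoulli measure
the probability `probOne p d` that a cell is `1` after `d` steps therefore satisfies
`probOne p (d + 2) = p (1 - p)² + p⁴ (1 - p) + p⁴ probOne p d`, which is solved separately for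
even and odd `d`.
-/

namespace Rule130

local notation "F" => eca rule130

def twoStep (x : ℤ → Bool) (c : ℤ) (t : Bool) : Bool :=
  (x c && !x (c - 1) && !x (c - 2)) ||
    (x c && x (c - 1) && x (c - 2) && ((!x (c - 3) && x (c - 4)) || (x (c - 3) && t)))

lemma iterate_two_apply (x : ℤ → Bool) (i : ℤ) : F^[2] x i = twoStep x (i + 2) (x (i - 2)) := by
  simp only [Function.iterate_succ, Function.iterate_zero, Function.comp_apply, id, eca, rule130,
    twoStep]
  ring_nf
  generalize x (-2 + i) = a; generalize x (-1 + i) = b; generalize x i = c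
  generalize x (1 + i) = d; generalize x (2 + i) = e
  revert a b c d e; decide

lemma iterate_three_apply (x : ℤ → Bool) (i : ℤ) :
    F^[3] x i = twoStep x (i + 3) (F x (i - 2)) := by
  simp only [Function.iterate_succ, Function.iterate_zero, Function.comp_apply, id, eca, rule130,
    twoStep]
  ring_nf
  generalize x (-3 + i) = a; generalize x (-2 + i) = b; generalize x (-1 + i) = c
  generalize x i = d; generalize x (1 + i) = e; generalize x (2 + i) = f
  generalize x (3 + i) = g
  revert a b c d e f g; decide

lemma twoStep_iterate_two (x : ℤ → Bool) (c : ℤ) (t : Bool) :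
    twoStep (F^[2] x) c (twoStep x (c - 2) t) = twoStep x (c + 2) (twoStep x (c - 2) t) := by
  simp only [Function.iterate_succ, Function.iterate_zero, Function.comp_apply, id, eca, rule130,
    twoStep]
  ring_nf
  generalize x (-6 + c) = a; generalize x (-5 + c) = b; generalize x (-4 + c) = d
  generalize x (-3 + c) = e; generalize x (-2 + c) = f; generalize x (-1 + c) = g
  generalize x c = h; generalize x (1 + c) = k; generalize x (2 + c) = l
  revert a b d e f g h k l t; decide

theorem iterate_add_two_apply (d : ℕ) :
    ∀ (x : ℤ → Bool) (i : ℤ), F^[d + 2] x i = twoStep x (i + d + 2) (F^[d] x (i - 2)) := by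
  induction d using Nat.twoStepInduction with
  | zero => simpa using iterate_two_apply
  | one => intro x i; rw [iterate_three_apply, Function.iterate_one]; push_cast; ring_nf
  | more d ih _ =>
    intro x i
    have hprev : F^[d + 2] x (i - 2) = twoStep x (i + d + 2 - 2) (F^[d] x (i - 2 - 2)) := by
      rw [ih]; ring_nf
    rw [Function.iterate_add_apply, ih, ← Function.iterate_add_apply, hprev, twoStep_iterate_two,
      ← hprev]
    push_cast; ring_nf

def leftwardWord : ℤ → List Bool → Set (ℤ → Bool)
  | _, [] => Set.univ
  | c, b :: w => {x | x c = b} ∩ leftwardWord (c - 1) w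

lemma setOf_iterate_zero (i : ℤ) : {x | F^[0] x i = true} = leftwardWord i [true] := by
  ext x; simp [leftwardWord]

lemma setOf_iterate_one (i : ℤ) :
    {x | F^[1] x i = true} =
      leftwardWord (i + 1) [true, false, false] ∪ leftwardWord (i + 1) [true, true, true] := by
  ext x
  simp only [Function.iterate_one, eca, rule130, leftwardWord, add_sub_cancel_right,
    Set.mem_ofPred_eq, Set.mem_union, Set.mem_inter_iff, Set.mem_univ, and_true]
  norm_num
  cases x (i + 1) <;> cases x i <;> cases x (i - 1) <;> simp

lemma setOf_iterate_add_two (d : ℕ) (i : ℤ) :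
    {x | F^[d + 2] x i = true} =
      leftwardWord (i + d + 2) [true, false, false] ∪
        leftwardWord (i + d + 2) [true, true, true, false, true] ∪
        (leftwardWord (i + d + 2) [true, true, true, true] ∩ {x | F^[d] x (i - 2) = true}) := by
  ext x
  simp only [iterate_add_two_apply, twoStep, leftwardWord, sub_sub, Set.mem_ofPred_eq,
    Set.mem_union, Set.mem_inter_iff, Set.mem_univ, and_true, Bool.or_eq_true, Bool.and_eq_true,
    Bool.not_eq_true']
  norm_num
  tauto

lemma disjoint_leftwardWord_cons_of_ne {b₁ b₂ : Bool} (h : b₁ ≠ b₂) (c : ℤ) (w₁ w₂ : List Bool) :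
    Disjoint (leftwardWord c (b₁ :: w₁)) (leftwardWord c (b₂ :: w₂)) :=
  Set.disjoint_left.2 fun _ h₁ h₂ => h (h₁.1.symm.trans h₂.1)

lemma disjoint_leftwardWord_cons_cons {c : ℤ} {w₁ w₂ : List Bool}
    (h : Disjoint (leftwardWord (c - 1) w₁) (leftwardWord (c - 1) w₂)) (b : Bool) :
    Disjoint (leftwardWord c (b :: w₁)) (leftwardWord c (b :: w₂)) :=
  Set.disjoint_left.2 fun _ h₁ h₂ => Set.disjoint_left.1 h h₁.2 h₂.2

lemma measurable_eca (f : Bool → Bool → Bool → Bool) : Measurable (eca f) :=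
  measurable_pi_lambda _ fun i =>
    have hwindow : Measurable fun x : ℤ → Bool => (x (i - 1), x i, x (i + 1)) := by fun_prop
    (Measurable.of_discrete (f := fun b : Bool × Bool × Bool => f b.1 b.2.1 b.2.2)).comp hwindow

lemma measurableSet_setOf_iterate (n : ℕ) (i : ℤ) : MeasurableSet {x | F^[n] x i = true} :=
  (measurable_pi_apply i).comp ((measurable_eca rule130).iterate n) (measurableSet_singleton true)

lemma measurableSet_leftwardWord : ∀ (c : ℤ) (w : List Bool), MeasurableSet (leftwardWord c w)
  | _, [] => MeasurableSet.univ
  | c, _ :: w =>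
    ((measurable_pi_apply c) (measurableSet_singleton _)).inter
      (measurableSet_leftwardWord (c - 1) w)

def cylinderOn {ι α : Type*} (s : Finset ι) (f : ι → α) : Set (ι → α) := {x | ∀ i ∈ s, x i = f i}

lemma measurableSet_cylinderOn {ι α : Type*} [Countable ι] [MeasurableSpace α]
    [MeasurableSingletonClass α] (s : Finset ι) (f : ι → α) : MeasurableSet (cylinderOn s f) :=
  MeasurableSet.pi s.countable_toSet fun i _ => measurableSet_singleton (f i)

lemma cylinderOn_inter_setOf_apply_eq {ι α : Type*} [DecidableEq ι] {s : Finset ι} {j : ι}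
    (hj : j ∉ s) (f : ι → α) (a : α) :
    cylinderOn s f ∩ {x | x j = a} = cylinderOn (insert j s) (Function.update f j a) := by
  ext x
  simp only [cylinderOn, Set.mem_inter_iff, Set.mem_ofPred_eq, Finset.forall_mem_insert,
    Function.update_self]
  rw [and_comm]
  refine and_congr_right fun _ => forall₂_congr fun i hi => ?_
  rw [Function.update_of_ne (ne_of_mem_of_not_mem hi hj)]

lemma exists_cylinderOn_inter_leftwardWord {M : Type*} [CommMonoid M] (wt : Bool → M) :
    ∀ (w : List Bool) (c : ℤ) (s : Finset ℤ) (f : ℤ → Bool), (∀ j ∈ s, c < j) →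
      ∃ t g, cylinderOn s f ∩ leftwardWord c w = cylinderOn t g ∧ (∀ j ∈ t, c - w.length < j) ∧
        ∏ j ∈ t, wt (g j) = (∏ j ∈ s, wt (f j)) * (w.map wt).prod
  | [], c, s, f, hs => ⟨s, f, Set.inter_univ _, by simpa using hs, by simp⟩
  | b :: w, c, s, f, hs => by
    have hc : c ∉ s := fun h => (hs c h).false
    obtain ⟨t, g, heq, ht, hprod⟩ := exists_cylinderOn_inter_leftwardWord wt w (c - 1)
      (insert c s) (Function.update f c b) (by
        simp only [Finset.forall_mem_insert]
        exact ⟨by omega, fun j hj => by linarith [hs j hj]⟩)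
    refine ⟨t, g, ?_, fun j hj => by simpa [sub_sub, add_comm] using ht j hj, ?_⟩
    · rw [leftwardWord, ← Set.inter_assoc, cylinderOn_inter_setOf_apply_eq hc, heq]
    · have hupdate : ∀ j ∈ s, wt (Function.update f c b j) = wt (f j) := fun j hj => by
        rw [Function.update_of_ne (ne_of_mem_of_not_mem hj hc)]
      rw [hprod, Finset.prod_insert hc, Function.update_self, Finset.prod_congr rfl hupdate]
      simp only [List.map_cons, List.prod_cons]
      ac_rfl

def bernoulliWeight (p : ℝ) (b : Bool) : ℝ := if b then p else 1 - p

def probOne (p : ℝ) : ℕ → ℝ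
  | 0 => p
  | 1 => p * (1 - p) ^ 2 + p ^ 3
  | d + 2 => p * (1 - p) ^ 2 + p ^ 4 * (1 - p) + p ^ 4 * probOne p d

lemma probOne_two_mul {p : ℝ} (hp : 0 ≤ p) (j : ℕ) :
    probOne p (2 * j) = p ^ (4 * j + 1) +
      p * (-p ^ (4 * j) + p ^ (4 * j + 1) - p ^ (4 * j + 3) + p ^ 3 - p + 1) /
        (p ^ 3 + p ^ 2 + p + 1) := by
  have hD : 0 < p ^ 3 + p ^ 2 + p + 1 := by positivity
  induction j with
  | zero => simp [probOne]
  | succ j ih =>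
    rw [show 2 * (j + 1) = 2 * j + 2 by ring, probOne, ih]
    field_simp
    ring

lemma probOne_two_mul_add_one {p : ℝ} (hp : 0 ≤ p) (j : ℕ) :
    probOne p (2 * j + 1) = p ^ (4 * j + 3) +
      p * (-p ^ (4 * j + 4) + p ^ (4 * j + 5) - p ^ (4 * j + 3) + p ^ 3 - p + 1) /
        (p ^ 3 + p ^ 2 + p + 1) := by
  have hD : 0 < p ^ 3 + p ^ 2 + p + 1 := by positivity
  induction j with
  | zero =>
    simp only [probOne]
    field_simp
    ring
  | succ j ih =>
    rw [show 2 * (j + 1) + 1 = 2 * j + 1 + 2 by ring, probOne, ih]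
    field_simp
    ring

lemma probOne_eq {p : ℝ} (hp : 0 ≤ p) (n : ℕ) :
    probOne p n = p ^ (2 * n + 1) +
      p * (-p ^ (4 * ⌈((n : ℚ) - 2) / 2⌉ + 4) + p ^ (4 * ⌈((n : ℚ) - 2) / 2⌉ + 5)
        - p ^ (4 * ⌊(n : ℚ) / 2⌋ + 3) + p ^ 3 - p + 1) / (p ^ 3 + p ^ 2 + p + 1) := by
  obtain ⟨j, rfl | rfl⟩ := Nat.even_or_odd' n
  · have hceil : ⌈((2 * j : ℕ) - 2 : ℚ) / 2⌉ = j - 1 :=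
      Int.ceil_eq_iff.2 ⟨by push_cast; linarith, by push_cast; linarith⟩
    have hfloor : ⌊((2 * j : ℕ) : ℚ) / 2⌋ = j :=
      Int.floor_eq_iff.2 ⟨by push_cast; linarith, by push_cast; linarith⟩
    rw [hceil, hfloor, probOne_two_mul hp,
      show 4 * ((j : ℤ) - 1) + 4 = (4 * j : ℕ) by push_cast; ring,
      show 4 * ((j : ℤ) - 1) + 5 = (4 * j + 1 : ℕ) by push_cast; ring,
      show 4 * (j : ℤ) + 3 = (4 * j + 3 : ℕ) by push_cast; ring]
    simp only [zpow_natCast]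
    ring
  · have hceil : ⌈((2 * j + 1 : ℕ) - 2 : ℚ) / 2⌉ = j :=
      Int.ceil_eq_iff.2 ⟨by push_cast; linarith, by push_cast; linarith⟩
    have hfloor : ⌊((2 * j + 1 : ℕ) : ℚ) / 2⌋ = j :=
      Int.floor_eq_iff.2 ⟨by push_cast; linarith, by push_cast; linarith⟩
    rw [hceil, hfloor, probOne_two_mul_add_one hp,
      show 4 * (j : ℤ) + 4 = (4 * j + 4 : ℕ) by push_cast; ring,
      show 4 * (j : ℤ) + 5 = (4 * j + 5 : ℕ) by push_cast; ring,
      show 4 * (j : ℤ) + 3 = (4 * j + 3 : ℕ) by push_cast; ring]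
    simp only [zpow_natCast]
    ring

lemma preimage_iterate_cylinder_singleton_false (n : ℕ) :
    F^[n] ⁻¹' cylinder [false] = {x | F^[n] x 0 = true}ᶜ := by
  ext x
  simp [_root_.cylinder]

section Bernoulli

variable {p : ℝ} {μ : Measure (ℤ → Bool)}

lemma _root_.IsBernoulli.isProbabilityMeasure (hber : IsBernoulli p μ) : IsProbabilityMeasure μ :=
  ⟨by simpa using hber ∅ fun _ => true⟩

lemma measureReal_cylinderOn (hp0 : 0 ≤ p) (hp1 : p ≤ 1) (hber : IsBernoulli p μ)
    (s : Finset ℤ) (f : ℤ → Bool) :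
    μ.real (cylinderOn s f) = ∏ i ∈ s, bernoulliWeight p (f i) := by
  rw [measureReal_def, cylinderOn, hber, ENNReal.toReal_prod]
  refine Finset.prod_congr rfl fun i _ => ?_
  cases f i
  · simp [bernoulliWeight, sub_nonneg.2 hp1]
  · simp [bernoulliWeight, hp0]

lemma measureReal_cylinderOn_inter_leftwardWord (hp0 : 0 ≤ p) (hp1 : p ≤ 1)
    (hber : IsBernoulli p μ) {c : ℤ} {s : Finset ℤ} (hs : ∀ j ∈ s, c < j) (f : ℤ → Bool)
    (w : List Bool) :
    μ.real (cylinderOn s f ∩ leftwardWord c w) =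
      (∏ i ∈ s, bernoulliWeight p (f i)) * (w.map (bernoulliWeight p)).prod := by
  obtain ⟨t, g, heq, -, hprod⟩ :=
    exists_cylinderOn_inter_leftwardWord (bernoulliWeight p) w c s f hs
  rw [heq, measureReal_cylinderOn hp0 hp1 hber, hprod]

/-- The cylinder on cells to the right of the light cone is what lets the induction absorb the
cells of a pattern and still apply to `F^[d] x (i - 2)`. -/
theorem measureReal_cylinderOn_inter_setOf_iterate (hp0 : 0 ≤ p) (hp1 : p ≤ 1)
    (hber : IsBernoulli p μ) (d : ℕ) :
    ∀ (i : ℤ) (s : Finset ℤ) (f : ℤ → Bool), (∀ j ∈ s, i + d < j) →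
      μ.real (cylinderOn s f ∩ {x | F^[d] x i = true}) =
        (∏ j ∈ s, bernoulliWeight p (f j)) * probOne p d := by
  have := hber.isProbabilityMeasure
  have hword := @measureReal_cylinderOn_inter_leftwardWord p μ hp0 hp1 hber
  induction d using Nat.twoStepInduction with
  | zero =>
    intro i s f hs
    rw [setOf_iterate_zero, hword (by simpa using hs)]
    simp [bernoulliWeight, probOne]
  | one =>
    intro i s f hs
    have hs' : ∀ j ∈ s, i + 1 < j := by simpa using hs
    have h₁₂ : Disjoint (leftwardWord (i + 1) [true, false, false])
        (leftwardWord (i + 1) [true, true, true]) :=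
      disjoint_leftwardWord_cons_cons (disjoint_leftwardWord_cons_of_ne (by decide) _ _ _) _
    rw [setOf_iterate_one, Set.inter_union_distrib_left,
      measureReal_union (h₁₂.mono Set.inter_subset_right Set.inter_subset_right)
        ((measurableSet_cylinderOn s f).inter (measurableSet_leftwardWord _ _)),
      hword hs', hword hs']
    simp [bernoulliWeight, probOne]
    ring
  | more d ih _ =>
    intro i s f hs
    have hs' : ∀ j ∈ s, i + d + 2 < j := by simpa [add_assoc] using hs
    have h₁₂ : Disjoint (leftwardWord (i + d + 2) [true, false, false])
        (leftwardWord (i + d + 2) [true, true, true, false, true]) :=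
      disjoint_leftwardWord_cons_cons (disjoint_leftwardWord_cons_of_ne (by decide) _ _ _) _
    have h₁₃ : Disjoint (leftwardWord (i + d + 2) [true, false, false])
        (leftwardWord (i + d + 2) [true, true, true, true]) :=
      disjoint_leftwardWord_cons_cons (disjoint_leftwardWord_cons_of_ne (by decide) _ _ _) _
    have h₂₃ : Disjoint (leftwardWord (i + d + 2) [true, true, true, false, true])
        (leftwardWord (i + d + 2) [true, true, true, true]) :=
      disjoint_leftwardWord_cons_cons (disjoint_leftwardWord_cons_cons
        (disjoint_leftwardWord_cons_cons
          (disjoint_leftwardWord_cons_of_ne (by decide) _ _ _) _) _) _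
    have hsub (A B C : Set (ℤ → Bool)) : A ∩ (B ∩ C) ⊆ B :=
      Set.inter_subset_right.trans Set.inter_subset_left
    rw [setOf_iterate_add_two, Set.inter_union_distrib_left, Set.inter_union_distrib_left,
      measureReal_union (Set.disjoint_union_left.2
          ⟨h₁₃.mono Set.inter_subset_right (hsub ..), h₂₃.mono Set.inter_subset_right (hsub ..)⟩)
        ((measurableSet_cylinderOn s f).inter
          ((measurableSet_leftwardWord _ _).inter (measurableSet_setOf_iterate d (i - 2)))),
      measureReal_union (h₁₂.mono Set.inter_subset_right Set.inter_subset_right)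
        ((measurableSet_cylinderOn s f).inter (measurableSet_leftwardWord _ _)),
      hword hs', hword hs', ← Set.inter_assoc]
    obtain ⟨t, g, heq, ht, hprod⟩ :=
      exists_cylinderOn_inter_leftwardWord (bernoulliWeight p) [true, true, true, true] _ s f hs'
    rw [heq, ih (i - 2) t g (fun j hj => by have := ht j hj; norm_num at this; linarith), hprod]
    simp [bernoulliWeight, probOne]
    ring

lemma measureReal_setOf_iterate (hp0 : 0 ≤ p) (hp1 : p ≤ 1) (hber : IsBernoulli p μ) (n : ℕ)
    (i : ℤ) : μ.real {x | F^[n] x i = true} = probOne p n := by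
  simpa [cylinderOn] using
    measureReal_cylinderOn_inter_setOf_iterate hp0 hp1 hber n i ∅ (fun _ => false) (by simp)

end Bernoulli

end Rule130

theorem rule130_prob_zero_general
    (p : ℝ) (hp0 : 0 ≤ p) (hp1 : p ≤ 1)
    (μ : Measure (ℤ → Bool)) (hber : IsBernoulli p μ) :
    ∀ n : ℕ,
      (μ ((eca rule130)^[n] ⁻¹' cylinder [false])).toReal =
        1 - p ^ (2 * n + 1) -
          p * (-p ^ (4 * ⌈((n : ℚ) - 2) / 2⌉ + 4) + p ^ (4 * ⌈((n : ℚ) - 2) / 2⌉ + 5)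
                - p ^ (4 * ⌊(n : ℚ) / 2⌋ + 3) + p ^ 3 - p + 1)
            / (p ^ 3 + p ^ 2 + p + 1) := by
  intro n
  have := hber.isProbabilityMeasure
  rw [← measureReal_def, Rule130.preimage_iterate_cylinder_singleton_false,
    probReal_compl_eq_one_sub (Rule130.measurableSet_setOf_iterate n 0),
    Rule130.measureReal_setOf_iterate hp0 hp1 hber, Rule130.probOne_eq hp0]
  ring

/-- exact formula for `P_n(0)` for ECA rule 130 started from the
Bernoulli measure `μ_p`, with integer ceiling/floor applied to `(n−2)/2` and `n/2`. -/
theorem rule130_prob_zero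
    (p : ℝ) (hp0 : 0 ≤ p) (hp1 : p ≤ 1)
    (μ : Measure (ℤ → Bool)) (hprob : IsProbabilityMeasure μ) (hber : IsBernoulli p μ) :
    ∀ n : ℕ,
      (μ ((eca rule130)^[n] ⁻¹' cylinder [false])).toReal =
        1 - p ^ (2 * n + 1) -
          p * (-p ^ (4 * ⌈((n : ℚ) - 2) / 2⌉ + 4) + p ^ (4 * ⌈((n : ℚ) - 2) / 2⌉ + 5)
                - p ^ (4 * ⌊(n : ℚ) / 2⌋ + 3) + p ^ 3 - p + 1)
            / (p ^ 3 + p ^ 2 + p + 1) :=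
  rule130_prob_zero_general p hp0 hp1 μ hber
end

section
/- Let F be the global map of ECA rule 172 and take the symmetric Bernoulli initial measure μ_{1/2}. Then for every n ≥ 1: P_n(0) = 7/8 − F_{n+3}/2^{n+2}; P_n(00) = 3/4 − F_{n+3}/2^{n+2} − F_{n+2}/2^{n+4}; P_n(000) = 5/8 − F_{n+3}/2^{n+2} − F_{n+2}/2^{n+4}; and P_n(010) = 1/8 − F_{n+1}/2^{n+3}, where F_k denotes the k-th Fibonacci number (F_1 = F_2 = 1). -/
open MeasureTheory

/-- The local rule of ECA rule 172: `f(x1,x2,x3) = x2` if `x1 = 0`, and `x3` if `x1 = 1`. -/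
def rule172 (x1 x2 x3 : Bool) : Bool := if x1 then x3 else x2

/-!
Rule 172 copies the right neighbour into a cell whose left neighbour is `1` and leaves the cell
unchanged otherwise. So a pair `00` is frozen, and for `n ≥ 1` the value `Fⁿ(x)ᵢ` is determined by
`x(i-2), …, x(i+n)`: behind `00` it is `x i`, otherwise it is one of two functions `rightOf1 n`,
`rightOf10 n` of `x(i), …, x(i+n)`, given by a recursion on the first letter. Under `μ_{1/2}` a
block probability is therefore a number of binary words over a power of two. Splitting words by
their first letter, the number `β m` (resp. `γ m`) of words on which a Boolean function of
`rightOf1 m, rightOf1 (m+1), rightOf1 (m+2)` (resp. of the `rightOf10`) holds satisfies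
`β (m+1) = β m + γ m` and, if the function vanishes at `(0,0,0)`, `γ (m+2) = β (m+1)`. These
counts are thus Fibonacci combinations, and cutting off the first `|b| + 1` letters expresses the
count of each block `b` through them and powers of two.
-/

namespace Rule172

local notation "F" => eca rule172

/-- The value after `n` steps of the first cell of `s` when its left neighbour is `1`. -/
def rightOf1 : ℕ → Stream' Bool → Bool
  | 0, s => s.head
  | n + 1, s =>
    if s.head then rightOf1 n s.tail
    else match n with
      | 0 | 1 => s.tail.head
      | k + 2 => s.tail.head && rightOf1 (k + 1) s.tail.tail

/-- The value after `n ≥ 1` steps of the first cell of `s` when its two left neighbours are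
`1 0`. -/
def rightOf10 : ℕ → Stream' Bool → Bool
  | 0, s | 1, s => s.head
  | n + 2, s => s.head && rightOf1 (n + 1) s.tail

lemma rightOf1_zero (s : Stream' Bool) : rightOf1 0 s = s.head := by simp [rightOf1]

lemma rightOf1_succ (n : ℕ) (s : Stream' Bool) :
    rightOf1 (n + 1) s = if s.head then rightOf1 n s.tail else rightOf10 n s.tail := by
  rcases n with _ | _ | n <;> rfl

lemma rightOf10_zero (s : Stream' Bool) : rightOf10 0 s = s.head := by simp [rightOf10]

lemma rightOf10_one (s : Stream' Bool) : rightOf10 1 s = s.head := by simp [rightOf10]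

lemma rightOf10_add_two (n : ℕ) (s : Stream' Bool) :
    rightOf10 (n + 2) s = (s.head && rightOf1 (n + 1) s.tail) := by
  simp [rightOf10]

lemma rightOf10_of_head_false {n : ℕ} {s : Stream' Bool} (h : s.head = false) :
    rightOf10 n s = false := by
  rcases n with _ | _ | n <;> simp [rightOf10_zero, rightOf10_one, rightOf10_add_two, h]

def ray (x : ℤ → Bool) (i : ℤ) : Stream' Bool := fun k => x (i + k)

lemma head_ray (x : ℤ → Bool) (i : ℤ) : (ray x i).head = x i := by
  simp [ray, Stream'.head, Stream'.get]

lemma tail_ray (x : ℤ → Bool) (i : ℤ) : (ray x i).tail = ray x (i + 1) := by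
  funext k
  simp only [ray, Stream'.tail, Stream'.get]
  congr 1
  push_cast
  ring

lemma ray_eq_cons (x : ℤ → Bool) (i : ℤ) : ray x i = .cons (x i) (ray x (i + 1)) := by
  rw [← tail_ray, ← head_ray x i, Stream'.eta]

lemma eca_rule172_apply (x : ℤ → Bool) (i : ℤ) :
    F x i = if x (i - 1) then x (i + 1) else x i := rfl

section Step

variable {n : ℕ}

lemma rightOf10_ray_eca
    (hB : ∀ x i, x i = true → rightOf1 (n + 1) (ray (F x) i) = rightOf1 (n + 1) (ray x (i + 1)))
    (x : ℤ → Bool) (i : ℤ) (h : x (i - 1) = true) :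
    rightOf10 (n + 2) (ray (F x) i) = rightOf10 (n + 2) (ray x (i + 1)) := by
  have hF : F x i = x (i + 1) := by simp [eca_rule172_apply, h]
  simp only [rightOf10_add_two, head_ray, tail_ray, hF, show i + 1 + 1 = i + 2 by ring]
  cases hx : x (i + 1)
  · rfl
  · rw [Bool.true_and, Bool.true_and, hB x (i + 1) hx, show i + 1 + 1 = i + 2 by ring]

lemma rightOf1_ray_eca
    (hB : ∀ x i, x i = true → rightOf1 (n + 1) (ray (F x) i) = rightOf1 (n + 1) (ray x (i + 1)))
    (hC : ∀ x i, x (i - 1) = true →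
      rightOf10 (n + 1) (ray (F x) i) = rightOf10 (n + 1) (ray x (i + 1)))
    (x : ℤ → Bool) (i : ℤ) (h : x (i - 1) = true) :
    rightOf1 (n + 2) (ray (F x) i) = rightOf1 (n + 3) (ray x i) := by
  have hF : F x i = x (i + 1) := by simp [eca_rule172_apply, h]
  have e : i + 1 + 1 = i + 2 := by ring
  rw [rightOf1_succ (n + 1), rightOf1_succ (n + 2), head_ray, head_ray, tail_ray, tail_ray, hF]
  cases hx1 : x (i + 1) <;> cases hx0 : x i <;>
    simp only [if_true, if_false, Bool.false_eq_true]
  · have hF1 : (ray (F x) (i + 1)).head = false := by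
      simp [head_ray, eca_rule172_apply, hx0, hx1]
    rw [rightOf10_of_head_false hF1, rightOf10_add_two, head_ray, hx1, Bool.false_and]
  · rw [hC x (i + 1) (by rwa [add_sub_cancel_right]), rightOf1_succ, head_ray, hx1, tail_ray, e]
    rfl
  · rw [hB x (i + 1) hx1, rightOf10_add_two, head_ray, hx1, tail_ray, e, Bool.true_and]
  · rw [hB x (i + 1) hx1, rightOf1_succ (n + 1), head_ray, hx1, tail_ray, e, if_pos rfl]

lemma rightOf1_ray_eca_of_true
    (hA : ∀ x i, x (i - 1) = true → rightOf1 (n + 2) (ray (F x) i) = rightOf1 (n + 3) (ray x i))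
    (hB : ∀ x i, x i = true → rightOf1 (n + 2) (ray (F x) i) = rightOf1 (n + 2) (ray x (i + 1)))
    (hC : ∀ x i, x (i - 1) = true →
      rightOf10 (n + 2) (ray (F x) i) = rightOf10 (n + 2) (ray x (i + 1)))
    (x : ℤ → Bool) (i : ℤ) (h : x i = true) :
    rightOf1 (n + 3) (ray (F x) i) = rightOf1 (n + 3) (ray x (i + 1)) := by
  have hi : x (i + 1 - 1) = true := by rwa [add_sub_cancel_right]
  rw [rightOf1_succ (n + 2), rightOf1_succ (n + 2), head_ray, head_ray, tail_ray, tail_ray]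
  cases hx1 : x (i + 1)
  · cases hm : x (i - 1)
    · have hF : F x i = true := by simp [eca_rule172_apply, hm, h]
      rw [hF, if_pos rfl, hA x (i + 1) hi, rightOf1_succ, head_ray, hx1, tail_ray]
    · have hF : F x i = false := by simp [eca_rule172_apply, hm, hx1]
      simp only [hF, Bool.false_eq_true, if_false]
      exact hC x (i + 1) hi
  · have hF : F x i = true := by cases hm : x (i - 1) <;> simp [eca_rule172_apply, hm, h, hx1]
    rw [hF, if_pos rfl, if_pos rfl, hB x (i + 1) hx1]

end Step

lemma rightOf1_rightOf10_ray_eca (n : ℕ) :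
    (∀ x i, x (i - 1) = true → rightOf1 n (ray (F x) i) = rightOf1 (n + 1) (ray x i)) ∧
    (∀ x i, x i = true → rightOf1 (n + 1) (ray (F x) i) = rightOf1 (n + 1) (ray x (i + 1))) ∧
    (∀ x i, x (i - 1) = true → rightOf10 n (ray (F x) i) = rightOf10 n (ray x (i + 1))) := by
  induction n using Nat.strong_induction_on with
  | _ n ih =>
  match n with
  | 0 =>
    refine ⟨fun x i h => ?_, fun x i h => ?_, fun x i h => ?_⟩ <;>
      simp [rightOf1_zero, rightOf1_succ, rightOf10_zero, head_ray, tail_ray, eca_rule172_apply,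
        h, show i + 1 + 1 = i + 2 by ring]
  | 1 =>
    refine ⟨fun x i h => ?_, fun x i h => ?_, fun x i h => ?_⟩ <;>
      simp [rightOf1_zero, rightOf1_succ, rightOf10_zero, rightOf10_one, head_ray, tail_ray,
        eca_rule172_apply, h, show i + 1 + 1 = i + 2 by ring, show i + 2 - 1 = i + 1 by ring]
    cases x (i - 1) <;> cases x (i + 1) <;> simp
  | n + 2 =>
    obtain ⟨-, hB, -⟩ := ih n (by omega)
    obtain ⟨-, hB', hC'⟩ := ih (n + 1) (by omega)
    have hA := rightOf1_ray_eca hB hC'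
    have hC := rightOf10_ray_eca hB
    exact ⟨hA, rightOf1_ray_eca_of_true hA hB' hC, hC⟩

/-- The value of `Fⁿ` (`n ≥ 1`) at the third cell of `s`; behind `00` that cell is frozen. -/
def cellValue (n : ℕ) (s : Stream' Bool) : Bool :=
  if s.tail.head then rightOf1 n s.tail.tail
  else if s.head then rightOf10 n s.tail.tail
  else s.tail.tail.head

lemma cellValue_ray (n : ℕ) (x : ℤ → Bool) (i : ℤ) :
    cellValue n (ray x (i - 2)) = if x (i - 1) then rightOf1 n (ray x i)
      else if x (i - 2) then rightOf10 n (ray x i) else x i := by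
  simp only [cellValue, tail_ray, head_ray, show i - 2 + 1 = i - 1 by ring,
    show i - 1 + 1 = i by ring]

theorem iterate_eca_rule172_apply {n : ℕ} (hn : 1 ≤ n) (x : ℤ → Bool) (i : ℤ) :
    F^[n] x i = cellValue n (ray x (i - 2)) := by
  induction n, hn using Nat.le_induction generalizing x i with
  | base =>
    rw [cellValue_ray, Function.iterate_one, eca_rule172_apply]
    cases x (i - 1) <;> cases x (i - 2) <;>
      simp [rightOf1_zero, rightOf1_succ, rightOf10_zero, rightOf10_one, head_ray, tail_ray]
  | succ n hn ih =>
    obtain ⟨m, rfl⟩ : ∃ m, n = m + 1 := ⟨n - 1, by omega⟩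
    obtain ⟨hA, -, hC⟩ := rightOf1_rightOf10_ray_eca (m + 1)
    obtain ⟨-, hB, -⟩ := rightOf1_rightOf10_ray_eca m
    have hF0 : F x i = if x (i - 1) then x (i + 1) else x i := eca_rule172_apply x i
    have hF1 : F x (i - 1) = if x (i - 2) then x i else x (i - 1) := by
      rw [eca_rule172_apply, show i - 1 - 1 = i - 2 by ring, sub_add_cancel]
    have hF2 : F x (i - 2) = if x (i - 3) then x (i - 1) else x (i - 2) := by
      rw [eca_rule172_apply, show i - 2 + 1 = i - 1 by ring, show i - 2 - 1 = i - 3 by ring]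
    rw [Function.iterate_succ_apply, ih, cellValue_ray, cellValue_ray]
    cases hx1 : x (i - 1) <;> cases hx2 : x (i - 2) <;> cases hx0 : x i <;>
      simp only [hF1, hF2, hx0, hx1, hx2, ite_self, if_true, if_false, Bool.false_eq_true]
    · simp [hF0, hx1, hx0]
    · simp [hF0, hx1, hx0]
    · have hFi : (ray (F x) i).head = false := by simp [head_ray, hF0, hx1, hx0]
      split <;> simp [rightOf10_add_two, head_ray, rightOf10_of_head_false hFi, hF0, hx1, hx0]
    · rw [hB x i hx0, rightOf10_add_two, head_ray, hx0, tail_ray, Bool.true_and]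
    · exact hA x i hx1
    · exact hA x i hx1
    · rw [hC x i hx1, rightOf1_succ, head_ray, hx0, tail_ray, if_neg Bool.false_ne_true]
    · exact hA x i hx1

def occursAt (n : ℕ) : List Bool → Stream' Bool → Bool
  | [], _ => true
  | c :: b, s => (cellValue n s == c) && occursAt n b s.tail

lemma forall_iterate_eca_rule172_eq_iff {n : ℕ} (hn : 1 ≤ n) (b : List Bool) (x : ℤ → Bool)
    (i : ℤ) : (∀ j : Fin b.length, F^[n] x (i + j) = b.get j) ↔
      occursAt n b (ray x (i - 2)) = true := by
  induction b generalizing i with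
  | nil => simp [occursAt]
  | cons c b ih =>
    change (∀ j : Fin (b.length + 1), _) ↔ _
    rw [Fin.forall_fin_succ, occursAt, Bool.and_eq_true, beq_iff_eq, tail_ray,
      show i - 2 + 1 = i + 1 - 2 by ring, ← ih, ← iterate_eca_rule172_apply hn]
    refine and_congr (by simp) (forall_congr' fun j => ?_)
    rw [Fin.val_succ, Nat.cast_succ, ← add_assoc, add_right_comm]
    rfl

def DependsOnFirst (N : ℕ) (P : Stream' Bool → Bool) : Prop :=
  ∀ s t : Stream' Bool, (∀ k < N, s.get k = t.get k) → P s = P t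

lemma DependsOnFirst.mono {N M : ℕ} {P : Stream' Bool → Bool} (hP : DependsOnFirst N P)
    (h : N ≤ M) : DependsOnFirst M P :=
  fun s t hst => hP s t fun k hk => hst k (by omega)

lemma DependsOnFirst.comp_cons {N : ℕ} {P : Stream' Bool → Bool}
    (hP : DependsOnFirst (N + 1) P) (a : Bool) : DependsOnFirst N fun s => P (.cons a s) := by
  refine fun s t hst => hP _ _ fun k hk => ?_
  rcases k with _ | k
  · rfl
  · exact hst k (by omega)

lemma DependsOnFirst.eq_const {P : Stream' Bool → Bool} (hP : DependsOnFirst 0 P)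
    (s : Stream' Bool) : P s = P (Stream'.const false) :=
  hP _ _ fun _ hk => absurd hk (Nat.not_lt_zero _)

lemma rightOf1_congr_and_rightOf10_congr (n : ℕ) :
    ∀ s t : Stream' Bool, (∀ k ≤ n, s.get k = t.get k) →
      rightOf1 n s = rightOf1 n t ∧ rightOf10 n s = rightOf10 n t := by
  induction n with
  | zero => intro s t h; simp [rightOf1_zero, rightOf10_zero, h 0 le_rfl]
  | succ n ih =>
    intro s t h
    have h0 : s.head = t.head := h 0 (by omega)
    have ht := ih s.tail t.tail fun k hk => h (k + 1) (by omega)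
    refine ⟨by rw [rightOf1_succ, rightOf1_succ, h0, ht.1, ht.2], ?_⟩
    rcases n with _ | n
    · rw [rightOf10_one, rightOf10_one, h0]
    · rw [rightOf10_add_two, rightOf10_add_two, h0, ht.1]

lemma dependsOnFirst_cellValue (n : ℕ) : DependsOnFirst (n + 3) (cellValue n) := by
  intro s t h
  have h0 : s.head = t.head := h 0 (by omega)
  have h1 : s.tail.head = t.tail.head := h 1 (by omega)
  have h2 : s.tail.tail.head = t.tail.tail.head := h 2 (by omega)
  have h3 := rightOf1_congr_and_rightOf10_congr n s.tail.tail t.tail.tail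
    fun k hk => h (k + 2) (by omega)
  simp only [cellValue, h0, h1, h2, h3.1, h3.2]

lemma dependsOnFirst_occursAt (n : ℕ) (b : List Bool) :
    DependsOnFirst (n + b.length + 2) (occursAt n b) := by
  induction b with
  | nil => intro s t _; rfl
  | cons c b ih =>
    intro s t h
    simp only [occursAt]
    rw [dependsOnFirst_cellValue n s t fun k hk => h k (by simp; omega),
      ih s.tail t.tail fun k hk => h (k + 1) (by simp; omega)]

/-- The number of binary words `w` of length `N` with `P (w ++ 000…)`. -/
def countWords : ℕ → (Stream' Bool → Bool) → ℕ
  | 0, P => if P (Stream'.const false) then 1 else 0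
  | N + 1, P => countWords N (fun s => P (.cons true s)) + countWords N (fun s => P (.cons false s))

lemma countWords_succ (N : ℕ) (P : Stream' Bool → Bool) :
    countWords (N + 1) P =
      countWords N (fun s => P (.cons true s)) + countWords N (fun s => P (.cons false s)) :=
  rfl

lemma countWords_const (N : ℕ) (b : Bool) :
    countWords N (fun _ => b) = if b then 2 ^ N else 0 := by
  induction N with
  | zero => rfl
  | succ N ih => cases b <;> simp [countWords_succ, ih, pow_succ, mul_two]

lemma countWords_not_head (N : ℕ) : countWords (N + 1) (fun s => !s.head) = 2 ^ N := by
  simp [countWords_succ, countWords_const]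

lemma countWords_add_not (N : ℕ) (P : Stream' Bool → Bool) :
    countWords N P + countWords N (fun s => !P s) = 2 ^ N := by
  induction N generalizing P with
  | zero => cases h : P (Stream'.const false) <;> simp [countWords, h]
  | succ N ih =>
    rw [countWords_succ, countWords_succ, add_add_add_comm, ih, ih, pow_succ, mul_two]

section Measure

variable {μ : Measure (ℤ → Bool)}

lemma setOf_ray_eq_union (P : Stream' Bool → Bool) (i : ℤ) :
    {x : ℤ → Bool | P (ray x i)} =
      ({x | x i = true} ∩ {x | P (.cons true (ray x (i + 1)))}) ∪
        ({x | x i = false} ∩ {x | P (.cons false (ray x (i + 1)))}) := by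
  ext x
  rw [Set.mem_ofPred_eq, ray_eq_cons]
  cases hx : x i <;> simp [hx]

lemma measurableSet_setOf_ray {N : ℕ} {P : Stream' Bool → Bool} (hP : DependsOnFirst N P)
    (i : ℤ) : MeasurableSet {x : ℤ → Bool | P (ray x i)} := by
  induction N generalizing P i with
  | zero =>
    simp only [hP.eq_const]
    exact MeasurableSet.const _
  | succ N ih =>
    rw [setOf_ray_eq_union]
    have hi (a : Bool) : MeasurableSet {x : ℤ → Bool | x i = a} :=
      measurableSet_eq_fun (measurable_pi_apply i) measurable_const
    exact ((hi _).inter (ih (hP.comp_cons true) _)).union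
      ((hi _).inter (ih (hP.comp_cons false) _))

lemma measurableSet_setOf_forall_mem_eq (s : Finset ℤ) (f : ℤ → Bool) :
    MeasurableSet {x : ℤ → Bool | ∀ j ∈ s, x j = f j} := by
  simp only [Set.ofPred_forall]
  exact Finset.measurableSet_biInter s fun j _ =>
    measurableSet_eq_fun (measurable_pi_apply j) measurable_const

lemma measure_setOf_forall_mem_eq (hμ : IsBernoulli (1 / 2) μ) (s : Finset ℤ) (f : ℤ → Bool) :
    μ {x | ∀ j ∈ s, x j = f j} = ENNReal.ofReal (1 / 2) ^ s.card := by
  rw [hμ, ← Finset.prod_const]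
  refine Finset.prod_congr rfl fun j _ => ?_
  norm_num

lemma setOf_forall_mem_insert_eq_update {s : Finset ℤ} {i : ℤ} (hi : i ∉ s) (f : ℤ → Bool)
    (a : Bool) :
    {x : ℤ → Bool | ∀ j ∈ insert i s, x j = Function.update f i a j} =
      {x | ∀ j ∈ s, x j = f j} ∩ {x | x i = a} := by
  ext x
  simp only [Finset.mem_insert, forall_eq_or_imp, Function.update_self, Set.mem_inter_iff,
    Set.mem_ofPred_eq]
  rw [and_comm]
  refine and_congr_left' (forall₂_congr fun j hj => ?_)
  rw [Function.update_of_ne (by rintro rfl; exact hi hj)]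

/-- Generalised over the cylinder `s` so that the induction on `N` can move the coordinate `i`
from the event into the cylinder. -/
lemma measure_inter_setOf_ray (hμ : IsBernoulli (1 / 2) μ) {N : ℕ} {P : Stream' Bool → Bool}
    (hP : DependsOnFirst N P) (s : Finset ℤ) (f : ℤ → Bool) (i : ℤ) (hs : ∀ j ∈ s, j < i) :
    μ ({x | ∀ j ∈ s, x j = f j} ∩ {x | P (ray x i)}) =
      countWords N P * ENNReal.ofReal (1 / 2) ^ (s.card + N) := by
  induction N generalizing P s f i with
  | zero =>
    simp only [hP.eq_const, countWords, add_zero]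
    split_ifs with h <;> simp [h, measure_setOf_forall_mem_eq hμ]
  | succ N ih =>
    have hi : i ∉ s := fun h => lt_irrefl i (hs i h)
    have hs' : ∀ j ∈ insert i s, j < i + 1 := by
      simp only [Finset.mem_insert, forall_eq_or_imp]
      exact ⟨by omega, fun j hj => by have := hs j hj; omega⟩
    have piece (a : Bool) :
        μ ({x | ∀ j ∈ s, x j = f j} ∩ ({x | x i = a} ∩ {x | P (.cons a (ray x (i + 1)))})) =
          countWords N (fun t => P (.cons a t)) * ENNReal.ofReal (1 / 2) ^ (s.card + (N + 1)) := by
      rw [← Set.inter_assoc, ← setOf_forall_mem_insert_eq_update hi f a,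
        ih (hP.comp_cons a) _ _ _ hs', Finset.card_insert_of_notMem hi, add_right_comm,
        add_assoc]
    rw [setOf_ray_eq_union, Set.inter_union_distrib_left, measure_union, piece, piece,
      countWords_succ, Nat.cast_add, add_mul]
    · exact Set.disjoint_left.2 fun x hx hx' => by simp_all
    · exact (measurableSet_setOf_forall_mem_eq s f).inter
        ((measurableSet_eq_fun (measurable_pi_apply i) measurable_const).inter
          (measurableSet_setOf_ray (hP.comp_cons false) _))

lemma measure_setOf_ray (hμ : IsBernoulli (1 / 2) μ) {N : ℕ} {P : Stream' Bool → Bool}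
    (hP : DependsOnFirst N P) (i : ℤ) :
    μ {x | P (ray x i)} = countWords N P * ENNReal.ofReal (1 / 2) ^ N := by
  simpa using measure_inter_setOf_ray hμ hP ∅ (fun _ => false) i (by simp)

/-- One window of `n + 5` cells for all blocks of length `≤ 3`, so that the counts below line up
with `countRightOf1`. -/
lemma measure_preimage_cylinder (hμ : IsBernoulli (1 / 2) μ) {n : ℕ} (hn : 1 ≤ n)
    {b : List Bool} (hb : b.length ≤ 3) :
    (μ (F^[n] ⁻¹' cylinder b)).toReal = countWords (n + 5) (occursAt n b) / 2 ^ (n + 5) := by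
  have hset : F^[n] ⁻¹' cylinder b = {x | occursAt n b (ray x (-2))} := by
    ext x
    simpa [_root_.cylinder] using forall_iterate_eca_rule172_eq_iff hn b x 0
  rw [hset, measure_setOf_ray hμ ((dependsOnFirst_occursAt n b).mono (M := n + 5) (by omega)),
    ENNReal.toReal_mul, ENNReal.toReal_pow, ENNReal.toReal_ofReal (by norm_num),
    ENNReal.toReal_natCast, one_div, inv_pow, div_eq_mul_inv]

end Measure

def countRightOf1 (φ : Bool → Bool → Bool → Bool) (m : ℕ) : ℕ :=
  countWords (m + 3) fun s => φ (rightOf1 m s) (rightOf1 (m + 1) s) (rightOf1 (m + 2) s)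

def countRightOf10 (φ : Bool → Bool → Bool → Bool) (m : ℕ) : ℕ :=
  countWords (m + 3) fun s => φ (rightOf10 m s) (rightOf10 (m + 1) s) (rightOf10 (m + 2) s)

@[simp] lemma rightOf1_succ_cons (n : ℕ) (a : Bool) (s : Stream' Bool) :
    rightOf1 (n + 1) (.cons a s) = if a then rightOf1 n s else rightOf10 n s := by
  rw [rightOf1_succ, Stream'.head_cons, Stream'.tail_cons]

@[simp] lemma rightOf10_add_two_cons (n : ℕ) (a : Bool) (s : Stream' Bool) :
    rightOf10 (n + 2) (.cons a s) = (a && rightOf1 (n + 1) s) := by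
  rw [rightOf10_add_two, Stream'.head_cons, Stream'.tail_cons]

@[simp] lemma cellValue_cons_cons (n : ℕ) (a b : Bool) (s : Stream' Bool) :
    cellValue n (.cons a (.cons b s)) =
      if b then rightOf1 n s else if a then rightOf10 n s else s.head :=
  rfl

lemma countRightOf1_succ (φ : Bool → Bool → Bool → Bool) (m : ℕ) :
    countRightOf1 φ (m + 1) = countRightOf1 φ m + countRightOf10 φ m := by
  simp [countRightOf1, countRightOf10, countWords_succ (m + 3), Nat.add_assoc]

lemma countRightOf10_add_two {φ : Bool → Bool → Bool → Bool} (hφ : φ false false false = false)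
    (m : ℕ) : countRightOf10 φ (m + 2) = countRightOf1 φ (m + 1) := by
  simp [countRightOf1, countRightOf10, countWords_succ (m + 4), Nat.add_assoc, hφ,
    countWords_const]

lemma countRightOf1_add_one {φ : Bool → Bool → Bool → Bool} (hφ : φ false false false = false)
    (m : ℕ) : countRightOf1 φ (m + 1) =
      countRightOf1 φ 1 * Nat.fib (m + 1) + countRightOf10 φ 1 * Nat.fib m := by
  induction m using Nat.twoStepInduction with
  | zero => simp
  | one => simpa using countRightOf1_succ φ 1
  | more m ih₀ ih₁ =>
    rw [countRightOf1_succ, countRightOf10_add_two hφ, ih₀, ih₁]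
    simp only [Nat.fib_add_two]
    ring

lemma countRightOf10_add_one {φ : Bool → Bool → Bool → Bool} (hφ : φ false false false = false)
    (m : ℕ) : countRightOf10 φ (m + 1) + countRightOf10 φ 1 * Nat.fib m =
      countRightOf1 φ 1 * Nat.fib m + countRightOf10 φ 1 * Nat.fib (m + 1) := by
  have h := countRightOf1_succ φ (m + 1)
  rw [countRightOf1_add_one hφ m, countRightOf1_add_one hφ (m + 1), Nat.fib_add_two] at h
  linarith

lemma countRightOf1_add_one_add_fib {φ : Bool → Bool → Bool → Bool}
    (hφ : φ false false false = true) (m : ℕ) :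
    countRightOf1 φ (m + 1) + (countRightOf1 (fun x y z => !φ x y z) 1 * Nat.fib (m + 1) +
      countRightOf10 (fun x y z => !φ x y z) 1 * Nat.fib m) = 2 ^ (m + 4) := by
  rw [← countRightOf1_add_one (φ := fun x y z => !φ x y z) (by simp [hφ])]
  exact countWords_add_not _ _

lemma countRightOf10_add_one_add_fib {φ : Bool → Bool → Bool → Bool}
    (hφ : φ false false false = true) (m : ℕ) :
    countRightOf10 φ (m + 1) + (countRightOf1 (fun x y z => !φ x y z) 1 * Nat.fib m +
      countRightOf10 (fun x y z => !φ x y z) 1 * Nat.fib (m + 1)) =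
      2 ^ (m + 4) + countRightOf10 (fun x y z => !φ x y z) 1 * Nat.fib m := by
  rw [← countRightOf10_add_one (φ := fun x y z => !φ x y z) (by simp [hφ]), ← add_assoc]
  exact congrArg (· + _) (countWords_add_not _ _)

/-! Cutting off the first `|b| + 1` letters: after a prefix without `00` every cell of the block
is a `rightOf1` value (prefix ending in `1`) or a `rightOf10` value (ending in `0`) of the rest;
a prefix containing `00` holds a frozen wall. -/

lemma countWords_occursAt_false (n : ℕ) :
    countWords (n + 5) (occursAt n [false]) =
      2 * countRightOf1 (fun x _ _ => !x) n + countRightOf10 (fun x _ _ => !x) n +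
        2 ^ (n + 2) := by
  simp only [countWords_succ (n + 3), countWords_succ (n + 4)]
  simp [occursAt, countRightOf1, countRightOf10, countWords_not_head]
  omega

lemma countWords_occursAt_false_false (m : ℕ) :
    countWords (m + 7) (occursAt (m + 2) [false, false]) =
      3 * countRightOf1 (fun x y _ => !x && !y) (m + 1) +
        2 * countRightOf10 (fun x y _ => !x && !y) (m + 1) + 2 * 2 ^ (m + 3) := by
  simp only [countWords_succ (m + 4), countWords_succ (m + 5), countWords_succ (m + 6)]
  simp [occursAt, countRightOf1, countRightOf10, Nat.add_assoc, countWords_not_head,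
    countWords_const]
  omega

lemma countWords_occursAt_false_false_false (m : ℕ) :
    countWords (m + 8) (occursAt (m + 3) [false, false, false]) =
      5 * countRightOf1 (fun x y z => !x && !y && !z) (m + 1) +
        3 * countRightOf10 (fun x y z => !x && !y && !z) (m + 1) + 4 * 2 ^ (m + 3) := by
  simp only [countWords_succ (m + 4), countWords_succ (m + 5), countWords_succ (m + 6),
    countWords_succ (m + 7)]
  simp [occursAt, countRightOf1, countRightOf10, Nat.add_assoc, Bool.and_assoc,
    countWords_not_head, countWords_const]
  omega

lemma countWords_occursAt_false_true_false (m : ℕ) :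
    countWords (m + 8) (occursAt (m + 3) [false, true, false]) =
      5 * countRightOf1 (fun x y z => !x && y && !z) (m + 1) +
        3 * countRightOf10 (fun x y z => !x && y && !z) (m + 1) +
          2 * countRightOf1 (fun _ _ z => !z) (m + 1) := by
  simp only [countWords_succ (m + 4), countWords_succ (m + 5), countWords_succ (m + 6),
    countWords_succ (m + 7)]
  simp [occursAt, countRightOf1, countRightOf10, Nat.add_assoc, Bool.and_assoc, countWords_const]
  omega

lemma countWords_occursAt_false_add_fib {n : ℕ} (hn : 1 ≤ n) :
    countWords (n + 5) (occursAt n [false]) + 8 * Nat.fib (n + 3) = 7 * 2 ^ (n + 2) := by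
  obtain ⟨m, rfl⟩ : ∃ m, n = m + 1 := ⟨n - 1, by omega⟩
  have hB := countRightOf1_add_one_add_fib (φ := fun x _ _ => !x) rfl m
  have hC := countRightOf10_add_one_add_fib (φ := fun x _ _ => !x) rfl m
  have hB1 : countRightOf1 (fun x y z => !(fun x _ _ => !x) x y z) 1 = 8 := by decide
  have hC1 : countRightOf10 (fun x y z => !(fun x _ _ => !x) x y z) 1 = 8 := by decide
  rw [hB1, hC1] at hB hC
  have := countWords_occursAt_false (m + 1)
  have f1 := Nat.fib_add_two (n := m)
  have f2 := Nat.fib_add_two (n := m + 1)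
  have f3 := Nat.fib_add_two (n := m + 2)
  ring_nf at *
  omega

lemma countWords_occursAt_false_false_add_fib {n : ℕ} (hn : 1 ≤ n) :
    countWords (n + 5) (occursAt n [false, false]) + (8 * Nat.fib (n + 3) + 2 * Nat.fib (n + 2)) =
      3 * 2 ^ (n + 3) := by
  match n, hn with
  | 1, _ => decide
  | m + 2, _ =>
    have hB := countRightOf1_add_one_add_fib (φ := fun x y _ => !x && !y) rfl m
    have hC := countRightOf10_add_one_add_fib (φ := fun x y _ => !x && !y) rfl m
    have hB1 : countRightOf1 (fun x y z => !(fun x y _ => !x && !y) x y z) 1 = 10 := by decide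
    have hC1 : countRightOf10 (fun x y z => !(fun x y _ => !x && !y) x y z) 1 = 8 := by decide
    rw [hB1, hC1] at hB hC
    have := countWords_occursAt_false_false m
    have f1 := Nat.fib_add_two (n := m)
    have f2 := Nat.fib_add_two (n := m + 1)
    have f3 := Nat.fib_add_two (n := m + 2)
    have f4 := Nat.fib_add_two (n := m + 3)
    ring_nf at *
    omega

lemma countWords_occursAt_false_false_false_add_fib {n : ℕ} (hn : 1 ≤ n) :
    countWords (n + 5) (occursAt n [false, false, false]) +
      (8 * Nat.fib (n + 3) + 2 * Nat.fib (n + 2)) = 5 * 2 ^ (n + 2) := by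
  match n, hn with
  | 1, _ => decide
  | 2, _ => decide
  | m + 3, _ =>
    have hB := countRightOf1_add_one_add_fib (φ := fun x y z => !x && !y && !z) rfl m
    have hC := countRightOf10_add_one_add_fib (φ := fun x y z => !x && !y && !z) rfl m
    have hB1 : countRightOf1 (fun x y z => !(fun x y z => !x && !y && !z) x y z) 1 = 10 := by
      decide
    have hC1 : countRightOf10 (fun x y z => !(fun x y z => !x && !y && !z) x y z) 1 = 8 := by
      decide
    rw [hB1, hC1] at hB hC
    have := countWords_occursAt_false_false_false m
    have f1 := Nat.fib_add_two (n := m)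
    have f2 := Nat.fib_add_two (n := m + 1)
    have f3 := Nat.fib_add_two (n := m + 2)
    have f4 := Nat.fib_add_two (n := m + 3)
    have f5 := Nat.fib_add_two (n := m + 4)
    ring_nf at *
    omega

lemma countWords_occursAt_false_true_false_add_fib {n : ℕ} (hn : 1 ≤ n) :
    countWords (n + 5) (occursAt n [false, true, false]) + 4 * Nat.fib (n + 1) = 2 ^ (n + 2) := by
  match n, hn with
  | 1, _ => decide
  | 2, _ => decide
  | m + 3, _ =>
    have hW := countRightOf1_add_one (φ := fun x y z => !x && y && !z) rfl m
    have hW' := countRightOf10_add_one (φ := fun x y z => !x && y && !z) rfl m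
    have hW1 : countRightOf1 (fun x y z => !x && y && !z) 1 = 0 := by decide
    have hW1' : countRightOf10 (fun x y z => !x && y && !z) 1 = 0 := by decide
    rw [hW1, hW1'] at hW hW'
    have hS := countRightOf1_add_one_add_fib (φ := fun _ _ z => !z) rfl m
    have hS1 : countRightOf1 (fun x y z => !(fun _ _ z => !z) x y z) 1 = 6 := by decide
    have hS1' : countRightOf10 (fun x y z => !(fun _ _ z => !z) x y z) 1 = 4 := by decide
    rw [hS1, hS1'] at hS
    have := countWords_occursAt_false_true_false m
    have f1 := Nat.fib_add_two (n := m)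
    have f2 := Nat.fib_add_two (n := m + 1)
    have f3 := Nat.fib_add_two (n := m + 2)
    ring_nf at *
    omega

end Rule172

open Rule172

theorem rule172_block_probabilities_half_general
    (μ : Measure (ℤ → Bool))
    (hber : IsBernoulli (1 / 2) μ) (n : ℕ) (hn : 1 ≤ n) :
    (μ ((eca rule172)^[n] ⁻¹' cylinder [false])).toReal
        = 7 / 8 - (Nat.fib (n + 3) : ℝ) / 2 ^ (n + 2) ∧
    (μ ((eca rule172)^[n] ⁻¹' cylinder [false, false])).toReal
        = 3 / 4 - (Nat.fib (n + 3) : ℝ) / 2 ^ (n + 2) - (Nat.fib (n + 2) : ℝ) / 2 ^ (n + 4) ∧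
    (μ ((eca rule172)^[n] ⁻¹' cylinder [false, false, false])).toReal
        = 5 / 8 - (Nat.fib (n + 3) : ℝ) / 2 ^ (n + 2) - (Nat.fib (n + 2) : ℝ) / 2 ^ (n + 4) ∧
    (μ ((eca rule172)^[n] ⁻¹' cylinder [false, true, false])).toReal
        = 1 / 8 - (Nat.fib (n + 1) : ℝ) / 2 ^ (n + 3) := by
  have cast_eq {c a k : ℕ} (h : c + a = k) : (c : ℝ) = k - a := by
    rw [eq_sub_iff_add_eq]
    exact_mod_cast h
  rw [measure_preimage_cylinder hber hn (by simp), measure_preimage_cylinder hber hn (by simp),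
    measure_preimage_cylinder hber hn (by simp), measure_preimage_cylinder hber hn (by simp),
    cast_eq (countWords_occursAt_false_add_fib hn),
    cast_eq (countWords_occursAt_false_false_add_fib hn),
    cast_eq (countWords_occursAt_false_false_false_add_fib hn),
    cast_eq (countWords_occursAt_false_true_false_add_fib hn)]
  push_cast
  refine ⟨?_, ?_, ?_, ?_⟩ <;> (field_simp; ring)

/-- exact block probabilities (short block representation, lengths ≤ 3)
for ECA rule 172 started from the symmetric Bernoulli measure `μ_{1/2}`, in terms of
Fibonacci numbers (`F_1 = F_2 = 1`). -/
theorem rule172_block_probabilities_half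
    (μ : Measure (ℤ → Bool)) (hprob : IsProbabilityMeasure μ)
    (hber : IsBernoulli (1 / 2) μ) (n : ℕ) (hn : 1 ≤ n) :
    (μ ((eca rule172)^[n] ⁻¹' cylinder [false])).toReal
        = 7 / 8 - (Nat.fib (n + 3) : ℝ) / 2 ^ (n + 2) ∧
    (μ ((eca rule172)^[n] ⁻¹' cylinder [false, false])).toReal
        = 3 / 4 - (Nat.fib (n + 3) : ℝ) / 2 ^ (n + 2) - (Nat.fib (n + 2) : ℝ) / 2 ^ (n + 4) ∧
    (μ ((eca rule172)^[n] ⁻¹' cylinder [false, false, false])).toReal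
        = 5 / 8 - (Nat.fib (n + 3) : ℝ) / 2 ^ (n + 2) - (Nat.fib (n + 2) : ℝ) / 2 ^ (n + 4) ∧
    (μ ((eca rule172)^[n] ⁻¹' cylinder [false, true, false])).toReal
        = 1 / 8 - (Nat.fib (n + 1) : ℝ) / 2 ^ (n + 3) :=
  rule172_block_probabilities_half_general μ hber n hn
end

section
/- Let F be the global map of ECA rule 172 and let 0 < p ≤ 1. Define λ_1 = p/2 + (1/2)√(p(4−3p)), λ_2 = p/2 − (1/2)√(p(4−3p)), α_1 = (p/2 − 1)√(p(4−3p)) + (p²/2 − 1), and α_2 = (p/2 − 1)√(p(4−3p)) − (p²/2 − 1). Then for every n ≥ 1, the probability of the symbol 0 after n iterations starting from the Bernoulli measure μ_p is P_n(0) = 1 − (1−p)²·p − (p²/(λ_2 − λ_1))·(α_1·λ_1^{n−1} + α_2·λ_2^{n−1}). -/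
open MeasureTheory

namespace R172

noncomputable abbrev F : (ℤ → Bool) → (ℤ → Bool) := eca rule172

lemma F_apply (x : ℤ → Bool) (j : ℤ) : F x j = rule172 (x (j-1)) (x j) (x (j+1)) := rfl

def PairOk (x : ℤ → Bool) (j : ℤ) : Prop := x (j-1) = true ∨ x j = true
def NoZZ (x : ℤ → Bool) (n : ℕ) : Prop := ∀ j : ℤ, 0 ≤ j → j ≤ (n:ℤ) → PairOk x j
def Tl (x : ℤ → Bool) (n : ℕ) : Prop :=
  x ((n:ℤ)-2) = true ∧ x ((n:ℤ)-1) = true ∧ x (n:ℤ) = false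
def Gx (x : ℤ → Bool) : Prop := x (-2) = false ∧ x (-1) = false ∧ x 0 = true
def Cx (x : ℤ → Bool) : Prop := x (-1) = true ∨ (x 0 = true ∧ x (-2) = true)
def Hx (x : ℤ → Bool) (n : ℕ) : Prop := NoZZ x n ∧ ¬ Tl x n ∧ Cx x

/-- persistence of 00 -/
lemma LA {x : ℤ → Bool} {j : ℤ} (h1 : x (j-1) = false) (h2 : x j = false) :
    F x (j-1) = false ∧ F x j = false := by
  have e1 : j - 1 - 1 = j - 2 := by ring
  have e2 : j - 1 + 1 = j := by ring
  rw [F_apply, F_apply, e1, e2]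
  cases hx : x (j-2) <;> simp [rule172, h1, h2, hx]

/-- no-00 propagates -/
lemma L1 {x : ℤ → Bool} {j : ℤ} (h1 : PairOk x (j-1)) (h2 : PairOk x j)
    (h3 : PairOk x (j+1)) : PairOk (F x) j := by
  unfold PairOk at *
  have e1 : j - 1 - 1 = j - 2 := by ring
  have e2 : j - 1 + 1 = j := by ring
  have e3 : j + 1 - 1 = j := by ring
  rw [F_apply, F_apply, e1, e2]
  rw [e3] at h3
  cases ha : x (j-2) <;> cases hb : x (j-1) <;> cases hc : x j <;> cases hd : x (j+1) <;>
    simp_all [rule172]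

/-- inversion of F x j = false -/
lemma LT {x : ℤ → Bool} {j : ℤ} (h : F x j = false) :
    (x (j-1) = false ∧ x j = false) ∨ (x (j-1) = true ∧ x (j+1) = false) := by
  rw [F_apply] at h
  cases ha : x (j-1) <;> cases hb : x j <;> cases hc : x (j+1) <;> simp_all [rule172]

lemma stepId (n : ℕ) (hn : 1 ≤ n) (x : ℤ → Bool) :
    (Gx x ∨ Hx x (n+1)) ↔ (Gx (F x) ∨ Hx (F x) n) := by
  constructor
  · rintro (⟨hc, hb, h0⟩ | ⟨hno, hT, hC⟩)
    · -- G x → G (F x)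
      left
      refine ⟨?_, ?_, ?_⟩
      · show F x (-2) = false
        rw [F_apply]
        norm_num
        cases h3 : x (-3) <;> simp [rule172, h3, hc, hb, show (-2:ℤ)-1 = -3 by ring] <;>
          simp_all [show (-2:ℤ)-1 = -3 by ring]
      · show F x (-1) = false
        rw [F_apply]
        norm_num [show (-1:ℤ)-1 = -2 by ring, show (-1:ℤ)+1 = 0 by ring] at *
        simp [rule172, hc, hb]
      · show F x 0 = true
        rw [F_apply]
        norm_num [show (0:ℤ)-1 = -1 by ring] at *
        simp [rule172, hb, h0]
    · -- H (n+1) x → H n (F x)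
      right
      have pm1 : PairOk x (-1) := by
        rcases hC with h | ⟨h0, h2⟩
        · right; exact h
        · left; rw [show (-1:ℤ)-1 = -2 by ring]; exact h2
      have hno' : ∀ j : ℤ, -1 ≤ j → j ≤ (n:ℤ)+1 → PairOk x j := by
        intro j hj1 hj2
        rcases eq_or_lt_of_le hj1 with h | h
        · rw [← h]; exact pm1
        · exact hno j (by omega) (by push_cast; omega)
      refine ⟨?_, ?_, ?_⟩
      · intro j hj1 hj2
        exact L1 (hno' (j-1) (by omega) (by omega)) (hno' j (by omega) (by omega))
          (hno' (j+1) (by omega) (by omega))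
      · rintro ⟨-, -, h3⟩
        rcases LT h3 with ⟨ha, hb'⟩ | ⟨ha, hb'⟩
        · rcases hno' (n:ℤ) (by omega) (by omega) with h | h <;> simp_all
        · -- x(n-1)=tt, x(n+1)=ff ; pair at n+1 gives x n = tt ; so Tl x (n+1)
          apply hT
          have hp := hno' ((n:ℤ)+1) (by omega) (by omega)
          unfold PairOk at hp
          rw [show (n:ℤ)+1-1 = (n:ℤ) by ring] at hp
          refine ⟨?_, ?_, ?_⟩
          · rw [show ((n+1:ℕ):ℤ)-2 = (n:ℤ)-1 by push_cast; ring]; exact ha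
          · rw [show ((n+1:ℕ):ℤ)-1 = (n:ℤ) by push_cast; ring]
            rcases hp with h | h
            · exact h
            · simp_all
          · rw [show ((n+1:ℕ):ℤ) = (n:ℤ)+1 by push_cast; ring]; exact hb'
      · -- Cx (F x)
        unfold Cx
        cases hb : x (-1)
        · -- b = false: hC gives x0 = tt, c = tt
          rcases hC with h | ⟨h0, h2⟩
          · simp [hb] at h
          · left
            rw [F_apply]
            norm_num [show (-1:ℤ)-1 = -2 by ring, show (-1:ℤ)+1 = 0 by ring]
            simp [rule172, h2, h0]
        · cases hc : x (-2)
          · left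
            rw [F_apply]
            norm_num [show (-1:ℤ)-1 = -2 by ring, show (-1:ℤ)+1 = 0 by ring]
            simp [rule172, hc, hb]
          · cases h0 : x 0
            · -- b=tt, c=tt, x0=ff: use pair j=1 to get x1=tt
              have hp : x 1 = true := by
                have := hno 1 (by omega) (by push_cast; omega)
                unfold PairOk at this
                norm_num at this
                rcases this with h | h
                · simp_all
                · exact h
              right
              constructor
              · rw [F_apply]
                norm_num [show (0:ℤ)-1 = -1 by ring]
                simp [rule172, hb, hp]
              · rw [F_apply]
                norm_num [show (-2:ℤ)-1 = -3 by ring, show (-2:ℤ)+1 = -1 by ring]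
                cases h3 : x (-3) <;> simp [rule172, h3, hc, hb]
            · left
              rw [F_apply]
              norm_num [show (-1:ℤ)-1 = -2 by ring, show (-1:ℤ)+1 = 0 by ring]
              simp [rule172, hc, h0]
  · rintro (⟨g2, g1, g0⟩ | ⟨hno', hT', hC'⟩)
    · -- G (F x) → G x
      left
      rw [F_apply] at g2 g1 g0
      norm_num [show (-2:ℤ)-1 = -3 by ring, show (-2:ℤ)+1 = -1 by ring,
        show (-1:ℤ)-1 = -2 by ring, show (-1:ℤ)+1 = 0 by ring,
        show (0:ℤ)-1 = -1 by ring] at g2 g1 g0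
      cases hb : x (-1) <;> cases hc : x (-2) <;> cases h0 : x 0 <;>
        cases h1 : x 1 <;> cases h3 : x (-3) <;> simp_all [rule172, Gx]
    · by_cases hG : Gx x
      · left; exact hG
      right
      -- part (ii) : Cx x
      have hCx : Cx x := by
        by_contra hne
        unfold Cx at hne
        push_neg at hne
        obtain ⟨hb, hoc⟩ := hne
        simp only [ne_eq, Bool.not_eq_true] at hb
        cases h0 : x 0
        · -- b=ff, x0=ff
          apply hC'.elim
          · intro h
            rw [F_apply] at h
            norm_num [show (-1:ℤ)-1 = -2 by ring, show (-1:ℤ)+1 = 0 by ring] at h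
            cases hc : x (-2) <;> simp_all [rule172]
          · rintro ⟨h, -⟩
            rw [F_apply] at h
            norm_num [show (0:ℤ)-1 = -1 by ring] at h
            simp_all [rule172]
        · have hc : x (-2) = false := by
            have := hoc h0
            simpa using this
          exact hG ⟨hc, hb, h0⟩
      -- part (i) : NoZZ x (n+1)
      have hNo : NoZZ x (n+1) := by
        intro j hj1 hj2
        by_contra hp
        unfold PairOk at hp
        push_neg at hp
        simp only [ne_eq, Bool.not_eq_true] at hp
        obtain ⟨hpa, hpb⟩ := hp
        rcases lt_or_ge j ((n:ℤ)+1) with hlt | hge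
        · -- j ≤ n
          obtain ⟨q1, q2⟩ := LA hpa hpb
          rcases hno' j hj1 (by omega) with h | h <;> simp_all [PairOk]
        · -- j = n+1
          have hj : j = (n:ℤ)+1 := by push_cast at hj2; omega
          subst hj
          rw [show (n:ℤ)+1-1 = (n:ℤ) by ring] at hpa
          have hFn : F x (n:ℤ) = false := by
            rw [F_apply]
            cases hz : x ((n:ℤ)-1) <;> simp [rule172, hz, hpa, hpb]
          have hFn1 : F x ((n:ℤ)-1) = true := by
            rcases hno' (n:ℤ) (by omega) (by omega) with h | h
            · exact h
            · simp_all
          have hFn2 : F x ((n:ℤ)-2) = false := by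
            by_contra h
            rw [Bool.not_eq_false] at h
            exact hT' ⟨h, hFn1, hFn⟩
          -- decode hFn1 : x(n-2)=ff ∧ x(n-1)=tt
          rw [F_apply, show (n:ℤ)-1-1 = (n:ℤ)-2 by ring, show (n:ℤ)-1+1 = (n:ℤ) by ring]
            at hFn1
          have h2 : x ((n:ℤ)-2) = false ∧ x ((n:ℤ)-1) = true := by
            cases ha : x ((n:ℤ)-2) <;> simp_all [rule172]
          rw [F_apply, show (n:ℤ)-2-1 = (n:ℤ)-3 by ring, show (n:ℤ)-2+1 = (n:ℤ)-1 by ring]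
            at hFn2
          have h3 : x ((n:ℤ)-3) = false := by
            cases ha : x ((n:ℤ)-3) <;> simp_all [rule172]
          rcases Nat.lt_or_ge n 2 with h | h
          · -- n = 1 : G x
            interval_cases n
            · exact hG ⟨by simpa using h3, by simpa using h2.1, by simpa using h2.2⟩
          · -- n ≥ 2 : LA at n-2
            obtain ⟨q1, q2⟩ := LA (by rw [show (n:ℤ)-2-1 = (n:ℤ)-3 by ring]; exact h3) h2.1
            rcases hno' ((n:ℤ)-2) (by omega) (by omega) with hq | hq <;> simp_all [PairOk]
      refine ⟨hNo, ?_, hCx⟩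
      -- part (iii) : ¬ Tl x (n+1)
      rintro ⟨t1, t2, t3⟩
      rw [show ((n+1:ℕ):ℤ)-2 = (n:ℤ)-1 by push_cast; ring] at t1
      rw [show ((n+1:ℕ):ℤ)-1 = (n:ℤ) by push_cast; ring] at t2
      rw [show ((n+1:ℕ):ℤ) = (n:ℤ)+1 by push_cast; ring] at t3
      have hFn : F x (n:ℤ) = false := by
        rw [F_apply]; simp [rule172, t1, t3]
      have hFn1 : F x ((n:ℤ)-1) = true := by
        rw [F_apply, show (n:ℤ)-1-1 = (n:ℤ)-2 by ring, show (n:ℤ)-1+1 = (n:ℤ) by ring]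
        cases ha : x ((n:ℤ)-2) <;> simp [rule172, ha, t1, t2]
      have hFn2 : F x ((n:ℤ)-2) = false := by
        by_contra h
        rw [Bool.not_eq_false] at h
        exact hT' ⟨h, hFn1, hFn⟩
      rw [F_apply, show (n:ℤ)-2-1 = (n:ℤ)-3 by ring, show (n:ℤ)-2+1 = (n:ℤ)-1 by ring]
        at hFn2
      have h3 : x ((n:ℤ)-3) = false ∧ x ((n:ℤ)-2) = false := by
        cases ha : x ((n:ℤ)-3) <;> simp_all [rule172]
      rcases Nat.lt_or_ge n 2 with h | h
      · interval_cases n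
        · exact hG ⟨by simpa using h3.1, by simpa using h3.2, by simpa using t1⟩
      · rcases hNo ((n:ℤ)-2) (by omega) (by push_cast; omega) with hq | hq
        · rw [show (n:ℤ)-2-1 = (n:ℤ)-3 by ring] at hq; simp_all
        · simp_all

theorem main (n : ℕ) (hn : 1 ≤ n) : ∀ x : ℤ → Bool,
    (F^[n] x) 0 = true ↔ (Gx x ∨ Hx x n) := by
  induction n, hn using Nat.le_induction with
  | base =>
    intro x
    rw [Function.iterate_one]
    have hnz : NoZZ x 1 ↔ (PairOk x 0 ∧ PairOk x 1) := by
      constructor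
      · intro h; exact ⟨h 0 (by omega) (by omega), h 1 (by omega) (by omega)⟩
      · rintro ⟨h0, h1⟩ j hj1 hj2
        interval_cases j
        · exact h0
        · exact h1
    rw [show F x 0 = rule172 (x (-1)) (x 0) (x 1) by rw [F_apply]; norm_num]
    unfold Gx Hx Tl Cx
    rw [hnz]
    unfold PairOk
    norm_num
    cases hc : x (-2) <;> cases hb : x (-1) <;> cases h0 : x 0 <;> cases h1 : x 1 <;>
      simp_all [rule172]
  | succ n hn ih =>
    intro x
    rw [Function.iterate_succ_apply]
    rw [ih (F x)]
    exact (stepId n hn x).symm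

end R172


namespace R172

lemma cylMeasure {p : ℝ} {μ : Measure (ℤ → Bool)} (hber : IsBernoulli p μ)
    (m : ℕ) (k : ℤ) (Q : (Fin m → Bool) → Prop) [DecidablePred Q] :
    μ {x | Q (fun i => x (k + (i : ℤ)))} =
      ∑ v ∈ Finset.univ.filter Q,
        ∏ i : Fin m, (if v i then ENNReal.ofReal p else ENNReal.ofReal (1-p)) := by
  classical
  set S : (Fin m → Bool) → Set (ℤ → Bool) := fun v => {x | ∀ i : Fin m, x (k + (i:ℤ)) = v i}
    with hS
  have hmem : ∀ (x : ℤ → Bool) (v : Fin m → Bool),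
      x ∈ S v ↔ (fun i : Fin m => x (k + (i:ℤ))) = v := by
    intro x v
    constructor
    · intro h; funext i; exact h i
    · intro h i; exact congrFun h i
  have hset : {x | Q (fun i : Fin m => x (k + (i:ℤ)))} = ⋃ v ∈ Finset.univ.filter Q, S v := by
    ext x
    simp only [Set.mem_setOf_eq, Set.mem_iUnion, Finset.mem_filter, Finset.mem_univ, true_and]
    constructor
    · intro h
      exact ⟨fun i => x (k + (i:ℤ)), h, (hmem x _).2 rfl⟩
    · rintro ⟨v, hv, hx⟩
      rw [(hmem x v).1 hx]
      exact hv
  have hmeas : ∀ v : Fin m → Bool, MeasurableSet (S v) := by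
    intro v
    have : S v = ⋂ i : Fin m, (fun x : ℤ → Bool => x (k + (i:ℤ))) ⁻¹' {v i} := by
      ext x; simp [hS, Set.mem_iInter]
    rw [this]
    exact MeasurableSet.iInter fun i =>
      (measurable_pi_apply (k + (i:ℤ))) (measurableSet_singleton (v i))
  have hdisj : (↑(Finset.univ.filter Q) : Set (Fin m → Bool)).PairwiseDisjoint S := by
    intro v _ v' _ hvv'
    apply Set.disjoint_left.2
    intro x hx hx'
    exact hvv' (((hmem x v).1 hx).symm.trans ((hmem x v').1 hx'))
  rw [hset, measure_biUnion_finset hdisj fun v _ => hmeas v]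
  apply Finset.sum_congr rfl
  intro v _
  have hinj : Function.Injective (fun i : Fin m => k + (i:ℤ)) := by
    intro a b h
    simp only at h
    have : ((a:ℕ):ℤ) = ((b:ℕ):ℤ) := by omega
    exact Fin.ext (by exact_mod_cast this)
  set s : Finset ℤ := Finset.univ.image (fun i : Fin m => k + (i:ℤ)) with hs
  set f : ℤ → Bool := fun z => decide (∃ i : Fin m, k + (i:ℤ) = z ∧ v i = true) with hf
  have hfv : ∀ i : Fin m, f (k + (i:ℤ)) = v i := by
    intro i
    rw [hf]
    cases hvi : v i
    · simp only [decide_eq_false_iff_not]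
      rintro ⟨i', hi', hvi'⟩
      have : i' = i := hinj hi'
      rw [this] at hvi'
      simp [hvi] at hvi'
    · simp only [decide_eq_true_eq]
      exact ⟨i, rfl, hvi⟩
  have hSv : S v = {x | ∀ i ∈ s, x i = f i} := by
    ext x
    simp only [hS, Set.mem_setOf_eq, hs, Finset.mem_image, Finset.mem_univ, true_and]
    constructor
    · rintro h z ⟨i, rfl⟩
      rw [hfv i]; exact h i
    · intro h i
      rw [← hfv i]
      exact h _ ⟨i, rfl⟩
  rw [hSv, hber s f, hs, Finset.prod_image (fun a _ b _ h => hinj h)]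
  apply Finset.prod_congr rfl
  intro i _
  rw [hfv i]

end R172


namespace R172

/-- weight of a single symbol -/
def w (p : ℝ) (b : Bool) : ℝ := if b then p else 1 - p

/-- weight of a word -/
def Wt (p : ℝ) {m : ℕ} (v : Fin m → Bool) : ℝ := ∏ i, w p (v i)

/-- padded evaluation -/
def ext {m : ℕ} (v : Fin m → Bool) (k : ℕ) : Bool := if h : k < m then v ⟨k, h⟩ else true

def QnoZZ {m : ℕ} (v : Fin m → Bool) : Prop :=
  ∀ k < m, 1 ≤ k → k + 1 < m → (ext v k = true ∨ ext v (k+1) = true)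

def QC {m : ℕ} (v : Fin m → Bool) : Prop :=
  ext v 1 = true ∨ (ext v 2 = true ∧ ext v 0 = true)

def QG {m : ℕ} (v : Fin m → Bool) : Prop :=
  ext v 0 = false ∧ ext v 1 = false ∧ ext v 2 = true

def QT (n : ℕ) (v : Fin (n+3) → Bool) : Prop :=
  ext v n = true ∧ ext v (n+1) = true ∧ ext v (n+2) = false

instance {m : ℕ} (v : Fin m → Bool) : Decidable (QnoZZ v) := by
  unfold QnoZZ; infer_instance
instance {m : ℕ} (v : Fin m → Bool) : Decidable (QC v) := by
  unfold QC; infer_instance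
instance {m : ℕ} (v : Fin m → Bool) : Decidable (QG v) := by
  unfold QG; infer_instance
instance {n : ℕ} (v : Fin (n+3) → Bool) : Decidable (QT n v) := by
  unfold QT; infer_instance

/-- snoc equivalence sum -/
lemma sum_snoc {m : ℕ} (g : (Fin (m+1) → Bool) → ℝ) :
    ∑ v : Fin (m+1) → Bool, g v
      = ∑ u : Fin m → Bool, (g (Fin.snoc u false) + g (Fin.snoc u true)) := by
  classical
  let e : ((Fin m → Bool) × Bool) ≃ (Fin (m+1) → Bool) :=
    { toFun := fun q => Fin.snoc q.1 q.2
      invFun := fun v => (Fin.init v, v (Fin.last m))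
      left_inv := by
        rintro ⟨u, t⟩
        simp [Fin.init_snoc, Fin.snoc_last]
      right_inv := by
        intro v
        exact Fin.snoc_init_self v }
  rw [← Equiv.sum_comp e g, Fintype.sum_prod_type]
  apply Finset.sum_congr rfl
  intro u _
  rw [Fintype.sum_bool]
  simp only [e, Equiv.coe_fn_mk]
  ring

lemma Wt_snoc (p : ℝ) {m : ℕ} (u : Fin m → Bool) (t : Bool) :
    Wt p (Fin.snoc u t) = Wt p u * w p t := by
  unfold Wt
  rw [Fin.prod_univ_castSucc]
  simp [Fin.snoc_castSucc, Fin.snoc_last]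

lemma ext_snoc {m : ℕ} (u : Fin m → Bool) (t : Bool) (k : ℕ) :
    ext (Fin.snoc u t) k = if k = m then t else ext u k := by
  unfold ext
  rcases lt_trichotomy k m with h | h | h
  · rw [dif_pos (by omega), if_neg (by omega), dif_pos h]
    have he : (⟨k, by omega⟩ : Fin (m+1)) = Fin.castSucc ⟨k, h⟩ := rfl
    rw [he, Fin.snoc_castSucc]
  · subst h
    rw [dif_pos (by omega), if_pos rfl]
    have he : (⟨k, by omega⟩ : Fin (k+1)) = Fin.last k := rfl
    rw [he, Fin.snoc_last]
  · rw [dif_neg (by omega), if_neg (by omega), dif_neg (by omega)]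

lemma QC_snoc {m : ℕ} (hm : 3 ≤ m) (u : Fin m → Bool) (t : Bool) :
    QC (Fin.snoc u t) ↔ QC u := by
  unfold QC
  rw [ext_snoc, ext_snoc, ext_snoc,
    if_neg (by omega), if_neg (by omega), if_neg (by omega)]

lemma QG_snoc {m : ℕ} (hm : 3 ≤ m) (u : Fin m → Bool) (t : Bool) :
    QG (Fin.snoc u t) ↔ QG u := by
  unfold QG
  rw [ext_snoc, ext_snoc, ext_snoc,
    if_neg (by omega), if_neg (by omega), if_neg (by omega)]

lemma QnoZZ_snoc {m : ℕ} (hm : 2 ≤ m) (u : Fin m → Bool) (t : Bool) :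
    QnoZZ (Fin.snoc u t) ↔ QnoZZ u ∧ (ext u (m-1) = true ∨ t = true) := by
  constructor
  · intro h
    constructor
    · intro k hk hk1 hk2
      have := h k (by omega) hk1 (by omega)
      rwa [ext_snoc, if_neg (by omega), ext_snoc, if_neg (by omega)] at this
    · have := h (m-1) (by omega) (by omega) (by omega)
      rwa [ext_snoc, if_neg (by omega), ext_snoc, if_pos (by omega)] at this
  · rintro ⟨h1, h2⟩ k hk hk1 hk2
    rw [ext_snoc, ext_snoc]
    rcases Nat.lt_or_ge (k+1) m with h | h
    · rw [if_neg (by omega), if_neg (by omega)]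
      exact h1 k (by omega) hk1 h
    · have : k + 1 = m := by omega
      rw [if_neg (by omega), if_pos this]
      have : k = m - 1 := by omega
      rw [this]
      exact h2

noncomputable def AS (p : ℝ) (m : ℕ) : ℝ :=
  ∑ v : Fin m → Bool, (if QnoZZ v ∧ QC v ∧ ext v (m-1) = true then Wt p v else 0)
noncomputable def BS (p : ℝ) (m : ℕ) : ℝ :=
  ∑ v : Fin m → Bool, (if QnoZZ v ∧ QC v ∧ ext v (m-1) = false then Wt p v else 0)
noncomputable def GS (p : ℝ) (m : ℕ) : ℝ :=
  ∑ v : Fin m → Bool, (if QG v then Wt p v else 0)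
noncomputable def TS (p : ℝ) (n : ℕ) : ℝ :=
  ∑ v : Fin (n+3) → Bool, (if QnoZZ v ∧ QC v ∧ QT n v then Wt p v else 0)
noncomputable def ZS (p : ℝ) (m : ℕ) : ℝ :=
  ∑ v : Fin m → Bool, Wt p v

lemma ZS_zero (p : ℝ) : ZS p 0 = 1 := by
  unfold ZS
  rw [Fintype.sum_unique]
  unfold Wt
  simp

lemma ZS_succ (p : ℝ) (m : ℕ) : ZS p (m+1) = ZS p m := by
  unfold ZS
  rw [sum_snoc]
  apply Finset.sum_congr rfl
  intro u _
  rw [Wt_snoc, Wt_snoc]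
  unfold w
  simp
  ring

lemma ZS_one (p : ℝ) (m : ℕ) : ZS p m = 1 := by
  induction m with
  | zero => exact ZS_zero p
  | succ k ih => rw [ZS_succ, ih]

lemma AS_succ (p : ℝ) {m : ℕ} (hm : 3 ≤ m) :
    AS p (m+1) = p * (AS p m + BS p m) := by
  unfold AS BS
  rw [sum_snoc, ← Finset.sum_add_distrib, Finset.mul_sum]
  apply Finset.sum_congr rfl
  intro u _
  rw [show m + 1 - 1 = m from rfl]
  simp only [QnoZZ_snoc (by omega : 2 ≤ m), QC_snoc hm, ext_snoc, if_pos rfl, Wt_snoc]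
  by_cases h1 : QnoZZ u <;> by_cases h2 : QC u <;> cases h3 : ext u (m-1) <;>
    simp [h1, h2, h3, w] <;> ring

lemma BS_succ (p : ℝ) {m : ℕ} (hm : 3 ≤ m) :
    BS p (m+1) = (1 - p) * AS p m := by
  unfold AS BS
  rw [sum_snoc, Finset.mul_sum]
  apply Finset.sum_congr rfl
  intro u _
  rw [show m + 1 - 1 = m from rfl]
  simp only [QnoZZ_snoc (by omega : 2 ≤ m), QC_snoc hm, ext_snoc, if_pos rfl, Wt_snoc]
  by_cases h1 : QnoZZ u <;> by_cases h2 : QC u <;> cases h3 : ext u (m-1) <;>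
    simp [h1, h2, h3, w] <;> ring

end R172

namespace R172

lemma Wt_zero (p : ℝ) (u : Fin 0 → Bool) : Wt p u = 1 := by
  unfold Wt; simp

lemma QnoZZ_two (v : Fin 2 → Bool) : QnoZZ v := by
  intro k hk hk1 hk2; omega

lemma QnoZZ_three (v : Fin 3 → Bool) :
    QnoZZ v ↔ (ext v 1 = true ∨ ext v 2 = true) := by
  constructor
  · intro h; exact h 1 (by omega) (by omega) (by omega)
  · intro h k hk hk1 hk2
    have : k = 1 := by omega
    subst this; exact h

lemma AS_two (p : ℝ) : AS p 2 = p := by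
  unfold AS
  rw [show (2:ℕ) = 1 + 1 from rfl, sum_snoc, sum_snoc, Fintype.sum_unique]
  simp only [QC, ext_snoc, Wt_snoc, Wt_zero]
  norm_num [QnoZZ_two, ext, w]
  ring

lemma BS_two (p : ℝ) : BS p 2 = p * (1 - p) := by
  unfold BS
  rw [show (2:ℕ) = 1 + 1 from rfl, sum_snoc, sum_snoc, Fintype.sum_unique]
  simp only [QC, ext_snoc, Wt_snoc, Wt_zero]
  norm_num [QnoZZ_two, ext, w]

lemma AS_three (p : ℝ) : AS p 3 = p * (p + p * (1 - p)) := by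
  unfold AS
  rw [show (3:ℕ) = 1 + 1 + 1 from rfl, sum_snoc, sum_snoc, sum_snoc, Fintype.sum_unique]
  simp only [QnoZZ_three, QC, ext_snoc, Wt_snoc, Wt_zero]
  norm_num [ext, w]
  ring

lemma BS_three (p : ℝ) : BS p 3 = (1 - p) * p := by
  unfold BS
  rw [show (3:ℕ) = 1 + 1 + 1 from rfl, sum_snoc, sum_snoc, sum_snoc, Fintype.sum_unique]
  simp only [QnoZZ_three, QC, ext_snoc, Wt_snoc, Wt_zero]
  norm_num [ext, w]
  ring

lemma AS_succ' (p : ℝ) {m : ℕ} (hm : 2 ≤ m) :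
    AS p (m+1) = p * (AS p m + BS p m) := by
  rcases Nat.lt_or_ge m 3 with h | h
  · have : m = 2 := by omega
    subst this
    rw [AS_three, AS_two, BS_two]
  · exact AS_succ p h

lemma BS_succ' (p : ℝ) {m : ℕ} (hm : 2 ≤ m) :
    BS p (m+1) = (1 - p) * AS p m := by
  rcases Nat.lt_or_ge m 3 with h | h
  · have : m = 2 := by omega
    subst this
    rw [BS_three, AS_two]
  · exact BS_succ p h

lemma GS_three (p : ℝ) : GS p 3 = (1-p) * (1-p) * p := by
  unfold GS
  rw [show (3:ℕ) = 1 + 1 + 1 from rfl, sum_snoc, sum_snoc, sum_snoc, Fintype.sum_unique]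
  simp only [QG, ext_snoc, Wt_snoc, Wt_zero]
  norm_num [ext, w]

lemma GS_succ (p : ℝ) {m : ℕ} (hm : 3 ≤ m) : GS p (m+1) = GS p m := by
  unfold GS
  rw [sum_snoc]
  apply Finset.sum_congr rfl
  intro u _
  simp only [QG_snoc hm, Wt_snoc]
  by_cases h : QG u <;> simp [h, w] <;> ring

lemma GS_eq (p : ℝ) {m : ℕ} (hm : 3 ≤ m) : GS p m = (1-p) * (1-p) * p := by
  induction m with
  | zero => omega
  | succ k ih =>
    rcases Nat.lt_or_ge k 3 with h | h
    · have : k = 2 := by omega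
      subst this
      exact GS_three p
    · rw [GS_succ p h, ih h]

/-- the solution sequence -/
noncomputable def jj (p : ℝ) : ℕ → ℝ
  | 0 => p
  | 1 => p^2*(2-p)
  | (n+2) => p * jj p (n+1) + p*(1-p) * jj p n

lemma key (p : ℝ) : ∀ k : ℕ,
    AS p (k+4) + BS p (k+4) - p*(1-p)*(AS p (k+2)) = jj p (k+1) := by
  intro k
  induction k using Nat.twoStepInduction with
  | zero =>
    rw [show (0+4 : ℕ) = 3+1 from rfl, show (0+2 : ℕ) = 2 from rfl,
      AS_succ' p (m := 3) (by omega), BS_succ' p (m := 3) (by omega),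
      AS_three, BS_three, AS_two]
    show _ = p^2*(2-p)
    ring
  | one =>
    rw [show (1+4 : ℕ) = 4+1 from rfl, show (1+2 : ℕ) = 3 from rfl,
      AS_succ' p (m := 4) (by omega), BS_succ' p (m := 4) (by omega),
      show (4 : ℕ) = 3+1 from rfl,
      AS_succ' p (m := 3) (by omega), BS_succ' p (m := 3) (by omega),
      AS_three, BS_three]
    show _ = p * (p^2*(2-p)) + p*(1-p) * p
    ring
  | more k ih1 ih2 =>
    have e1 : AS p (k+2+4) = p * (AS p (k+5) + BS p (k+5)) := AS_succ' p (m := k+5) (by omega)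
    have e2 : BS p (k+2+4) = (1-p) * AS p (k+5) := BS_succ' p (m := k+5) (by omega)
    have e3 : AS p (k+5) = p * (AS p (k+4) + BS p (k+4)) := AS_succ' p (m := k+4) (by omega)
    have e4 : BS p (k+5) = (1-p) * AS p (k+4) := BS_succ' p (m := k+4) (by omega)
    have e5 : AS p (k+4) = p * (AS p (k+3) + BS p (k+3)) := AS_succ' p (m := k+3) (by omega)
    have e6 : BS p (k+4) = (1-p) * AS p (k+3) := BS_succ' p (m := k+3) (by omega)
    have e7 : BS p (k+3) = (1-p) * AS p (k+2) := BS_succ' p (m := k+2) (by omega)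
    have hjj : jj p (k+2+1) = p * jj p (k+2) + p*(1-p) * jj p (k+1) := rfl
    rw [hjj, ← ih1, ← ih2, e1, e2, e3, e4, e5, e6, e7]
    ring

end R172

namespace R172

lemma TS_eq (p : ℝ) {n : ℕ} (hn : 2 ≤ n) : TS p n = p * (1-p) * AS p (n+1) := by
  unfold TS AS
  rw [show n + 1 - 1 = n from rfl]
  rw [sum_snoc, sum_snoc, Finset.mul_sum]
  apply Finset.sum_congr rfl
  intro u _
  have E0 : ∀ a b : Bool, ext (Fin.snoc (Fin.snoc u a) b) n = ext u n := by
    intro a b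
    rw [ext_snoc, if_neg (by omega), ext_snoc, if_neg (by omega)]
  have E1 : ∀ a b : Bool, ext (Fin.snoc (Fin.snoc u a) b) (n+1) = a := by
    intro a b
    rw [ext_snoc, if_neg (by omega), ext_snoc, if_pos rfl]
  have E2 : ∀ a b : Bool, ext (Fin.snoc (Fin.snoc u a) b) (n+2) = b := by
    intro a b
    rw [ext_snoc, if_pos rfl]
  have E3 : ∀ a : Bool, ext (Fin.snoc u a) (n+2-1) = a := by
    intro a
    rw [show n+2-1 = n+1 from rfl, ext_snoc, if_pos rfl]
  have E4 : ext u (n+1-1) = ext u n := by rw [show n+1-1 = n from rfl]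
  simp only [QnoZZ_snoc (show (2:ℕ) ≤ n+2 by omega), QnoZZ_snoc (show (2:ℕ) ≤ n+1 by omega),
    QC_snoc (show (3:ℕ) ≤ n+2 by omega), QC_snoc (show (3:ℕ) ≤ n+1 by omega),
    QT, E0, E1, E2, E3, E4, Wt_snoc]
  by_cases h1 : QnoZZ u <;> by_cases h2 : QC u <;> cases h3 : ext u n <;>
    simp [h1, h2, h3, w] <;> ring

lemma QnoZZ_four (v : Fin 4 → Bool) :
    QnoZZ v ↔ ((ext v 1 = true ∨ ext v 2 = true) ∧ (ext v 2 = true ∨ ext v 3 = true)) := by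
  constructor
  · intro h
    exact ⟨h 1 (by omega) (by omega) (by omega), h 2 (by omega) (by omega) (by omega)⟩
  · rintro ⟨h1, h2⟩ k hk hk1 hk2
    have : k = 1 ∨ k = 2 := by omega
    rcases this with h | h <;> subst h
    · exact h1
    · exact h2

lemma TS_one (p : ℝ) : TS p 1 = p * (1-p) * AS p 2 := by
  rw [AS_two]
  unfold TS QT
  rw [sum_snoc, sum_snoc, sum_snoc, sum_snoc, Fintype.sum_unique]
  simp only [QnoZZ_four, QC, QT, ext_snoc, Wt_snoc, Wt_zero]
  norm_num [ext, w]
  ring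

lemma TS_all (p : ℝ) {n : ℕ} (hn : 1 ≤ n) : TS p n = p * (1-p) * AS p (n+1) := by
  rcases Nat.lt_or_ge n 2 with h | h
  · have : n = 1 := by omega
    subst this
    exact TS_one p
  · exact TS_eq p h

def Qn (n : ℕ) (v : Fin (n+3) → Bool) : Prop :=
  QG v ∨ (QnoZZ v ∧ ¬ QT n v ∧ QC v)

instance {n : ℕ} (v : Fin (n+3) → Bool) : Decidable (Qn n v) := by
  unfold Qn; infer_instance

noncomputable def SQf (p : ℝ) (n : ℕ) : ℝ :=
  ∑ v : Fin (n+3) → Bool, (if Qn n v then Wt p v else 0)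

lemma SQf_eq (p : ℝ) (n : ℕ) :
    SQf p n = GS p (n+3) + (AS p (n+3) + BS p (n+3) - TS p n) := by
  unfold SQf GS AS BS TS
  rw [← Finset.sum_add_distrib, ← Finset.sum_sub_distrib, ← Finset.sum_add_distrib]
  apply Finset.sum_congr rfl
  intro v _
  have hGC : QG v → ¬ QC v := by
    rintro ⟨h0, h1, h2⟩ (hc | ⟨hc2, hc0⟩) <;> simp_all
  have hTE : QT n v → ext v (n+2) = false := fun h => h.2.2
  have hE : ext v (n+3-1) = ext v (n+2) := by rw [show n+3-1 = n+2 from rfl]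
  rw [hE]
  unfold Qn
  by_cases hA : QG v <;> by_cases hN : QnoZZ v <;> by_cases hC : QC v <;>
    by_cases hT : QT n v <;> cases hEx : ext v (n+2) <;>
      simp_all <;> ring

end R172

namespace R172

lemma jj_closed (p l1 l2 a1 a2 : ℝ) (hp0 : 0 < p) (hp1 : p ≤ 1)
    (hl1 : l1 = p / 2 + Real.sqrt (p * (4 - 3 * p)) / 2)
    (hl2 : l2 = p / 2 - Real.sqrt (p * (4 - 3 * p)) / 2)
    (ha1 : a1 = (p / 2 - 1) * Real.sqrt (p * (4 - 3 * p)) + (p ^ 2 / 2 - 1))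
    (ha2 : a2 = (p / 2 - 1) * Real.sqrt (p * (4 - 3 * p)) - (p ^ 2 / 2 - 1)) :
    ∀ m : ℕ, jj p (m+1) = p^2/(l2 - l1) * (a1 * l1^m + a2 * l2^m) := by
  set s := Real.sqrt (p * (4 - 3 * p)) with hs
  have hprodpos : 0 < p * (4 - 3 * p) := by nlinarith
  have hspos : 0 < s := Real.sqrt_pos.2 hprodpos
  have hsq : s^2 = p * (4 - 3 * p) := Real.sq_sqrt (le_of_lt hprodpos)
  have hd : l2 - l1 = -s := by rw [hl1, hl2]; ring
  have hsne : s ≠ 0 := ne_of_gt hspos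
  have hq1 : l1^2 = p*l1 + p*(1-p) := by rw [hl1]; linear_combination hsq/4
  have hq2 : l2^2 = p*l2 + p*(1-p) := by rw [hl2]; linear_combination hsq/4
  intro m
  induction m using Nat.twoStepInduction with
  | zero =>
    have h12 : a1 + a2 = (p - 2) * s := by rw [ha1, ha2]; ring
    show p^2*(2-p) = _
    rw [pow_zero, pow_zero, hd, mul_one, mul_one, h12, div_mul_eq_mul_div,
      eq_div_iff (neg_ne_zero.2 hsne)]
    ring
  | one =>
    have hc : a1 * l1 + a2 * l2 = (p^2 - p - 1) * s := by rw [ha1, ha2, hl1, hl2]; ring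
    show p * (p^2*(2-p)) + p*(1-p) * p = _
    rw [pow_one, pow_one, hd, hc, div_mul_eq_mul_div, eq_div_iff (neg_ne_zero.2 hsne)]
    ring
  | more m ih1 ih2 =>
    show p * jj p (m+1+1) + p*(1-p) * jj p (m+1) = _
    rw [ih1, ih2]
    linear_combination (-(p^2) * (l2-l1)⁻¹ * a1 * l1^m) * hq1 +
      (-(p^2) * (l2-l1)⁻¹ * a2 * l2^m) * hq2

end R172


namespace R172

lemma bridge (n : ℕ) (hn : 1 ≤ n) (x : ℤ → Bool) :
    (Gx x ∨ Hx x n) ↔ Qn n (fun i : Fin (n+3) => x (-2 + (i:ℤ))) := by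
  set v : Fin (n+3) → Bool := fun i => x (-2 + (i:ℤ)) with hv
  have hext : ∀ k : ℕ, k < n+3 → ext v k = x (-2 + (k:ℤ)) := by
    intro k hk
    unfold ext
    rw [dif_pos hk, hv]
  have hG : QG v ↔ Gx x := by
    unfold QG Gx
    rw [hext 0 (by omega), hext 1 (by omega), hext 2 (by omega)]
    norm_num
  have hC : QC v ↔ Cx x := by
    unfold QC Cx
    rw [hext 0 (by omega), hext 1 (by omega), hext 2 (by omega)]
    norm_num
  have hT : QT n v ↔ Tl x n := by
    unfold QT Tl
    rw [hext n (by omega), hext (n+1) (by omega), hext (n+2) (by omega),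
      show (-2 + (n:ℤ)) = (n:ℤ)-2 by ring,
      show (-2 + ((n+1:ℕ):ℤ)) = (n:ℤ)-1 by push_cast; ring,
      show (-2 + ((n+2:ℕ):ℤ)) = (n:ℤ) by push_cast; ring]
  have hN : QnoZZ v ↔ NoZZ x n := by
    constructor
    · intro h j hj0 hjn
      obtain ⟨k, hkj⟩ : ∃ k : ℕ, (k:ℤ) = j + 1 := ⟨(j+1).toNat, by omega⟩
      have := h k (by omega) (by omega) (by omega)
      rw [hext k (by omega), hext (k+1) (by omega)] at this
      unfold PairOk
      rw [show j - 1 = -2 + (k:ℤ) by omega, show j = -2 + ((k+1:ℕ):ℤ) by push_cast; omega]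
      exact this
    · intro h k hk h1k hk1
      rw [hext k (by omega), hext (k+1) (by omega)]
      have := h ((k:ℤ) - 1) (by omega) (by omega)
      unfold PairOk at this
      rw [show (k:ℤ)-1-1 = -2 + (k:ℤ) by ring] at this
      rw [show (k:ℤ)-1 = -2 + ((k+1:ℕ):ℤ) by push_cast; ring] at this
      exact this
  unfold Qn Hx
  rw [hG, hC, hT, hN]

end R172

/-- exact formula for `P_n(0)` for ECA rule 172 started from the
Bernoulli measure `μ_p`, `0 < p ≤ 1`. -/
theorem rule172_prob_zero_general_p
    (p : ℝ) (hp0 : 0 < p) (hp1 : p ≤ 1)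
    (l1 l2 a1 a2 : ℝ)
    (hl1 : l1 = p / 2 + Real.sqrt (p * (4 - 3 * p)) / 2)
    (hl2 : l2 = p / 2 - Real.sqrt (p * (4 - 3 * p)) / 2)
    (ha1 : a1 = (p / 2 - 1) * Real.sqrt (p * (4 - 3 * p)) + (p ^ 2 / 2 - 1))
    (ha2 : a2 = (p / 2 - 1) * Real.sqrt (p * (4 - 3 * p)) - (p ^ 2 / 2 - 1))
    (μ : Measure (ℤ → Bool)) (hprob : IsProbabilityMeasure μ) (hber : IsBernoulli p μ) :
    ∀ n : ℕ, 1 ≤ n →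
      (μ ((eca rule172)^[n] ⁻¹' cylinder [false])).toReal =
        1 - (1 - p) ^ 2 * p -
          p ^ 2 / (l2 - l1) * (a1 * l1 ^ (n - 1) + a2 * l2 ^ (n - 1)) := by
  intro n hn
  classical
  have hsetEq : (eca rule172)^[n] ⁻¹' _root_.cylinder [false]
      = {x : ℤ → Bool | ¬ R172.Qn n (fun i : Fin (n+3) => x (-2 + (i:ℤ)))} := by
    ext x
    simp only [Set.mem_preimage, Set.mem_setOf_eq]
    have h1 : ((eca rule172)^[n] x ∈ _root_.cylinder [false]) ↔ ((eca rule172)^[n] x) 0 = false := by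
      unfold _root_.cylinder
      simp only [Set.mem_setOf_eq]
      constructor
      · intro h
        have := h ⟨0, by norm_num⟩
        simpa using this
      · intro h j
        have h0 : ((j : ℕ) : ℤ) = 0 := by
          have := j.isLt
          simp only [List.length_singleton] at this
          omega
        have hg : [false].get j = false := by
          rcases j with ⟨jv, hjv⟩
          simp only [List.length_singleton] at hjv
          interval_cases jv
          rfl
        rw [h0, hg]
        exact h
    rw [h1, ← Bool.not_eq_true, R172.main n hn x, R172.bridge n hn x]
  rw [hsetEq]
  rw [R172.cylMeasure hber (n+3) (-2) (fun v => ¬ R172.Qn n v)]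
  have hWnn : ∀ v : Fin (n+3) → Bool, 0 ≤ R172.Wt p v := by
    intro v
    apply Finset.prod_nonneg
    intro i _
    unfold R172.w
    split <;> linarith
  have hterm : ∀ v : Fin (n+3) → Bool,
      (∏ i : Fin (n+3), if v i then ENNReal.ofReal p else ENNReal.ofReal (1-p))
        = ENNReal.ofReal (R172.Wt p v) := by
    intro v
    unfold R172.Wt
    rw [ENNReal.ofReal_prod_of_nonneg (fun i _ => by unfold R172.w; split <;> linarith)]
    apply Finset.prod_congr rfl
    intro i _
    unfold R172.w
    cases v i <;> simp
  rw [Finset.sum_congr rfl (fun v _ => hterm v),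
    ← ENNReal.ofReal_sum_of_nonneg (fun v _ => hWnn v),
    ENNReal.toReal_ofReal (Finset.sum_nonneg (fun v _ => hWnn v)),
    Finset.sum_filter]
  have hsplit : (∑ v : Fin (n+3) → Bool, if ¬ R172.Qn n v then R172.Wt p v else 0)
      = R172.ZS p (n+3) - R172.SQf p n := by
    unfold R172.ZS R172.SQf
    rw [← Finset.sum_sub_distrib]
    apply Finset.sum_congr rfl
    intro v _
    by_cases h : R172.Qn n v <;> simp [h]
  rw [hsplit, R172.ZS_one]
  have hkey : R172.AS p (n+3) + R172.BS p (n+3) - p*(1-p)*(R172.AS p (n+1))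
      = p^2/(l2-l1) * (a1 * l1^(n-1) + a2 * l2^(n-1)) := by
    obtain ⟨k, rfl⟩ : ∃ k, n = k + 1 := ⟨n-1, by omega⟩
    rw [show k+1+3 = k+4 by omega, show k+1+1 = k+2 by omega, R172.key p k,
      R172.jj_closed p l1 l2 a1 a2 hp0 hp1 hl1 hl2 ha1 ha2 k,
      show k+1-1 = k from rfl]
  have hSQ : R172.SQf p n
      = (1-p)^2*p + p^2/(l2-l1) * (a1 * l1^(n-1) + a2 * l2^(n-1)) := by
    rw [R172.SQf_eq, R172.GS_eq p (show 3 ≤ n+3 by omega), R172.TS_all p hn, hkey]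
    ring
  rw [hSQ]
  ring
end
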